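/- arXiv:1806.02506 — 11 statements merged into one kernel-verified Lean document; each statement's English description precedes it below -/
import Mathlib

section
/- In ℤ⟦q⟧ one has the identity F(q) − F(−q) = 8 q ∏_{k≥1} (1 + q^{4k})⁴ (1 + q^{2k})⁴, the infinite product converging coefficientwise. -/
/-!
Write `P = ∏ (1 + q^{2m-1})`, `M = P(-q) = ∏ (1 - q^{2m-1})`, `E = ∏ (1 + q^{2k})`,
`A = ∏ (1 + q^{4k})` and `φ_e = ∏ (1 - q^{ek})`, so that `F = P² / M²`.

The Jacobi triple product gives `P² φ₂ = θ := ∑ q^{n²}` and `2 A² φ₄ = ψ := ∑ q^{2n(n+1)}`.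
Its finite form, a sum of Gaussian binomials `[2N, N+j]_{q²}`, is proved by induction on `N`
from the two Pascal rules; since `[2N, N+j] = (q;q)_{2N} / ((q;q)_{N+j} (q;q)_{N-j})`, these
coefficients tend to `1/φ` as `N → ∞`.

The map `(u, v) ↦ (u+v+1, u-v)` is a bijection from the solutions of
`2u(u+1) + 2v(v+1) = n - 1` to those of `a² + b² = n` when `n` is odd. This gives
`θ(q)² - θ(-q)² = 2qψ²`. Using Euler's `P E M = 1` and `E φ₂ = φ₄` this becomes
`P⁴ - M⁴ = 8q A⁴ E²`, so `F(q) - F(-q) = (P⁴ - M⁴) / (PM)² = 8q A⁴ E⁴`.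
-/

open PowerSeries

namespace Stmt4

/-- Coefficientwise convergence of an infinite product of formal power series over ℤ. -/
def CoeffwiseProd (f : ℕ → PowerSeries ℤ) (g : PowerSeries ℤ) : Prop :=
  ∀ n : ℕ, ∀ᶠ N in Filter.atTop,
    PowerSeries.coeff (R := ℤ) n (∏ k ∈ Finset.range N, f k) = PowerSeries.coeff (R := ℤ) n g

/-- The factor `(1+q^{2m-1})² (1-q^{2m-1})^{-2}` (indexed by `m ≥ 1`, here `m+1`). -/
noncomputable def Ffactor (m : ℕ) : PowerSeries ℤ :=
  (1 + X ^ (2 * m + 1)) ^ 2 * Ring.inverse ((1 - X ^ (2 * m + 1)) ^ 2)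

open Finset Filter Topology
open scoped PowerSeries.WithPiTopology

section GaussBinom

variable {R : Type*} [CommRing R] (q : R)

/-- The Gaussian binomial `[a, k]_q`. The lower index is an integer, so the coefficient
vanishes for `k < 0` and `k > a` and the Pascal rules need no side conditions. -/
def gaussBinom : ℕ → ℤ → R
  | 0, k => if k = 0 then 1 else 0
  | a + 1, k => gaussBinom a (k - 1) + q ^ k.toNat * gaussBinom a k

/-- `(q; q)_n`. -/
def qPochhammer (n : ℕ) : R := ∏ i ∈ range n, (1 - q ^ (i + 1))

theorem qPochhammer_succ (n : ℕ) :
    qPochhammer q (n + 1) = qPochhammer q n * (1 - q ^ (n + 1)) :=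
  prod_range_succ _ _

theorem gaussBinom_succ (a : ℕ) (k : ℤ) :
    gaussBinom q (a + 1) k = gaussBinom q a (k - 1) + q ^ k.toNat * gaussBinom q a k := rfl

theorem gaussBinom_of_neg {k : ℤ} (hk : k < 0) (a : ℕ) : gaussBinom q a k = 0 := by
  induction a generalizing k with
  | zero => simp [gaussBinom, hk.ne]
  | succ a ih => rw [gaussBinom_succ, ih (by omega), ih hk, mul_zero, add_zero]

theorem gaussBinom_of_lt {a : ℕ} {k : ℤ} (hk : a < k) : gaussBinom q a k = 0 := by
  induction a generalizing k with
  | zero => simp [gaussBinom, (show k ≠ 0 by omega)]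
  | succ a ih => rw [gaussBinom_succ, ih (by omega), ih (by omega), mul_zero, add_zero]

@[simp]
theorem gaussBinom_zero_right (a : ℕ) : gaussBinom q a 0 = 1 := by
  induction a with
  | zero => rfl
  | succ a ih => rw [gaussBinom_succ, gaussBinom_of_neg q (by norm_num), ih]; simp

theorem gaussBinom_mul_eq_mul {a : ℕ} {k : ℤ} {x y : R} (h : 0 ≤ k → k ≤ a → x = y) :
    gaussBinom q a k * x = gaussBinom q a k * y := by
  by_cases hk : 0 ≤ k ∧ k ≤ a
  · rw [h hk.1 hk.2]
  · rcases not_and_or.1 hk with hk | hk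
    · rw [gaussBinom_of_neg q (by omega), zero_mul, zero_mul]
    · rw [gaussBinom_of_lt q (by omega), zero_mul, zero_mul]

theorem gaussBinom_succ_succ (a k : ℕ) :
    gaussBinom q (a + 1) (k + 1 : ℕ) =
      gaussBinom q a k + q ^ (k + 1) * gaussBinom q a (k + 1 : ℕ) := by
  rw [gaussBinom_succ]
  push_cast
  rw [add_sub_cancel_right, show ((k : ℤ) + 1).toNat = k + 1 by omega]

theorem one_sub_pow_mul_gaussBinom (a k : ℕ) :
    (1 - q ^ (k + 1)) * gaussBinom q a (k + 1 : ℕ) = (1 - q ^ (a - k)) * gaussBinom q a k := by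
  induction a generalizing k with
  | zero => rw [Nat.zero_sub, pow_zero, sub_self, zero_mul, gaussBinom, if_neg (by omega), mul_zero]
  | succ a ih =>
    rw [gaussBinom_succ_succ]
    rcases k with _ | j
    · have h := ih 0
      simp only [Nat.cast_zero, gaussBinom_zero_right, zero_add, Nat.sub_zero, pow_one] at h ⊢
      linear_combination q * h
    · rw [gaussBinom_succ_succ]
      have ih₁ := ih (j + 1)
      have ih₀ := ih j
      rcases Nat.lt_or_ge j a with hj | hj
      · obtain ⟨r, rfl⟩ := Nat.exists_eq_add_of_lt hj
        simp only [show j + r + 1 - (j + 1) = r by omega, show j + r + 1 - j = r + 1 by omega,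
          show j + r + 1 + 1 - (j + 1) = r + 1 by omega] at ih₁ ih₀ ⊢
        linear_combination q ^ (j + 1 + 1) * ih₁ + ih₀
      · rw [gaussBinom_of_lt q (by omega : (a : ℤ) < (j + 1 : ℕ)),
          gaussBinom_of_lt q (by omega : (a : ℤ) < (j + 1 + 1 : ℕ)),
          show a + 1 - (j + 1) = 0 by omega]
        ring

theorem gaussBinom_succ' (a : ℕ) (k : ℤ) :
    gaussBinom q (a + 1) k = gaussBinom q a k + q ^ (a + 1 - k).toNat * gaussBinom q a (k - 1) := by
  rcases lt_trichotomy k 0 with hk | rfl | hk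
  · simp [gaussBinom_of_neg q hk, gaussBinom_of_neg q (by omega : k - 1 < 0)]
  · simp [gaussBinom_of_neg q (by norm_num : (-1 : ℤ) < 0)]
  · obtain ⟨j, rfl⟩ : ∃ j : ℕ, k = (j + 1 : ℕ) := ⟨(k - 1).toNat, by omega⟩
    rw [gaussBinom_succ_succ, show ((a : ℤ) + 1 - (j + 1 : ℕ)).toNat = a - j by omega,
      show ((j + 1 : ℕ) : ℤ) - 1 = j by push_cast; ring]
    linear_combination -one_sub_pow_mul_gaussBinom q a j

theorem gaussBinom_add_two (a : ℕ) (k : ℤ) :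
    gaussBinom q (a + 2) k = (1 + q ^ (a + 1)) * gaussBinom q a (k - 1)
      + q ^ k.toNat * gaussBinom q a k + q ^ (a + 2 - k).toNat * gaussBinom q a (k - 2) := by
  have hmid : gaussBinom q a (k - 1) * (q ^ (a + 2 - k).toNat * q ^ (k - 1).toNat) =
      gaussBinom q a (k - 1) * q ^ (a + 1) :=
    gaussBinom_mul_eq_mul q fun h₀ h₁ => by rw [← pow_add]; congr 1; omega
  rw [show a + 2 = (a + 1) + 1 from rfl, gaussBinom_succ', gaussBinom_succ, gaussBinom_succ,
    sub_sub, show (1 : ℤ) + 1 = 2 by norm_num,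
    show ((a + 1 : ℕ) : ℤ) + 1 - k = a + 2 - k by push_cast; ring]
  linear_combination hmid

theorem gaussBinom_mul_qPochhammer {a k : ℕ} (hk : k ≤ a) :
    gaussBinom q a k * qPochhammer q k * qPochhammer q (a - k) = qPochhammer q a := by
  induction a generalizing k with
  | zero => obtain rfl := Nat.le_zero.1 hk; simp [gaussBinom, qPochhammer]
  | succ a ih =>
    rcases k with _ | j
    · simp [qPochhammer]
    · rw [gaussBinom_succ_succ, show a + 1 - (j + 1) = a - j by omega, qPochhammer_succ,
        qPochhammer_succ q a]
      have h₀ := ih (Nat.le_of_succ_le_succ hk)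
      rcases Nat.lt_or_ge j a with hj | hj
      · obtain ⟨r, rfl⟩ := Nat.exists_eq_add_of_lt hj
        have h₁ := ih (k := j + 1) (by omega)
        rw [show j + r + 1 - j = r + 1 by omega, qPochhammer_succ] at h₀ ⊢
        rw [show j + r + 1 - (j + 1) = r by omega, qPochhammer_succ] at h₁
        linear_combination (1 - q ^ (j + 1)) * h₀ + q ^ (j + 1) * (1 - q ^ (r + 1)) * h₁
      · obtain rfl : j = a := by omega
        rw [gaussBinom_of_lt q (by omega : (j : ℤ) < (j + 1 : ℕ))]
        linear_combination (1 - q ^ (j + 1)) * h₀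

end GaussBinom

section FiniteJacobiTriple

variable {R : Type*} [CommRing R]

theorem sum_Icc_add_of_support {M : Type*} [AddCommMonoid M] {f : ℤ → M} {a b c d s : ℤ}
    (hf : ∀ j ∉ Icc a b, f j = 0) (hc : c + s ≤ a) (hd : b ≤ d + s) :
    ∑ j ∈ Icc c d, f (j + s) = ∑ j ∈ Icc a b, f j := by
  have hmap : ∑ j ∈ Icc c d, f (j + s) = ∑ j ∈ Icc (c + s) (d + s), f j := by
    rw [← map_add_right_Icc, sum_map]
    rfl
  rw [hmap]
  exact (sum_subset (Icc_subset_Icc hc hd) fun j _ hj => hf j hj).symm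

def jacobiTerm (q z : R) (N : ℕ) (j : ℤ) : R :=
  gaussBinom (q ^ 2) (2 * N) (N + j) * z ^ (N + j).toNat * q ^ j.natAbs ^ 2

theorem jacobiTerm_eq_zero (q z : R) {N : ℕ} {j : ℤ} (hj : j ∉ Icc (-(N : ℤ)) N) :
    jacobiTerm q z N j = 0 := by
  rw [jacobiTerm, mul_assoc, ← mul_zero (gaussBinom (q ^ 2) (2 * N) (N + j))]
  exact gaussBinom_mul_eq_mul _ fun h₀ h₁ =>
    absurd (mem_Icc.2 ⟨by omega, by push_cast at h₁; omega⟩) hj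

theorem jacobiTerm_succ (q z : R) (N : ℕ) (j : ℤ) :
    jacobiTerm q z (N + 1) j = z * (1 + q ^ (4 * N + 2)) * jacobiTerm q z N j +
      q ^ (2 * N + 1) * jacobiTerm q z N (j + 1) +
      z ^ 2 * q ^ (2 * N + 1) * jacobiTerm q z N (j - 1) := by
  have hsq : ∀ i : ℤ, ((i.natAbs ^ 2 : ℕ) : ℤ) = i ^ 2 := fun i => by
    push_cast [Int.natCast_natAbs, sq_abs]; rfl
  simp only [jacobiTerm]
  rw [show 2 * (N + 1) = 2 * N + 2 by ring, gaussBinom_add_two,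
    show ((N + 1 : ℕ) : ℤ) + j - 1 = N + j by push_cast; ring,
    show ((N + 1 : ℕ) : ℤ) + j - 2 = N + (j - 1) by push_cast; ring,
    show ((N + 1 : ℕ) : ℤ) + j = N + (j + 1) by push_cast; ring]
  have e₁ : gaussBinom (q ^ 2) (2 * N) (N + j) * z ^ (N + (j + 1)).toNat =
      gaussBinom (q ^ 2) (2 * N) (N + j) * (z * z ^ (N + j).toNat) :=
    gaussBinom_mul_eq_mul _ fun h₀ _ => by
      rw [show (N + (j + 1)).toNat = (N + j).toNat + 1 by omega, pow_succ, mul_comm]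
  have e₂ : gaussBinom (q ^ 2) (2 * N) (N + (j + 1)) *
      ((q ^ 2) ^ (N + (j + 1)).toNat * q ^ j.natAbs ^ 2) =
      gaussBinom (q ^ 2) (2 * N) (N + (j + 1)) * (q ^ (2 * N + 1) * q ^ (j + 1).natAbs ^ 2) :=
    gaussBinom_mul_eq_mul _ fun h₀ _ => by
      rw [← pow_mul, ← pow_add, ← pow_add]
      congr 1
      zify [hsq j, hsq (j + 1)]
      rw [Int.toNat_of_nonneg h₀]
      ring
  have e₃ : gaussBinom (q ^ 2) (2 * N) (N + (j - 1)) * ((q ^ 2) ^ ((2 * N : ℕ) + 2 -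
      (N + (j + 1))).toNat * z ^ (N + (j + 1)).toNat * q ^ j.natAbs ^ 2) =
      gaussBinom (q ^ 2) (2 * N) (N + (j - 1)) *
      (z ^ 2 * q ^ (2 * N + 1) * z ^ (N + (j - 1)).toNat * q ^ (j - 1).natAbs ^ 2) :=
    gaussBinom_mul_eq_mul _ fun h₀ h₁ => by
      rw [show (N + (j + 1)).toNat = (N + (j - 1)).toNat + 2 by omega, ← pow_mul]
      have hexp : 2 * (((2 * N : ℕ) : ℤ) + 2 - (N + (j + 1))).toNat + j.natAbs ^ 2 =
          2 * N + 1 + (j - 1).natAbs ^ 2 := by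
        zify [hsq j, hsq (j - 1)]
        rw [Int.toNat_of_nonneg (by push_cast at h₁ ⊢; omega)]
        ring
      rw [pow_add z, mul_comm (q ^ _), mul_assoc, mul_assoc, ← pow_add, hexp]
      ring
  linear_combination (1 + q ^ (4 * N + 2)) * q ^ j.natAbs ^ 2 * e₁ +
    z ^ (N + (j + 1)).toNat * e₂ + e₃

theorem finite_jacobi_triple_product (q z : R) (N : ℕ) :
    ∏ m ∈ range N, (z + q ^ (2 * m + 1)) * (1 + z * q ^ (2 * m + 1)) =
      ∑ j ∈ Icc (-(N : ℤ)) N, jacobiTerm q z N j := by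
  induction N with
  | zero => simp [jacobiTerm, gaussBinom]
  | succ N ih =>
    have hshift : ∀ s : ℤ, -1 ≤ s → s ≤ 1 → ∑ j ∈ Icc (-((N + 1 : ℕ) : ℤ)) (N + 1 : ℕ),
        jacobiTerm q z N (j + s) = ∑ j ∈ Icc (-(N : ℤ)) N, jacobiTerm q z N j :=
      fun s hs hs' => sum_Icc_add_of_support (fun _ => jacobiTerm_eq_zero q z)
        (by push_cast; omega) (by push_cast; omega)
    have h₀ := hshift 0 (by norm_num) (by norm_num)
    simp only [add_zero] at h₀
    simp only [sub_eq_add_neg, jacobiTerm_succ]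
    rw [prod_range_succ, ih, sum_add_distrib, sum_add_distrib, ← mul_sum, ← mul_sum, ← mul_sum,
      h₀, hshift 1 (by norm_num) le_rfl, hshift (-1) le_rfl (by norm_num)]
    ring

theorem finite_jacobi_triple_product_one (q : R) (N : ℕ) :
    ∏ m ∈ range N, (1 + q ^ (2 * m + 1)) ^ 2 =
      ∑ j ∈ Icc (-(N : ℤ)) N, gaussBinom (q ^ 2) (2 * N) (N + j) * q ^ j.natAbs ^ 2 := by
  simpa only [jacobiTerm, one_pow, mul_one, one_mul, ← sq] using
    finite_jacobi_triple_product q 1 N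

theorem mul_add_one_nonneg (j : ℤ) : 0 ≤ j * (j + 1) := by
  rcases le_or_gt 0 j with h | h <;> nlinarith

theorem finite_jacobi_triple_product_shifted [IsDomain R] {q : R} (hq : q ≠ 0) (N : ℕ) :
    ∏ m ∈ range N, (1 + q ^ (2 * m)) * (1 + q ^ (2 * m + 2)) =
      ∑ j ∈ Icc (-(N : ℤ)) N, gaussBinom (q ^ 2) (2 * N) (N + j) * q ^ (j * (j + 1)).natAbs := by
  have h := finite_jacobi_triple_product q q N
  rw [prod_congr rfl fun m _ => show (q + q ^ (2 * m + 1)) * (1 + q * q ^ (2 * m + 1)) =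
      q * ((1 + q ^ (2 * m)) * (1 + q ^ (2 * m + 2))) by ring, prod_mul_distrib, prod_const,
    card_range] at h
  rw [sum_congr rfl fun j hj => show jacobiTerm q q N j =
      q ^ N * (gaussBinom (q ^ 2) (2 * N) (N + j) * q ^ (j * (j + 1)).natAbs) by
    rw [mem_Icc] at hj
    have hexp : (N + j).toNat + j.natAbs ^ 2 = N + (j * (j + 1)).natAbs := by
      zify
      rw [Int.toNat_of_nonneg (by omega), sq_abs, abs_of_nonneg (mul_add_one_nonneg j)]
      ring
    rw [jacobiTerm, mul_assoc, ← pow_add, hexp, pow_add]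
    ring, ← mul_sum] at h
  exact mul_left_cancel₀ (pow_ne_zero N hq) h

end FiniteJacobiTriple

theorem tendsto_atTop_of_le_self {e : ℕ → ℕ} (he : ∀ i, i ≤ e i) : Tendsto e atTop atTop :=
  tendsto_atTop_mono he tendsto_id

theorem tendsto_mul_add_one_atTop {e : ℕ} (he : e ≠ 0) :
    Tendsto (fun i : ℕ => e * (i + 1)) atTop atTop :=
  tendsto_atTop_of_le_self fun i => (Nat.le_succ i).trans (Nat.le_mul_of_pos_left _
    (Nat.pos_of_ne_zero he))

theorem tendsto_natAbs_cofinite : Tendsto Int.natAbs cofinite atTop :=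
  tendsto_atTop.2 fun b => eventually_cofinite.2 <| (Set.finite_Icc (-(b : ℤ)) b).subset
    fun j hj => by simp only [not_le, Set.mem_ofPred_eq] at hj; simp only [Set.mem_Icc]; omega

theorem tendsto_mul_natAbs_sq_cofinite {d : ℕ} (hd : d ≠ 0) :
    Tendsto (fun j : ℤ => d * j.natAbs ^ 2) cofinite atTop :=
  tendsto_atTop_mono (fun _ => (Nat.le_self_pow two_ne_zero _).trans
    (Nat.le_mul_of_pos_left _ (Nat.pos_of_ne_zero hd))) tendsto_natAbs_cofinite

theorem tendsto_mul_natAbs_mul_add_one_cofinite {d : ℕ} (hd : d ≠ 0) :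
    Tendsto (fun j : ℤ => d * (j * (j + 1)).natAbs) cofinite atTop := by
  refine tendsto_atTop_mono' _ ?_ tendsto_natAbs_cofinite
  filter_upwards [eventually_cofinite_ne (-1)] with j hj
  rw [Int.natAbs_mul]
  exact (Nat.le_mul_of_pos_right _ (by omega)).trans
    (Nat.le_mul_of_pos_left _ (Nat.pos_of_ne_zero hd))

section PiTopology

variable {R : Type*} [CommRing R] [TopologicalSpace R]

theorem multipliable_one_add_of_le_order {f : ℕ → R⟦X⟧} {e : ℕ → ℕ}
    (he : Tendsto e atTop atTop) (hf : ∀ i, (e i : ℕ∞) ≤ (f i).order) :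
    Multipliable fun i => 1 + f i := by
  refine WithPiTopology.multipliable_one_add_of_tendsto_order_atTop_nhds_top R
    (ENat.tendsto_nhds_top_iff_natCast_lt.2 fun n => ?_)
  filter_upwards [he.eventually_gt_atTop n] with i hi
  exact lt_of_lt_of_le (by exact_mod_cast hi) (hf i)

theorem multipliable_one_add_X_pow {e : ℕ → ℕ} (he : Tendsto e atTop atTop) :
    Multipliable fun i => (1 + X ^ e i : R⟦X⟧) :=
  multipliable_one_add_of_le_order he fun _ =>
    nat_le_order _ _ fun k hk => by rw [coeff_X_pow, if_neg hk.ne]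

theorem multipliable_one_sub_X_pow {e : ℕ → ℕ} (he : Tendsto e atTop atTop) :
    Multipliable fun i => (1 - X ^ e i : R⟦X⟧) := by
  simp_rw [sub_eq_add_neg]
  exact multipliable_one_add_of_le_order he fun _ =>
    nat_le_order _ _ fun k hk => by rw [map_neg, coeff_X_pow, if_neg hk.ne, neg_zero]

theorem summable_X_pow {κ : Type*} {w : κ → ℕ} (hw : Tendsto w cofinite atTop) :
    Summable fun i => (X ^ w i : R⟦X⟧) := by
  refine (WithPiTopology.summable_iff_summable_coeff _).2 fun n =>
    summable_of_hasFiniteSupport <| (eventually_cofinite.1 (hw.eventually_gt_atTop n)).subset ?_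
  intro i hi
  simp only [Function.mem_support, coeff_X_pow, ne_eq, ite_eq_right_iff,
    Classical.not_imp] at hi
  simp [hi.1]

variable (R) in
/-- `φ(q^e) = (q^e; q^e)_∞`. -/
noncomputable def eulerPhi (e : ℕ) : R⟦X⟧ := ∏' i, (1 - X ^ (e * (i + 1)))

theorem multipliable_eulerPhi {e : ℕ} (he : e ≠ 0) :
    Multipliable fun i => (1 - X ^ (e * (i + 1)) : R⟦X⟧) :=
  multipliable_one_sub_X_pow (tendsto_mul_add_one_atTop he)

theorem tendsto_qPochhammer {e : ℕ} (he : e ≠ 0) :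
    Tendsto (qPochhammer (X ^ e : R⟦X⟧)) atTop (𝓝 (eulerPhi R e)) := by
  have h : qPochhammer (X ^ e : R⟦X⟧) = fun n => ∏ i ∈ range n, (1 - X ^ (e * (i + 1))) := by
    funext n
    simp only [qPochhammer, ← pow_mul]
  rw [h]
  exact (multipliable_eulerPhi he).tendsto_prod_tprod_nat

variable (R) in
/-- A junk `0` unless `w` tends to `∞` along `cofinite`. -/
noncomputable def theta (w : ℤ → ℕ) : R⟦X⟧ := ∑' j, X ^ w j

end PiTopology

section DiscreteCoefficients

variable {R : Type*} [CommRing R] [TopologicalSpace R] [DiscreteTopology R]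
  {ι : Type*} {l : Filter ι}

theorem tendsto_iff_eventually_coeff_eq {s : ι → R⟦X⟧} {f : R⟦X⟧} :
    Tendsto s l (𝓝 f) ↔ ∀ n, ∀ᶠ i in l, coeff n (s i) = coeff n f := by
  simp only [WithPiTopology.tendsto_iff_coeff_tendsto, nhds_discrete, tendsto_pure]

theorem eventually_coeff_eq_of_tendsto {s : ι → R⟦X⟧} {f : R⟦X⟧}
    (h : Tendsto s l (𝓝 f)) (n : ℕ) : ∀ᶠ i in l, ∀ k ≤ n, coeff k (s i) = coeff k f := by
  have := (eventually_all_finset (range (n + 1))).2 fun k _ =>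
    tendsto_iff_eventually_coeff_eq.1 h k
  filter_upwards [this] with i hi k hk using hi k (mem_range.2 (Nat.lt_succ_of_le hk))

/-- Over discrete coefficients the topology is `X`-adic, so the multipliers need not converge. -/
theorem tendsto_mul_of_tendsto_zero {a s : ι → R⟦X⟧} (hs : Tendsto s l (𝓝 0)) :
    Tendsto (fun i => a i * s i) l (𝓝 0) := by
  refine tendsto_iff_eventually_coeff_eq.2 fun n => ?_
  filter_upwards [eventually_coeff_eq_of_tendsto hs n] with i hi
  rw [coeff_mul, map_zero]
  refine sum_eq_zero fun p hp => ?_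
  rw [hi p.2 (by rw [HasAntidiagonal.mem_antidiagonal] at hp; omega), map_zero, mul_zero]

theorem tendsto_of_mul_eq {b x y : ι → R⟦X⟧} {x₀ y₀ w : R⟦X⟧}
    (hx : Tendsto x l (𝓝 x₀)) (hy : Tendsto y l (𝓝 y₀)) (hb : ∀ᶠ i in l, b i * x i = y i)
    (hw : w * x₀ = 1) : Tendsto b l (𝓝 (w * y₀)) := by
  have hx' : Tendsto (fun i => x₀ - x i) l (𝓝 0) := by
    simpa using (tendsto_const_nhds (x := x₀)).sub hx
  have hy' : Tendsto (fun i => y i - y₀) l (𝓝 0) := tendsto_sub_nhds_zero_iff.2 hy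
  have key := ((tendsto_mul_of_tendsto_zero (a := b) hx').add hy').const_mul w
  rw [add_zero, mul_zero] at key
  refine tendsto_sub_nhds_zero_iff.1 (key.congr' ?_)
  filter_upwards [hb] with i hi
  linear_combination b i * hw - w * hi

theorem constantCoeff_tprod {f : ℕ → R⟦X⟧} (hf : Multipliable f)
    (h : ∀ i, constantCoeff (f i) = 1) : constantCoeff (∏' i, f i) = 1 := by
  rw [hf.map_tprod constantCoeff (WithPiTopology.continuous_constantCoeff R)]
  simp [h]

theorem continuous_rescale (a : R) : Continuous (rescale a) := by
  refine continuous_iff_continuousAt.2 fun f => ?_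
  rw [ContinuousAt, WithPiTopology.tendsto_iff_coeff_tendsto]
  intro n
  simp_rw [coeff_rescale]
  exact ((WithPiTopology.continuous_coeff R n).tendsto f).const_mul _

theorem rescale_tprod {f : ℕ → R⟦X⟧} (hf : Multipliable f) (a : R) :
    rescale a (∏' i, f i) = ∏' i, rescale a (f i) :=
  hf.map_tprod (rescale a) (continuous_rescale a)

theorem tprod_one_add_mul_tprod_one_sub {e : ℕ → ℕ} (he : Tendsto e atTop atTop) :
    (∏' i, (1 + X ^ e i : R⟦X⟧)) * ∏' i, (1 - X ^ e i) = ∏' i, (1 - X ^ (2 * e i)) := by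
  rw [← (multipliable_one_add_X_pow he).tprod_mul (multipliable_one_sub_X_pow he)]
  congr 1
  funext i
  rw [mul_comm 2, pow_mul]
  ring

end DiscreteCoefficients

section EulerPhi

variable {R : Type*} [CommRing R] [TopologicalSpace R] [DiscreteTopology R]

theorem isUnit_eulerPhi {e : ℕ} (he : e ≠ 0) : IsUnit (eulerPhi R e) := by
  nontriviality R
  refine isUnit_iff_constantCoeff.2 ?_
  rw [eulerPhi, constantCoeff_tprod (multipliable_eulerPhi he) fun i => ?_]
  · exact isUnit_one
  · rw [map_sub, map_one, map_pow, constantCoeff_X, zero_pow (by positivity), sub_zero]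

theorem tendsto_gaussBinom {e : ℕ} (he : e ≠ 0) (j : ℤ) :
    Tendsto (fun N : ℕ => gaussBinom (X ^ e : R⟦X⟧) (2 * N) (N + j)) atTop
      (𝓝 (Ring.inverse (eulerPhi R e))) := by
  have hΦ := tendsto_qPochhammer (R := R) he
  have hshift : ∀ s : ℤ, Tendsto (fun N : ℕ => (N + s).toNat) atTop atTop := fun s =>
    tendsto_atTop_atTop.2 fun b => ⟨b + s.natAbs, fun N hN => by omega⟩
  have hclear : ∀ᶠ N : ℕ in atTop, gaussBinom (X ^ e : R⟦X⟧) (2 * N) (N + j) *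
      (qPochhammer (X ^ e) (N + j).toNat * qPochhammer (X ^ e) (N + -j).toNat) =
        qPochhammer (X ^ e) (2 * N) := by
    filter_upwards [eventually_ge_atTop j.natAbs] with N hN
    have h := gaussBinom_mul_qPochhammer (X ^ e : R⟦X⟧) (a := 2 * N) (k := (N + j).toNat)
      (by omega)
    rwa [Int.toNat_of_nonneg (by omega), show 2 * N - (N + j).toNat = (N + -j).toNat by omega,
      mul_assoc] at h
  have hinv : Ring.inverse (eulerPhi R e) ^ 2 * (eulerPhi R e * eulerPhi R e) = 1 := by
    rw [sq, mul_mul_mul_comm, Ring.inverse_mul_cancel _ (isUnit_eulerPhi he), one_mul]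
  have := tendsto_of_mul_eq ((hΦ.comp (hshift j)).mul (hΦ.comp (hshift (-j))))
    (hΦ.comp (tendsto_id.const_mul_atTop' two_pos)) hclear hinv
  rwa [sq, mul_assoc, Ring.inverse_mul_cancel _ (isUnit_eulerPhi he), mul_one] at this

end EulerPhi

section Theta

variable {R : Type*} [CommRing R] [TopologicalSpace R] [DiscreteTopology R]

theorem tendsto_sum_Icc_mul_X_pow {w : ℤ → ℕ} (hw : Tendsto w cofinite atTop)
    {b : ℕ → ℤ → R⟦X⟧} {c : R⟦X⟧} (hb : ∀ j, Tendsto (fun N => b N j) atTop (𝓝 c)) :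
    Tendsto (fun N : ℕ => ∑ j ∈ Icc (-(N : ℤ)) N, b N j * X ^ w j) atTop
      (𝓝 (c * theta R w)) := by
  have hθ : Tendsto (fun N : ℕ => c * ∑ j ∈ Icc (-(N : ℤ)) N, X ^ w j) atTop
      (𝓝 (c * theta R w)) :=
    (((summable_X_pow hw).hasSum).comp tendsto_Icc_neg).const_mul c
  suffices h : Tendsto (fun N : ℕ => ∑ j ∈ Icc (-(N : ℤ)) N, (b N j - c) * X ^ w j) atTop
      (𝓝 0) by
    simpa only [zero_add, mul_sum, ← sum_add_distrib, sub_mul, sub_add_cancel] using h.add hθ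
  refine tendsto_iff_eventually_coeff_eq.2 fun n => ?_
  have hS := eventually_cofinite.1 (hw.eventually_gt_atTop n)
  filter_upwards [(eventually_all_finset hS.toFinset).2 fun j _ =>
    eventually_coeff_eq_of_tendsto (hb j) n] with N hN
  rw [map_sum, map_zero]
  refine sum_eq_zero fun j _ => ?_
  rw [coeff_mul_X_pow']
  split_ifs with h
  · rw [map_sub, hN j (by simpa using h) _ (Nat.sub_le _ _), sub_self]
  · rfl

theorem jacobi_triple_product {d : ℕ} (hd : d ≠ 0) :
    (∏' m, (1 + X ^ (d * (2 * m + 1)) : R⟦X⟧)) ^ 2 * eulerPhi R (2 * d) =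
      theta R (fun j => d * j.natAbs ^ 2) := by
  have hP := ((multipliable_one_add_X_pow (R := R) (e := fun m => d * (2 * m + 1))
    (tendsto_atTop_of_le_self fun m => (by omega : m ≤ 2 * m + 1).trans
      (Nat.le_mul_of_pos_left _ (Nat.pos_of_ne_zero hd)))).tendsto_prod_tprod_nat).pow 2
  have hS := tendsto_sum_Icc_mul_X_pow (tendsto_mul_natAbs_sq_cofinite hd) fun j =>
    tendsto_gaussBinom (R := R) (e := 2 * d) (by omega) j
  have hfin : ∀ N : ℕ, (∏ m ∈ range N, (1 + X ^ (d * (2 * m + 1)) : R⟦X⟧)) ^ 2 =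
      ∑ j ∈ Icc (-(N : ℤ)) N, gaussBinom (X ^ (2 * d)) (2 * N) (N + j) *
        X ^ (d * j.natAbs ^ 2) := by
    intro N
    have h := finite_jacobi_triple_product_one (X ^ d : R⟦X⟧) N
    simp only [← pow_mul] at h
    rw [← prod_pow, h, mul_comm d 2]
  have hΦ : IsUnit (eulerPhi R (2 * d)) := isUnit_eulerPhi (by omega)
  rw [tendsto_nhds_unique (hP.congr hfin) hS, mul_right_comm, Ring.inverse_mul_cancel _ hΦ,
    one_mul]

theorem jacobi_triple_product_shifted [IsDomain R] {d : ℕ} (hd : d ≠ 0) :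
    2 * (∏' m, (1 + X ^ (2 * d * (m + 1)) : R⟦X⟧)) ^ 2 * eulerPhi R (2 * d) =
      theta R (fun j => d * (j * (j + 1)).natAbs) := by
  set E : R⟦X⟧ := ∏' m, (1 + X ^ (2 * d * (m + 1)))
  have hE := (multipliable_one_add_X_pow (R := R) (e := fun m => 2 * d * (m + 1))
    (tendsto_mul_add_one_atTop (by omega))).tendsto_prod_tprod_nat
  have hP : Tendsto (fun N => (∏ m ∈ range N, (1 + X ^ (2 * d * (m + 1)) : R⟦X⟧)) * 2 *
      ∏ m ∈ range (N + 1), (1 + X ^ (2 * d * (m + 1)))) atTop (𝓝 (E * 2 * E)) :=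
    (hE.mul_const 2).mul (hE.comp (tendsto_add_atTop_nat 1))
  have hS := (tendsto_sum_Icc_mul_X_pow (tendsto_mul_natAbs_mul_add_one_cofinite hd) fun j =>
    tendsto_gaussBinom (R := R) (e := 2 * d) (by omega) j).comp (tendsto_add_atTop_nat 1)
  have hfin : ∀ N : ℕ, (∏ m ∈ range N, (1 + X ^ (2 * d * (m + 1)) : R⟦X⟧)) * 2 *
      ∏ m ∈ range (N + 1), (1 + X ^ (2 * d * (m + 1))) =
      ∑ j ∈ Icc (-((N + 1 : ℕ) : ℤ)) (N + 1 : ℕ), gaussBinom (X ^ (2 * d)) (2 * (N + 1))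
        ((N + 1 : ℕ) + j) * X ^ (d * (j * (j + 1)).natAbs) := by
    intro N
    have h := finite_jacobi_triple_product_shifted (pow_ne_zero d (X_ne_zero (R := R))) (N + 1)
    simp only [← pow_mul] at h
    rw [mul_comm d 2] at h
    rw [← h, prod_mul_distrib, prod_range_succ' (fun m => (1 + X ^ (d * (2 * m)) : R⟦X⟧))]
    simp only [mul_zero, pow_zero, show ∀ m, d * (2 * (m + 1)) = 2 * d * (m + 1) by
      intro; ring, show ∀ m, d * (2 * m + 2) = 2 * d * (m + 1) by intro; ring]
    ring
  have hΦ : IsUnit (eulerPhi R (2 * d)) := isUnit_eulerPhi (by omega)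
  calc 2 * E ^ 2 * eulerPhi R (2 * d) = E * 2 * E * eulerPhi R (2 * d) := by ring
    _ = _ := by rw [tendsto_nhds_unique (hP.congr hfin) hS, mul_right_comm,
      Ring.inverse_mul_cancel _ hΦ, one_mul]

theorem coeff_tsum_X_pow {κ : Type*} {v : κ → ℕ} (hv : Tendsto v cofinite atTop) (n : ℕ) :
    coeff n (∑' i, X ^ v i : R⟦X⟧) = ({i | v i = n}.ncard : R) := by
  have hS : {i | v i = n}.Finite := by
    refine (eventually_cofinite.1 (hv.eventually_gt_atTop n)).subset fun i hi => ?_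
    simp only [Set.mem_ofPred_eq] at hi ⊢
    omega
  rw [(summable_X_pow hv).map_tsum _ (WithPiTopology.continuous_coeff R n),
    tsum_eq_sum (s := hS.toFinset) fun i hi => ?_, Set.ncard_eq_toFinset_card _ hS]
  · rw [← nsmul_one, ← sum_const]
    refine sum_congr rfl fun i hi => ?_
    rw [Set.Finite.mem_toFinset] at hi
    rw [coeff_X_pow, if_pos (Eq.symm hi)]
  · rw [Set.Finite.mem_toFinset] at hi
    rw [coeff_X_pow, if_neg (Ne.symm hi)]

theorem coeff_theta_sq {w : ℤ → ℕ} (hw : Tendsto w cofinite atTop) (n : ℕ) :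
    coeff n (theta R w ^ 2) = ({p : ℤ × ℤ | w p.1 + w p.2 = n}.ncard : R) := by
  have hw₂ : Tendsto (fun p : ℤ × ℤ => w p.1 + w p.2) cofinite atTop := by
    refine tendsto_atTop.2 fun b => eventually_cofinite.2 ?_
    have hb := eventually_cofinite.1 (tendsto_atTop.1 hw b)
    exact (hb.prod hb).subset fun p hp => by
      simp only [Set.mem_ofPred_eq, not_le] at hp
      simp only [Set.mem_prod, Set.mem_ofPred_eq, not_le]
      omega
  have hprod : Summable fun p : ℤ × ℤ => (X ^ w p.1 * X ^ w p.2 : R⟦X⟧) := by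
    simp only [← pow_add]
    exact summable_X_pow hw₂
  unfold theta
  rw [sq, (summable_X_pow (R := R) hw).tsum_mul_tsum (summable_X_pow hw) hprod]
  simp only [← pow_add]
  exact coeff_tsum_X_pow hw₂ n

theorem ncard_sq_add_sq_eq_odd (m : ℕ) :
    {p : ℤ × ℤ | p.1.natAbs ^ 2 + p.2.natAbs ^ 2 = 2 * m + 1}.ncard =
      {p : ℤ × ℤ | 2 * (p.1 * (p.1 + 1)).natAbs + 2 * (p.2 * (p.2 + 1)).natAbs = 2 * m}.ncard := by
  have hsq : ∀ a : ℤ, ((a.natAbs ^ 2 : ℕ) : ℤ) = a ^ 2 := fun a => by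
    push_cast [Int.natCast_natAbs, sq_abs]; rfl
  have htri : ∀ a : ℤ, (((a * (a + 1)).natAbs : ℕ) : ℤ) = a * (a + 1) := fun a => by
    rw [Int.natCast_natAbs, abs_of_nonneg (mul_add_one_nonneg a)]
  set g : ℤ × ℤ → ℤ × ℤ := fun p => (p.1 + p.2 + 1, p.1 - p.2) with hg
  have hginj : Function.Injective g := fun p p' h => by
    simp only [hg, Prod.mk.injEq] at h
    exact Prod.ext (by omega) (by omega)
  rw [← Set.ncard_image_of_injective {p : ℤ × ℤ | 2 * (p.1 * (p.1 + 1)).natAbs +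
    2 * (p.2 * (p.2 + 1)).natAbs = 2 * m} hginj]
  congr 1
  ext ⟨a, b⟩
  simp only [Set.mem_image, Set.mem_ofPred_eq, Prod.exists, hg, Prod.mk.injEq]
  constructor
  · intro h
    have h' : a ^ 2 + b ^ 2 = 2 * m + 1 := by
      rw [← hsq a, ← hsq b]; exact_mod_cast h
    obtain ⟨x, hx⟩ := Int.even_mul_pred_self a
    obtain ⟨y, hy⟩ := Int.even_mul_pred_self b
    have hab : a + b = 2 * m + 1 - 2 * x - 2 * y := by linear_combination h' - hx - hy
    refine ⟨(a + b - 1) / 2, (a - b - 1) / 2, ?_, by omega, by omega⟩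
    obtain ⟨u, v, rfl, rfl⟩ : ∃ u v, a = u + v + 1 ∧ b = u - v :=
      ⟨(a + b - 1) / 2, (a - b - 1) / 2, by omega, by omega⟩
    rw [show (u + v + 1 + (u - v) - 1) / 2 = u by omega,
      show (u + v + 1 - (u - v) - 1) / 2 = v by omega]
    have : 2 * (u * (u + 1)) + 2 * (v * (v + 1)) = 2 * m := by linear_combination h'
    rw [← htri u, ← htri v] at this
    exact_mod_cast this
  · rintro ⟨u, v, h, rfl, rfl⟩
    have h' : 2 * (u * (u + 1)) + 2 * (v * (v + 1)) = 2 * m := by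
      rw [← htri u, ← htri v]; exact_mod_cast h
    have : (u + v + 1) ^ 2 + (u - v) ^ 2 = 2 * m + 1 := by linear_combination h'
    rw [← hsq (u + v + 1), ← hsq (u - v)] at this
    exact_mod_cast this

theorem theta_sq_sub_rescale_theta_sq :
    theta R (fun j => j.natAbs ^ 2) ^ 2 - rescale (-1) (theta R (fun j => j.natAbs ^ 2) ^ 2) =
      2 * X * theta R (fun j => 2 * (j * (j + 1)).natAbs) ^ 2 := by
  have hw₁ : Tendsto (fun j : ℤ => j.natAbs ^ 2) cofinite atTop := by
    simpa only [one_mul] using tendsto_mul_natAbs_sq_cofinite one_ne_zero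
  ext n
  rw [map_sub, coeff_rescale, coeff_theta_sq hw₁, mul_comm 2 X, mul_assoc]
  rcases n with _ | n
  · rw [coeff_zero_X_mul]
    simp
  rw [coeff_succ_X_mul, ← map_ofNat C 2, coeff_C_mul,
    coeff_theta_sq (tendsto_mul_natAbs_mul_add_one_cofinite two_ne_zero)]
  obtain ⟨m, hm | hm⟩ := Nat.even_or_odd' (n + 1)
  · have hempty : {p : ℤ × ℤ | 2 * (p.1 * (p.1 + 1)).natAbs + 2 * (p.2 * (p.2 + 1)).natAbs = n}
        = ∅ := Set.eq_empty_of_forall_notMem fun p (hp : _ = n) => by omega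
    rw [hm, pow_mul, neg_one_sq, one_pow, hempty, Set.ncard_empty]
    simp
  · obtain rfl : n = 2 * m := by omega
    rw [hm, pow_succ, pow_mul, neg_one_sq, one_pow, ncard_sq_add_sq_eq_odd]
    ring

end Theta

section JacobiIdentity

local notation "𝐏" => ∏' m : ℕ, (1 + X ^ (2 * m + 1) : ℤ⟦X⟧)
local notation "𝐌" => ∏' m : ℕ, (1 - X ^ (2 * m + 1) : ℤ⟦X⟧)
local notation "𝐄" => ∏' m : ℕ, (1 + X ^ (2 * (m + 1)) : ℤ⟦X⟧)
local notation "𝐀" => ∏' m : ℕ, (1 + X ^ (4 * (m + 1)) : ℤ⟦X⟧)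

theorem rescale_neg_one_X_pow {R : Type*} [CommRing R] (n : ℕ) :
    rescale (-1) (X ^ n : R⟦X⟧) = (-1) ^ n * X ^ n := by
  rw [map_pow, rescale_X, mul_pow, map_neg, map_one]

theorem rescale_neg_one_prod_one_add_odd : rescale (-1) 𝐏 = 𝐌 := by
  rw [rescale_tprod (multipliable_one_add_X_pow (tendsto_atTop_of_le_self fun m => by omega))]
  congr 1
  funext m
  rw [map_add, map_one, rescale_neg_one_X_pow, Odd.neg_one_pow ⟨m, rfl⟩, neg_one_mul,
    ← sub_eq_add_neg]

theorem rescale_neg_one_prod_one_sub_odd : rescale (-1) 𝐌 = 𝐏 := by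
  rw [← rescale_neg_one_prod_one_add_odd, rescale_rescale, neg_one_mul, neg_neg, rescale_one,
    RingHom.id_apply]

theorem rescale_neg_one_eulerPhi_two : rescale (-1) (eulerPhi ℤ 2) = eulerPhi ℤ 2 := by
  rw [eulerPhi, rescale_tprod (multipliable_eulerPhi two_ne_zero)]
  congr 1
  funext m
  rw [map_sub, map_one, rescale_neg_one_X_pow, Even.neg_one_pow ⟨m + 1, by ring⟩, one_mul]

theorem euler_identity : 𝐏 * 𝐄 * 𝐌 = 1 := by
  have hodd : Tendsto (fun m => 2 * m + 1) atTop atTop :=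
    tendsto_atTop_of_le_self fun m => by omega
  have heven : Tendsto (fun m => 2 * m + 1 + 1) atTop atTop :=
    tendsto_atTop_of_le_self fun m => by omega
  have hexp : ∀ m, 2 * m + 1 + 1 = 2 * (m + 1) := fun m => by ring
  have hplus : ∏' n, (1 + X ^ (n + 1) : ℤ⟦X⟧) = 𝐏 * 𝐄 := by
    rw [← tprod_even_mul_odd (f := fun n => (1 + X ^ (n + 1) : ℤ⟦X⟧))
      (multipliable_one_add_X_pow hodd) (multipliable_one_add_X_pow heven)]
    simp only [hexp]
  have hminus : ∏' n, (1 - X ^ (n + 1) : ℤ⟦X⟧) = 𝐌 * eulerPhi ℤ 2 := by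
    rw [← tprod_even_mul_odd (f := fun n => (1 - X ^ (n + 1) : ℤ⟦X⟧))
      (multipliable_one_sub_X_pow hodd) (multipliable_one_sub_X_pow heven)]
    simp only [hexp, eulerPhi]
  have h := tprod_one_add_mul_tprod_one_sub (R := ℤ)
    (tendsto_atTop_of_le_self fun n => Nat.le_succ n)
  rw [hplus, hminus, ← eulerPhi, ← mul_assoc] at h
  exact (isUnit_eulerPhi two_ne_zero).mul_eq_right.1 h

theorem prod_one_add_even_mul_eulerPhi_two : 𝐄 * eulerPhi ℤ 2 = eulerPhi ℤ 4 := by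
  have h := tprod_one_add_mul_tprod_one_sub (R := ℤ) (tendsto_mul_add_one_atTop two_ne_zero)
  simp only [← mul_assoc, show 2 * 2 = 4 from rfl] at h
  exact h

theorem jacobi_identity : 𝐏 ^ 4 - 𝐌 ^ 4 = 8 * X * 𝐀 ^ 4 * 𝐄 ^ 2 := by
  have hθ : 𝐏 ^ 2 * eulerPhi ℤ 2 = theta ℤ (fun j => j.natAbs ^ 2) := by
    simpa only [one_mul, mul_one] using jacobi_triple_product (R := ℤ) one_ne_zero
  have hθ' : 𝐌 ^ 2 * eulerPhi ℤ 2 = rescale (-1) (theta ℤ (fun j => j.natAbs ^ 2)) := by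
    rw [← hθ, map_mul, map_pow, rescale_neg_one_prod_one_add_odd, rescale_neg_one_eulerPhi_two]
  have hψ : 2 * 𝐀 ^ 2 * eulerPhi ℤ 4 = theta ℤ (fun j => 2 * (j * (j + 1)).natAbs) := by
    simpa only [show 2 * 2 = 4 from rfl] using jacobi_triple_product_shifted (R := ℤ) two_ne_zero
  refine ((isUnit_eulerPhi two_ne_zero).pow 2).mul_left_inj.1 ?_
  calc (𝐏 ^ 4 - 𝐌 ^ 4) * eulerPhi ℤ 2 ^ 2
      = (𝐏 ^ 2 * eulerPhi ℤ 2) ^ 2 - (𝐌 ^ 2 * eulerPhi ℤ 2) ^ 2 := by ring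
    _ = 2 * X * (2 * 𝐀 ^ 2 * eulerPhi ℤ 4) ^ 2 := by
      rw [hθ, hθ', hψ, ← map_pow, theta_sq_sub_rescale_theta_sq]
    _ = 8 * X * 𝐀 ^ 4 * 𝐄 ^ 2 * eulerPhi ℤ 2 ^ 2 := by
      rw [← prod_one_add_even_mul_eulerPhi_two]
      ring

theorem isUnit_prod_one_sub_odd : IsUnit 𝐌 :=
  .of_mul_eq_one (𝐏 * 𝐄) (by rw [mul_comm, euler_identity])

theorem isUnit_prod_one_add_odd : IsUnit 𝐏 :=
  .of_mul_eq_one (𝐄 * 𝐌) (by rw [← mul_assoc, euler_identity])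

theorem tendsto_prod_Ffactor :
    Tendsto (fun N => ∏ k ∈ range N, Ffactor k) atTop (𝓝 (Ring.inverse (𝐌 ^ 2) * 𝐏 ^ 2)) := by
  have hodd : Tendsto (fun m => 2 * m + 1) atTop atTop :=
    tendsto_atTop_of_le_self fun m => by omega
  refine tendsto_of_mul_eq ((multipliable_one_sub_X_pow hodd).tendsto_prod_tprod_nat.pow 2)
    ((multipliable_one_add_X_pow hodd).tendsto_prod_tprod_nat.pow 2)
    (Eventually.of_forall fun N => ?_) (Ring.inverse_mul_cancel _ (isUnit_prod_one_sub_odd.pow 2))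
  simp only [← prod_pow, ← prod_mul_distrib]
  refine prod_congr rfl fun k _ => ?_
  have hunit : IsUnit ((1 - X ^ (2 * k + 1) : ℤ⟦X⟧) ^ 2) :=
    isUnit_iff_constantCoeff.2 (by simp)
  rw [Ffactor, mul_assoc, Ring.inverse_mul_cancel _ hunit, mul_one]

theorem sub_rescale_neg_one_eq :
    Ring.inverse (𝐌 ^ 2) * 𝐏 ^ 2 - rescale (-1) (Ring.inverse (𝐌 ^ 2) * 𝐏 ^ 2) =
      8 * X * (𝐀 ^ 4 * 𝐄 ^ 4) := by
  have hw : Ring.inverse (𝐌 ^ 2) * 𝐌 ^ 2 = 1 :=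
    Ring.inverse_mul_cancel _ (isUnit_prod_one_sub_odd.pow 2)
  have hw' : rescale (-1) (Ring.inverse (𝐌 ^ 2)) * 𝐏 ^ 2 = 1 := by
    simpa only [map_mul, map_pow, rescale_neg_one_prod_one_sub_odd, map_one] using
      congrArg (rescale (-1)) hw
  rw [map_mul, map_pow, rescale_neg_one_prod_one_add_odd]
  refine ((isUnit_prod_one_add_odd.pow 2).mul (isUnit_prod_one_sub_odd.pow 2)).mul_left_inj.1 ?_
  linear_combination 𝐏 ^ 4 * hw - 𝐌 ^ 4 * hw' + jacobi_identity
    - 8 * X * 𝐀 ^ 4 * 𝐄 ^ 2 * (𝐏 * 𝐄 * 𝐌 + 1) * euler_identity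

theorem hasProd_jacobi_factor : HasProd (fun k : ℕ => (1 + X ^ (4 * (k + 1)) : ℤ⟦X⟧) ^ 4 *
    (1 + X ^ (2 * (k + 1))) ^ 4) (𝐀 ^ 4 * 𝐄 ^ 4) :=
  ((multipliable_one_add_X_pow (tendsto_mul_add_one_atTop four_ne_zero)).hasProd.pow 4).mul
    ((multipliable_one_add_X_pow (tendsto_mul_add_one_atTop two_ne_zero)).hasProd.pow 4)

end JacobiIdentity

theorem coeffwiseProd_of_tendsto {f : ℕ → ℤ⟦X⟧} {g : ℤ⟦X⟧}
    (h : Tendsto (fun N => ∏ k ∈ range N, f k) atTop (𝓝 g)) : CoeffwiseProd f g :=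
  tendsto_iff_eventually_coeff_eq.1 h

theorem stmt4 :
    ∃ F g : PowerSeries ℤ,
      CoeffwiseProd Ffactor F ∧
      CoeffwiseProd (fun k : ℕ =>
        (1 + X ^ (4 * (k + 1))) ^ 4 * (1 + X ^ (2 * (k + 1))) ^ 4) g ∧
      F - PowerSeries.rescale (-1 : ℤ) F = 8 * X * g :=
  ⟨_, _, coeffwiseProd_of_tendsto tendsto_prod_Ffactor,
    coeffwiseProd_of_tendsto hasProd_jacobi_factor.tendsto_prod_nat, sub_rescale_neg_one_eq⟩

end Stmt4
end

section
/- For a partition μ of n with exactly s distinct part sizes having multiplicities m_1, …, m_s, set N_μ = 4^s·∏_{i=1}^s m_i (with N_μ = 1 for the empty partition). Then ∑_{μ ⊢ n} N_μ = [x^n] ∏_{s≥1} (1+x^s)² (1−x^s)^{−2}. -/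
/-!
`Nat.Partition.hasProd_genFun` writes `∑_{μ ⊢ n} ∏_i f(i, m_i)` as the `n`-th coefficient of
`∏_i (1 + ∑_{j ≥ 1} f(i, j) x^{ij})`. For `f(i, j) = 4j` the summand is `N_μ`, and each factor
is `1 + 4 ∑_j j x^{ij} = (1 + x^i)² / (1 - x^i)²`, since `∑_j j x^j = x / (1 - x)²` and
`(1 - x)² + 4x = (1 + x)²`. Taking the discrete topology on `ℚ` turns the convergence of the
infinite product into coefficients that are eventually constant.
-/

open scoped Classical
open PowerSeries

namespace Stmt7

/-- Coefficientwise convergence of an infinite product of formal power series over ℚ. -/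
def CoeffwiseProd (f : ℕ → PowerSeries ℚ) (g : PowerSeries ℚ) : Prop :=
  ∀ n : ℕ, ∀ᶠ N in Filter.atTop,
    PowerSeries.coeff n (∏ k ∈ Finset.range N, f k) = PowerSeries.coeff n g

/-- `N_μ = 4^s · ∏_{i=1}^s m_i`, where `s` is the number of distinct part sizes of `μ`
and `m_1, …, m_s` their multiplicities. -/
noncomputable def NN {n : ℕ} (c : Nat.Partition n) : ℕ :=
  4 ^ c.parts.toFinset.card * ∏ ℓ ∈ c.parts.toFinset, c.parts.count ℓ

open Filter PowerSeries.WithPiTopology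

theorem _root_.HasProd.eventually_coeff_prod_range_eq {R : Type*} [CommSemiring R]
    [TopologicalSpace R] [DiscreteTopology R] {f : ℕ → R⟦X⟧} {g : R⟦X⟧} (h : HasProd f g)
    (n : ℕ) : ∀ᶠ N in atTop, coeff n (∏ k ∈ Finset.range N, f k) = coeff n g :=
  tendsto_pure.mp (nhds_discrete R ▸ ((continuous_coeff R n).tendsto g).comp h.tendsto_prod_nat)

theorem hasSum_monomial_subst_X_pow {R : Type*} [CommRing R] [TopologicalSpace R] {k : ℕ}
    (hk : k ≠ 0) (f : R⟦X⟧) :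
    HasSum (fun d ↦ monomial (k * d) (coeff d f)) (f.subst (X ^ k : R⟦X⟧)) := by
  rw [hasSum_iff_hasSum_coeff]
  intro n
  rw [coeff_subst_X_pow hk]
  simp only [coeff_monomial, Algebra.algebraMap_self, RingHom.id_apply]
  split_ifs with h
  · obtain ⟨m, rfl⟩ := h
    rw [Nat.mul_div_cancel_left m (Nat.pos_of_ne_zero hk)]
    convert hasSum_ite_eq m (coeff m f) using 2 with d
    simp only [mul_right_inj' hk, eq_comm]
    split_ifs with h <;> simp [h]
  · convert hasSum_zero with d
    rw [if_neg]
    rintro rfl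
    exact h (dvd_mul_right k d)

theorem mk_ite_four_mul_mul_one_sub_X_sq {R : Type*} [CommRing R] :
    (PowerSeries.mk fun n ↦ if n = 0 then 1 else 4 * (n : R)) * (1 - X) ^ 2 = (1 + X) ^ 2 := by
  have hB := PowerSeries.mk_add_choose_mul_one_sub_pow_eq_one (S := R) (d := 1)
  have hA : (PowerSeries.mk fun n ↦ if n = 0 then 1 else 4 * (n : R)) =
      1 + 4 * X * PowerSeries.mk fun n ↦ ((Nat.choose (1 + n) 1 : ℕ) : R) := by
    ext (_ | n)
    · simp
    · rw [← map_ofNat C 4]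
      simp [mul_assoc, add_comm, coeff_succ_X_mul]
  rw [hA]
  linear_combination (4 * X) * hB

theorem one_add_tsum_four_mul_smul_X_pow {K : Type*} [Field K] [TopologicalSpace K]
    [IsTopologicalRing K] [T2Space K] {k : ℕ} (hk : k ≠ 0) :
    1 + ∑' j : ℕ, (4 * ((j + 1 : ℕ) : K)) • (X : K⟦X⟧) ^ (k * (j + 1)) =
      (1 + X ^ k) ^ 2 * ((1 - X ^ k)⁻¹) ^ 2 := by
  set A : K⟦X⟧ := PowerSeries.mk fun n ↦ if n = 0 then 1 else 4 * (n : K)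
  set q : K⟦X⟧ := X ^ k
  have hsum := hasSum_monomial_subst_X_pow hk A
  have hsubst :
      A.subst q = 1 + ∑' j : ℕ, (4 * ((j + 1 : ℕ) : K)) • (X : K⟦X⟧) ^ (k * (j + 1)) := by
    rw [← hsum.tsum_eq, hsum.summable.tsum_eq_zero_add]
    simp [A, X_pow_eq, ← map_smul]
  have hmul : A.subst q * (1 - q) ^ 2 = (1 + q) ^ 2 := by
    have ha : HasSubst q := .X_pow hk
    have h := congrArg (substAlgHom (R := K) ha) mk_ite_four_mul_mul_one_sub_X_sq
    rwa [map_mul, map_pow, map_pow, map_sub, map_add, map_one, substAlgHom_X,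
      coe_substAlgHom] at h
  have hinv : (1 - q) * (1 - q)⁻¹ = 1 := PowerSeries.mul_inv_cancel _ (by simp [q, hk])
  rw [← hsubst]
  linear_combination ((1 - q)⁻¹) ^ 2 * hmul - A.subst q * ((1 - q) * (1 - q)⁻¹ + 1) * hinv

theorem NN_eq_prod_toFinsupp {R : Type*} [CommSemiring R] {n : ℕ} (c : Nat.Partition n) :
    (NN c : R) = c.parts.toFinsupp.prod fun _ m ↦ 4 * (m : R) := by
  simp [NN, Finsupp.prod, Multiset.toFinsupp_support, Finset.prod_mul_distrib]

theorem stmt7 (n : ℕ) :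
    ∃ g : PowerSeries ℚ,
      CoeffwiseProd (fun s : ℕ =>
        (1 + X ^ (s + 1)) ^ 2 * ((1 - X ^ (s + 1))⁻¹) ^ 2) g ∧
      ((∑ c : Nat.Partition n, NN c : ℕ) : ℚ) = PowerSeries.coeff n g := by
  let _ : TopologicalSpace ℚ := ⊥
  have _ : DiscreteTopology ℚ := ⟨rfl⟩
  have hprod : HasProd (fun s : ℕ ↦ (1 + X ^ (s + 1)) ^ 2 * ((1 - X ^ (s + 1))⁻¹) ^ 2)
      (Nat.Partition.genFun fun _ c ↦ 4 * (c : ℚ)) := by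
    simpa only [one_add_tsum_four_mul_smul_X_pow (Nat.succ_ne_zero _)] using
      Nat.Partition.hasProd_genFun fun _ c ↦ 4 * (c : ℚ)
  refine ⟨_, hprod.eventually_coeff_prod_range_eq, ?_⟩
  simp [NN_eq_prod_toFinsupp]

end Stmt7
end

section
/- Let p(n,k) denote the number of partitions of n whose parts have exactly k distinct sizes. Then for every n ≥ 0, ∑_{k≥0} p(n,k)·2^k = [x^n] ∏_{s≥1} (1+x^s)(1−x^s)^{−1}. -/
/-!
Weight a partition by `2 ^ k`, where `k` is its number of distinct part sizes. Since the weight is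
a product of one factor `2` per occurring part size, its generating function factors over the part
sizes `s` as `1 + 2 x^s + 2 x^(2s) + ⋯ = (1 + x^s) (1 - x^s)⁻¹` (Mathlib's `Nat.Partition.genFun`
with constant character `2`). The `s`-th factor is `1` modulo `x^s`, so the coefficient of `x^n` in
the partial products no longer changes once more than `n` factors are taken; hence convergence in
the product topology is eventual coefficientwise equality.
-/

open scoped Classical
open PowerSeries

namespace Stmt8

def CoeffwiseProd (f : ℕ → PowerSeries ℚ) (g : PowerSeries ℚ) : Prop :=
  ∀ n : ℕ, ∀ᶠ N in Filter.atTop,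
    PowerSeries.coeff n (∏ k ∈ Finset.range N, f k) = PowerSeries.coeff n g

noncomputable def p (n k : ℕ) : ℕ :=
  (Finset.univ.filter fun c : Nat.Partition n => c.parts.toFinset.card = k).card

open Finset Filter
open scoped PowerSeries.WithPiTopology Topology

theorem eventually_coeff_prod_range_eq_of_hasProd {R : Type*} [CommRing R] [TopologicalSpace R]
    [T2Space R] {f : ℕ → R⟦X⟧} {g : R⟦X⟧} (hfg : HasProd f g)
    (hf : ∀ k, X ^ (k + 1) ∣ f k - 1) (n : ℕ) :
    ∀ᶠ N in atTop, coeff n (∏ k ∈ range N, f k) = coeff n g := by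
  have hstable : ∀ N ≥ n, coeff n (∏ k ∈ range N, f k) = coeff n (∏ k ∈ range n, f k) := by
    refine Nat.le_induction rfl fun N hN ih => ?_
    obtain ⟨h, hh⟩ := hf N
    have hsucc : ∏ k ∈ range (N + 1), f k
        = ∏ k ∈ range N, f k + X ^ (N + 1) * ((∏ k ∈ range N, f k) * h) := by
      rw [prod_range_succ, mul_left_comm, ← hh]; ring
    rw [hsucc, map_add, coeff_X_pow_mul', if_neg (by omega), add_zero, ih]
  have hlim : Tendsto (fun N ↦ coeff n (∏ k ∈ range N, f k)) atTop (𝓝 (coeff n g)) :=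
    ((PowerSeries.WithPiTopology.continuous_coeff R n).tendsto g).comp hfg.tendsto_prod_nat
  have hconst : coeff n (∏ k ∈ range n, f k) = coeff n g :=
    tendsto_nhds_unique (tendsto_atTop_of_eventually_const hstable) hlim
  filter_upwards [eventually_ge_atTop n] with N hN
  rw [hstable N hN, hconst]

theorem one_add_smul_mul_inv_eq {K : Type*} [Field K] [TopologicalSpace K] [IsTopologicalRing K]
    [T2Space K] (a : K) {q : K⟦X⟧} (hq : constantCoeff q = 0) :
    (1 + (a - 1) • q) * (1 - q)⁻¹ = 1 + a • q * ∑' j, q ^ j := by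
  have hgeom := PowerSeries.WithPiTopology.tsum_pow_mul_one_sub_of_constantCoeff_eq_zero hq
  rw [eq_comm, eq_mul_inv_iff_mul_eq (by simp [hq]), sub_smul, one_smul]
  linear_combination (a • q) * hgeom

theorem hasProd_genFun_const {K : Type*} [Field K] [TopologicalSpace K] [IsTopologicalRing K]
    [T2Space K] (a : K) :
    HasProd (fun i ↦ (1 + (a - 1) • X ^ (i + 1)) * (1 - X ^ (i + 1))⁻¹)
      (Nat.Partition.genFun fun _ _ ↦ a) := by
  have hfactor (i : ℕ) : (1 + (a - 1) • X ^ (i + 1)) * (1 - X ^ (i + 1))⁻¹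
      = 1 + ∑' j, a • (X : K⟦X⟧) ^ ((i + 1) * (j + 1)) := by
    have hq : constantCoeff ((X : K⟦X⟧) ^ (i + 1)) = 0 := by simp
    rw [one_add_smul_mul_inv_eq a hq,
      ← (WithPiTopology.summable_pow_of_constantCoeff_eq_zero hq).tsum_mul_left]
    simp_rw [pow_mul, pow_succ', smul_mul_assoc]
  rw [funext hfactor]
  exact Nat.Partition.hasProd_genFun (fun _ _ ↦ a)

theorem coeff_genFun_const {R : Type*} [CommSemiring R] (a : R) (n : ℕ) :
    coeff n (Nat.Partition.genFun fun _ _ ↦ a) = ∑ p : n.Partition, a ^ p.parts.toFinset.card := by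
  simp [Finsupp.prod, Multiset.toFinsupp_support]

theorem finsum_card_fiber_mul {α β : Type*} [Fintype α] [DecidableEq β] (c : α → β) (w : β → ℕ) :
    ∑ᶠ k, #{x | c x = k} * w k = ∑ x, w (c x) := by
  rw [finsum_eq_sum_of_support_subset _ (s := univ.image c), sum_comp]
  · simp only [smul_eq_mul]
  · intro k hk
    obtain ⟨x, hx⟩ := card_pos.mp (Nat.pos_of_ne_zero (left_ne_zero_of_mul hk))
    simpa using ⟨x, (mem_filter.mp hx).2⟩

theorem stmt8 (n : ℕ) :
    ∃ g : PowerSeries ℚ,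
      CoeffwiseProd (fun s : ℕ => (1 + X ^ (s + 1)) * (1 - X ^ (s + 1))⁻¹) g ∧
      ((∑ᶠ k : ℕ, p n k * 2 ^ k : ℕ) : ℚ) = PowerSeries.coeff n g := by
  have hfactor (s : ℕ) : (1 + (X : ℚ⟦X⟧) ^ (s + 1)) * (1 - X ^ (s + 1))⁻¹
      = (1 + ((2 : ℚ) - 1) • X ^ (s + 1)) * (1 - X ^ (s + 1))⁻¹ := by
    norm_num
  have hdvd (s : ℕ) : X ^ (s + 1) ∣ (1 + (X : ℚ⟦X⟧) ^ (s + 1)) * (1 - X ^ (s + 1))⁻¹ - 1 := by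
    rw [hfactor, one_add_smul_mul_inv_eq _ (by simp), add_sub_cancel_left, smul_mul_assoc]
    exact Dvd.intro _ (mul_smul_comm _ _ _)
  have hprod := hasProd_genFun_const (2 : ℚ)
  simp only [← hfactor] at hprod
  refine ⟨_, eventually_coeff_prod_range_eq_of_hasProd hprod hdvd, ?_⟩
  have hcount := finsum_card_fiber_mul (fun P : n.Partition ↦ P.parts.toFinset.card) (2 ^ ·)
  rw [coeff_genFun_const]
  exact_mod_cast hcount

end Stmt8
end

section
/- The number of signed Young diagrams with 2n boxes in total such that m(ℓ,+) = m(ℓ,−) for every odd ℓ, and m(ℓ,+) and m(ℓ,−) are both even for every even ℓ, equals [x^n] ∏_{s≥1} (1+x^s)(1−x^{2s})^{−2}. (Any such diagram automatically has signature (n,n); this count is the number of nilpotent GL(n)-orbits on the odd part of so(2n).) -/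
/-!
The diagrams in question are exactly the finite sums, with uniquely determined multiplicities, of
*blocks*: a `+` row and a `−` row of the same odd length, or two `+` rows, or two `−` rows, of the
same even length. Index the blocks by `(s, true)` (the block of length `s` containing a `+` row) and
`(s, false)` (two `−` rows of length `2s`); they have `2s` and `4s` boxes. Hence the diagrams with
`2n` boxes are counted by `[x^n] ∏_s (1 - x^s)⁻¹ (1 - x^{2s})⁻¹`, and
`(1 + x^s)(1 - x^{2s})⁻² = (1 - x^s)⁻¹ (1 - x^{2s})⁻¹`. The partial products converge
coefficientwise because the `s`-th factor is `1 + O(x^s)`.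
-/

open PowerSeries

namespace Stmt9

/-- The number of `+` boxes in a row of length `ℓ` whose leftmost box has sign `b`. -/
def rowPlus (ℓ : ℕ) (b : Bool) : ℕ := if b then (ℓ + 1) / 2 else ℓ / 2

def sigPlus (m : (ℕ × Bool) →₀ ℕ) : ℕ := m.sum fun p k => k * rowPlus p.1 p.2

def sigMinus (m : (ℕ × Bool) →₀ ℕ) : ℕ := m.sum fun p k => k * rowPlus p.1 (!p.2)

/-- Rows have positive length. -/
def IsSYD (m : (ℕ × Bool) →₀ ℕ) : Prop := ∀ b, m (0, b) = 0

/-- Coefficientwise convergence of an infinite product of formal power series over ℚ. -/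
def CoeffwiseProd (f : ℕ → PowerSeries ℚ) (g : PowerSeries ℚ) : Prop :=
  ∀ n : ℕ, ∀ᶠ N in Filter.atTop,
    PowerSeries.coeff n (∏ k ∈ Finset.range N, f k) = PowerSeries.coeff n g

open Finset Finsupp

noncomputable section

section CommRing

variable {R : Type*} [CommRing R]

theorem mk_dvd_mul_one_sub_X_pow {w : ℕ} (hw : 0 < w) :
    (mk fun d => if w ∣ d then 1 else 0 : R⟦X⟧) * (1 - X ^ w) = 1 := by
  ext d
  simp only [mul_sub, mul_one, map_sub, coeff_mul_X_pow', coeff_mk, coeff_one]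
  rcases Nat.eq_zero_or_pos d with rfl | hd
  · simp [hw.ne']
  · rw [if_neg hd.ne']
    by_cases hwd : w ≤ d
    · simp only [if_pos hwd, Nat.dvd_sub_iff_left hwd dvd_rfl, sub_self]
    · rw [if_neg hwd, if_neg fun h => hwd (Nat.le_of_dvd hd h), sub_zero]

theorem X_pow_dvd_prod_range_sub {f : ℕ → R⟦X⟧} (hf : ∀ k, X ^ (k + 1) ∣ f k - 1)
    {n N : ℕ} (hnN : n ≤ N) : X ^ (n + 1) ∣ ∏ k ∈ range N, f k - ∏ k ∈ range n, f k := by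
  induction N, hnN using Nat.le_induction with
  | base => simp
  | succ N hnN ih =>
    have hN : X ^ (n + 1) ∣ f N - 1 := (pow_dvd_pow X (by omega)).trans (hf N)
    rw [prod_range_succ]
    convert dvd_add (dvd_mul_of_dvd_right hN (∏ k ∈ range N, f k)) ih using 1
    ring

theorem coeff_prod_range_eq {f : ℕ → R⟦X⟧} (hf : ∀ k, X ^ (k + 1) ∣ f k - 1)
    {n N : ℕ} (hnN : n ≤ N) : coeff n (∏ k ∈ range N, f k) = coeff n (∏ k ∈ range n, f k) := by
  rw [← sub_eq_zero, ← map_sub]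
  exact X_pow_dvd_iff.mp (X_pow_dvd_prod_range_sub hf hnN) n n.lt_succ_self

end CommRing

theorem coeffwiseProd_of_X_pow_dvd {f : ℕ → ℚ⟦X⟧} (hf : ∀ k, X ^ (k + 1) ∣ f k - 1) :
    CoeffwiseProd f (mk fun d => coeff d (∏ k ∈ range d, f k)) := fun n =>
  Filter.eventually_atTop.mpr ⟨n, fun _ hN => by rw [coeff_mk, coeff_prod_range_eq hf hN]⟩

section Field

variable {k : Type*} [Field k]

theorem inv_one_sub_X_pow_eq_mk {w : ℕ} (hw : 0 < w) :
    (1 - X ^ w : k⟦X⟧)⁻¹ = mk fun d => if w ∣ d then 1 else 0 := by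
  rw [PowerSeries.inv_eq_iff_mul_eq_one (by simp [hw.ne'])]
  exact mk_dvd_mul_one_sub_X_pow hw

theorem X_pow_dvd_inv_one_sub_X_pow_sub_one {w : ℕ} (hw : 0 < w) :
    X ^ w ∣ (1 - X ^ w : k⟦X⟧)⁻¹ - 1 :=
  ⟨(1 - X ^ w)⁻¹, by
    linear_combination PowerSeries.inv_mul_cancel (1 - X ^ w : k⟦X⟧) (by simp [hw.ne'])⟩

theorem X_pow_dvd_inv_one_sub_X_pow_mul_inv_sub_one {a : ℕ} (ha : 0 < a) :
    X ^ a ∣ (1 - X ^ a : k⟦X⟧)⁻¹ * (1 - X ^ (2 * a))⁻¹ - 1 := by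
  have h₁ := X_pow_dvd_inv_one_sub_X_pow_sub_one (k := k) ha
  have h₂ := (pow_dvd_pow X (by omega : a ≤ 2 * a)).trans
    (X_pow_dvd_inv_one_sub_X_pow_sub_one (k := k) (by omega : 0 < 2 * a))
  convert dvd_add (dvd_mul_of_dvd_right h₂ (1 - X ^ a)⁻¹) h₁ using 1
  ring

theorem one_add_X_pow_mul_inv_one_sub_X_pow_two_mul_sq {a : ℕ} (ha : 0 < a) :
    (1 + X ^ a) * ((1 - X ^ (2 * a) : k⟦X⟧)⁻¹) ^ 2 = (1 - X ^ a)⁻¹ * (1 - X ^ (2 * a))⁻¹ := by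
  have hv : (1 + X ^ a : k⟦X⟧) * (1 + X ^ a)⁻¹ = 1 :=
    PowerSeries.mul_inv_cancel _ (by simp [ha.ne'])
  have hfac : (1 - X ^ (2 * a) : k⟦X⟧) = (1 + X ^ a) * (1 - X ^ a) := by ring
  rw [hfac, PowerSeries.mul_inv_rev]
  linear_combination ((1 - X ^ a : k⟦X⟧)⁻¹) ^ 2 * (1 + X ^ a)⁻¹ * hv

end Field

section WeightedCount

variable {ι : Type*}

theorem le_linearCombination_of_ne_zero (w : ι → ℕ) {c : ι →₀ ℕ} {i : ι} (hi : c i ≠ 0) :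
    w i ≤ linearCombination ℕ w c := by
  rw [linearCombination_apply, Finsupp.sum]
  calc w i ≤ c i • w i := Nat.le_mul_of_pos_left _ (Nat.pos_of_ne_zero hi)
    _ ≤ ∑ j ∈ c.support, c j • w j :=
      single_le_sum (f := fun j => c j • w j) (fun _ _ => Nat.zero_le _) (mem_support_iff.mpr hi)

theorem linearCombination_eq_sum_of_support_subset (w : ι → ℕ) {c : ι →₀ ℕ} {F : Finset ι}
    (hc : c.support ⊆ F) : linearCombination ℕ w c = ∑ i ∈ F, w i * c i := by
  rw [linearCombination_apply, Finsupp.sum_of_support_subset c hc (fun i a => a • w i)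
    (fun i _ => zero_smul ℕ (w i))]
  simp only [smul_eq_mul, mul_comm]

theorem support_subset_of_linearCombination_eq {w : ι → ℕ} {F : Finset ι} {n : ℕ}
    (hF : ∀ i, w i ≤ n → i ∈ F) {c : ι →₀ ℕ} (hc : linearCombination ℕ w c = n) :
    c.support ⊆ F := fun i hi =>
  hF i (hc ▸ le_linearCombination_of_ne_zero w (mem_support_iff.mp hi))

variable [DecidableEq ι]

theorem dvd_of_mem_filter_dvd {w : ι → ℕ} {F : Finset ι} {n : ℕ} {l : ι →₀ ℕ}
    (hl : l ∈ {l ∈ F.finsuppAntidiag n | ∀ i ∈ F, w i ∣ l i}) (i : ι) : w i ∣ l i := by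
  simp only [mem_filter, mem_finsuppAntidiag] at hl
  by_cases hi : i ∈ F
  · exact hl.2 i hi
  · simp [notMem_support_iff.mp fun h => hi (hl.1.2 h)]

theorem pointwise_smul_mem_filter_dvd {w : ι → ℕ} {F : Finset ι} {n : ℕ}
    (hF : ∀ i, w i ≤ n → i ∈ F) {c : ι →₀ ℕ} (hc : linearCombination ℕ w c = n) :
    w • c ∈ {l ∈ F.finsuppAntidiag n | ∀ i ∈ F, w i ∣ l i} := by
  have hcF := support_subset_of_linearCombination_eq hF hc
  simp only [mem_filter, mem_finsuppAntidiag, coe_pointwise_smul, smul_eq_mul]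
  refine ⟨⟨(linearCombination_eq_sum_of_support_subset w hcF).symm.trans hc, fun i hi => hcF ?_⟩,
    fun i _ => dvd_mul_right _ _⟩
  exact mem_support_iff.mpr fun h0 => mem_support_iff.mp hi (by simp [h0])

theorem card_filter_dvd_finsuppAntidiag {w : ι → ℕ} (hw : ∀ i, 0 < w i) {F : Finset ι} {n : ℕ}
    (hF : ∀ i, w i ≤ n → i ∈ F) :
    #{l ∈ F.finsuppAntidiag n | ∀ i ∈ F, w i ∣ l i} =
      Nat.card {c : ι →₀ ℕ // linearCombination ℕ w c = n} := by
  rw [← Nat.card_eq_finsetCard]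
  let scale (c : {c : ι →₀ ℕ // linearCombination ℕ w c = n}) :
      {l // l ∈ {l ∈ F.finsuppAntidiag n | ∀ i ∈ F, w i ∣ l i}} :=
    ⟨w • c.1, pointwise_smul_mem_filter_dvd hF c.2⟩
  refine (Nat.card_congr (Equiv.ofBijective scale ⟨fun c c' h => ?_, ?_⟩)).symm
  · ext i
    simpa [scale, (hw i).ne'] using congrArg (fun l => l.1 i) h
  · rintro ⟨l, hl⟩
    let c : ι →₀ ℕ := onFinset l.support (fun i => l i / w i)
      fun i hi => mem_support_iff.mpr fun h0 => hi (by simp [h0])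
    have hwc : w • c = l := by
      ext i
      simp [c, Nat.mul_div_cancel' (dvd_of_mem_filter_dvd hl i)]
    simp only [mem_filter, mem_finsuppAntidiag] at hl
    have hc : linearCombination ℕ w c = n := by
      rw [linearCombination_eq_sum_of_support_subset w
        (support_onFinset_subset.trans hl.1.2), ← hl.1.1]
      exact sum_congr rfl fun i _ => DFunLike.congr_fun hwc i
    exact ⟨⟨c, hc⟩, Subtype.ext hwc⟩

theorem coeff_prod_inv_one_sub_X_pow {k : Type*} [Field k] {w : ι → ℕ} (hw : ∀ i, 0 < w i)
    {F : Finset ι} {n : ℕ} (hF : ∀ i, w i ≤ n → i ∈ F) :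
    coeff n (∏ i ∈ F, (1 - X ^ w i : k⟦X⟧)⁻¹) =
      Nat.card {c : ι →₀ ℕ // linearCombination ℕ w c = n} := by
  rw [← card_filter_dvd_finsuppAntidiag hw hF, coeff_prod]
  simp_rw [inv_one_sub_X_pow_eq_mk (hw _), coeff_mk, prod_boole, sum_boole]

end WeightedCount

section Blocks

def boxCount (m : (ℕ × Bool) →₀ ℕ) : ℕ := linearCombination ℕ Prod.fst m

theorem sigPlus_add_sigMinus (m : (ℕ × Bool) →₀ ℕ) : sigPlus m + sigMinus m = boxCount m := by
  rw [sigPlus, sigMinus, boxCount, linearCombination_apply, ← Finsupp.sum_add]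
  refine Finsupp.sum_congr fun ⟨ℓ, b⟩ _ => ?_
  rw [← Nat.mul_add, smul_eq_mul]
  congr 1
  cases b <;> simp [rowPlus] <;> omega

def block : ℕ × Bool → (ℕ × Bool) →₀ ℕ
  | (s, true) =>
    if Odd (s + 1) then single (s + 1, true) 1 + single (s + 1, false) 1
    else single (s + 1, true) 2
  | (s, false) => single (2 * (s + 1), false) 2

def blockWeight : ℕ × Bool → ℕ
  | (s, true) => s + 1
  | (s, false) => 2 * (s + 1)

/-- Only the block `p` has rows of type `rowOf p`, so the multiplicity of `p` can be read off
there. -/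
def rowOf : ℕ × Bool → ℕ × Bool
  | (s, true) => (s + 1, true)
  | (s, false) => (2 * (s + 1), false)

def ofBlocks (c : (ℕ × Bool) →₀ ℕ) : (ℕ × Bool) →₀ ℕ := linearCombination ℕ block c

theorem blockWeight_pos (p : ℕ × Bool) : 0 < blockWeight p := by
  rcases p with ⟨s, _ | _⟩ <;> simp [blockWeight]

theorem rowOf_injective : Function.Injective rowOf := by
  rintro ⟨s, _ | _⟩ ⟨t, _ | _⟩ h <;> simp [rowOf] at h ⊢ <;> omega

theorem boxCount_block (p : ℕ × Bool) : boxCount (block p) = 2 * blockWeight p := by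
  rcases p with ⟨s, _ | _⟩
  · simp [boxCount, block, blockWeight]
  · by_cases h : Odd (s + 1) <;> simp [boxCount, block, blockWeight, h]
    ring

theorem boxCount_ofBlocks (c : (ℕ × Bool) →₀ ℕ) :
    boxCount (ofBlocks c) = 2 * linearCombination ℕ blockWeight c := by
  rw [boxCount, ofBlocks, linearCombination_linearCombination]
  simp_rw [fun p => show linearCombination ℕ Prod.fst (block p) = _ from boxCount_block p]
  rw [linearCombination_apply, linearCombination_apply, Finsupp.mul_sum]
  exact Finsupp.sum_congr fun _ _ => by simp only [smul_eq_mul]; ring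

theorem block_apply_zero (p : ℕ × Bool) (b : Bool) : block p (0, b) = 0 := by
  rcases p with ⟨s, _ | _⟩ <;> simp only [block] <;> (try split_ifs) <;> simp

theorem block_apply_rowOf_of_ne {p p' : ℕ × Bool} (h : p' ≠ p) : block p' (rowOf p) = 0 := by
  rcases p with ⟨s, _ | _⟩ <;> rcases p' with ⟨t, _ | _⟩ <;> simp only [block, rowOf] <;>
    (try split_ifs) <;> simp_all [single_apply, Nat.odd_iff]; omega

theorem block_apply_succ_false_of_ne {s : ℕ} (hs : Odd (s + 1)) {p : ℕ × Bool}
    (h : p ≠ (s, true)) : block p (s + 1, false) = 0 := by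
  obtain ⟨k, hk⟩ := hs
  rcases p with ⟨t, _ | _⟩ <;> simp only [block] <;> (try split_ifs) <;>
    simp [single_apply] at h ⊢ <;> omega

theorem block_apply_rowOf_true (s : ℕ) :
    block (s, true) (rowOf (s, true)) = if Odd (s + 1) then 1 else 2 := by
  simp only [block, rowOf]
  split_ifs <;> simp

theorem block_apply_rowOf_false (s : ℕ) : block (s, false) (rowOf (s, false)) = 2 := by
  simp [block, rowOf]

theorem block_apply_rowOf_pos (p : ℕ × Bool) : 0 < block p (rowOf p) := by
  rcases p with ⟨s, _ | _⟩
  · simp [block_apply_rowOf_false]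
  · rw [block_apply_rowOf_true]
    split_ifs <;> simp

theorem ofBlocks_apply (c : (ℕ × Bool) →₀ ℕ) (q : ℕ × Bool) :
    ofBlocks c q = c.sum fun p a => a * block p q := by
  simp [ofBlocks, linearCombination_apply, Finsupp.sum_apply]

theorem ofBlocks_apply_of_forall_ne {c : (ℕ × Bool) →₀ ℕ} {q p₀ : ℕ × Bool}
    (h : ∀ p ≠ p₀, block p q = 0) : ofBlocks c q = c p₀ * block p₀ q := by
  rw [ofBlocks_apply]
  exact Finsupp.sum_eq_single p₀ (fun p _ hp => by simp [h p hp]) (fun _ => zero_mul _)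

theorem ofBlocks_apply_zero (c : (ℕ × Bool) →₀ ℕ) (b : Bool) : ofBlocks c (0, b) = 0 := by
  simp [ofBlocks_apply, block_apply_zero]

theorem ofBlocks_apply_rowOf (c : (ℕ × Bool) →₀ ℕ) (p : ℕ × Bool) :
    ofBlocks c (rowOf p) = c p * block p (rowOf p) :=
  ofBlocks_apply_of_forall_ne fun _ => block_apply_rowOf_of_ne

theorem ofBlocks_apply_succ_false {s : ℕ} (hs : Odd (s + 1)) (c : (ℕ × Bool) →₀ ℕ) :
    ofBlocks c (s + 1, false) = c (s, true) := by
  rw [ofBlocks_apply_of_forall_ne fun _ => block_apply_succ_false_of_ne hs]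
  simp [block, hs]

def toBlocks (m : (ℕ × Bool) →₀ ℕ) : (ℕ × Bool) →₀ ℕ :=
  onFinset (m.support.preimage rowOf rowOf_injective.injOn)
    (fun p => m (rowOf p) / block p (rowOf p))
    fun p hp => mem_preimage.mpr (mem_support_iff.mpr fun h0 => hp (by simp [h0]))

theorem toBlocks_apply (m : (ℕ × Bool) →₀ ℕ) (p : ℕ × Bool) :
    toBlocks m p = m (rowOf p) / block p (rowOf p) :=
  onFinset_apply

theorem toBlocks_ofBlocks (c : (ℕ × Bool) →₀ ℕ) : toBlocks (ofBlocks c) = c := by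
  ext p
  rw [toBlocks_apply, ofBlocks_apply_rowOf, Nat.mul_div_cancel _ (block_apply_rowOf_pos p)]

section Diagram

variable {m : (ℕ × Bool) →₀ ℕ}

theorem block_apply_rowOf_dvd
    (heven : ∀ ℓ, Even ℓ → Even (m (ℓ, true)) ∧ Even (m (ℓ, false))) (p : ℕ × Bool) :
    block p (rowOf p) ∣ m (rowOf p) := by
  rcases p with ⟨s, _ | _⟩
  · rw [block_apply_rowOf_false, ← even_iff_two_dvd]
    exact (heven _ ⟨s + 1, by ring⟩).2
  · rw [block_apply_rowOf_true]
    split_ifs with hs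
    · exact one_dvd _
    · exact even_iff_two_dvd.mp (heven _ (Nat.not_odd_iff_even.mp hs)).1

theorem ofBlocks_toBlocks_apply_rowOf
    (heven : ∀ ℓ, Even ℓ → Even (m (ℓ, true)) ∧ Even (m (ℓ, false))) (p : ℕ × Bool) :
    ofBlocks (toBlocks m) (rowOf p) = m (rowOf p) := by
  rw [ofBlocks_apply_rowOf, toBlocks_apply, Nat.div_mul_cancel (block_apply_rowOf_dvd heven p)]

theorem ofBlocks_toBlocks (hS : IsSYD m) (hodd : ∀ ℓ, Odd ℓ → m (ℓ, true) = m (ℓ, false))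
    (heven : ∀ ℓ, Even ℓ → Even (m (ℓ, true)) ∧ Even (m (ℓ, false))) :
    ofBlocks (toBlocks m) = m := by
  ext ⟨ℓ, b⟩
  rcases ℓ with _ | s
  · rw [ofBlocks_apply_zero, hS]
  cases b
  · rcases Nat.even_or_odd (s + 1) with ⟨r, hr⟩ | hs
    · obtain ⟨t, rfl⟩ : ∃ t, r = t + 1 := ⟨r - 1, by omega⟩
      rw [hr, ← two_mul]
      exact ofBlocks_toBlocks_apply_rowOf heven (t, false)
    · rw [ofBlocks_apply_succ_false hs, toBlocks_apply, block_apply_rowOf_true, if_pos hs,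
        Nat.div_one]
      exact hodd _ hs
  · exact ofBlocks_toBlocks_apply_rowOf heven (s, true)

theorem linearCombination_toBlocks {n : ℕ} (hS : IsSYD m)
    (hodd : ∀ ℓ, Odd ℓ → m (ℓ, true) = m (ℓ, false))
    (heven : ∀ ℓ, Even ℓ → Even (m (ℓ, true)) ∧ Even (m (ℓ, false)))
    (hsum : sigPlus m + sigMinus m = 2 * n) : linearCombination ℕ blockWeight (toBlocks m) = n := by
  have := boxCount_ofBlocks (toBlocks m)
  rw [ofBlocks_toBlocks hS hodd heven, ← sigPlus_add_sigMinus, hsum] at this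
  omega

end Diagram

section OfBlocks

variable (c : (ℕ × Bool) →₀ ℕ)

theorem isSYD_ofBlocks : IsSYD (ofBlocks c) :=
  ofBlocks_apply_zero c

theorem ofBlocks_apply_odd {ℓ : ℕ} (hℓ : Odd ℓ) :
    ofBlocks c (ℓ, true) = ofBlocks c (ℓ, false) := by
  obtain ⟨s, rfl⟩ : ∃ s, ℓ = s + 1 := ⟨ℓ - 1, by have := hℓ.pos; omega⟩
  rw [ofBlocks_apply_succ_false hℓ]
  change ofBlocks c (rowOf (s, true)) = _
  rw [ofBlocks_apply_rowOf, block_apply_rowOf_true, if_pos hℓ, mul_one]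

theorem even_ofBlocks_apply_even {ℓ : ℕ} (hℓ : Even ℓ) :
    Even (ofBlocks c (ℓ, true)) ∧ Even (ofBlocks c (ℓ, false)) := by
  obtain ⟨r, rfl⟩ := hℓ
  rcases r with _ | t
  · simp [ofBlocks_apply_zero]
  have htrue : (t + 1 + (t + 1), true) = rowOf (2 * t + 1, true) := by simp [rowOf]; ring
  have hfalse : (t + 1 + (t + 1), false) = rowOf (t, false) := by simp [rowOf]; ring
  have hodd : ¬Odd (2 * t + 1 + 1) := Nat.not_odd_iff_even.mpr ⟨t + 1, by ring⟩
  rw [htrue, hfalse, ofBlocks_apply_rowOf, ofBlocks_apply_rowOf, block_apply_rowOf_true,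
    block_apply_rowOf_false, if_neg hodd]
  exact ⟨even_two.mul_left _, even_two.mul_left _⟩

end OfBlocks

def diagramEquivBlocks (n : ℕ) :
    {m : (ℕ × Bool) →₀ ℕ //
        IsSYD m ∧ (∀ ℓ, Odd ℓ → m (ℓ, true) = m (ℓ, false)) ∧
        (∀ ℓ, Even ℓ → Even (m (ℓ, true)) ∧ Even (m (ℓ, false))) ∧
        sigPlus m + sigMinus m = 2 * n} ≃
      {c : (ℕ × Bool) →₀ ℕ // linearCombination ℕ blockWeight c = n} where
  toFun m := ⟨toBlocks m.1, linearCombination_toBlocks m.2.1 m.2.2.1 m.2.2.2.1 m.2.2.2.2⟩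
  invFun c := ⟨ofBlocks c.1, isSYD_ofBlocks c.1, fun _ => ofBlocks_apply_odd c.1,
    fun _ => even_ofBlocks_apply_even c.1, by rw [sigPlus_add_sigMinus, boxCount_ofBlocks, c.2]⟩
  left_inv m := Subtype.ext (ofBlocks_toBlocks m.2.1 m.2.2.1 m.2.2.2.1)
  right_inv c := Subtype.ext (toBlocks_ofBlocks c.1)

theorem prod_range_eq_prod_blockWeight {k : Type*} [Field k] (N : ℕ) :
    ∏ s ∈ range N, (1 + X ^ (s + 1)) * ((1 - X ^ (2 * (s + 1)) : k⟦X⟧)⁻¹) ^ 2 =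
      ∏ p ∈ range N ×ˢ univ, (1 - X ^ blockWeight p : k⟦X⟧)⁻¹ := by
  rw [prod_product]
  refine prod_congr rfl fun s _ => ?_
  rw [Fintype.prod_bool, one_add_X_pow_mul_inv_one_sub_X_pow_two_mul_sq s.succ_pos]
  rfl

end Blocks

end

theorem stmt9 (n : ℕ) :
    ∃ g : PowerSeries ℚ,
      CoeffwiseProd (fun s : ℕ =>
        (1 + X ^ (s + 1)) * ((1 - X ^ (2 * (s + 1)))⁻¹) ^ 2) g ∧
      ((Nat.card {m : (ℕ × Bool) →₀ ℕ //
          IsSYD m ∧ (∀ ℓ, Odd ℓ → m (ℓ, true) = m (ℓ, false)) ∧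
          (∀ ℓ, Even ℓ → Even (m (ℓ, true)) ∧ Even (m (ℓ, false))) ∧
          sigPlus m + sigMinus m = 2 * n} : ℕ) : ℚ) = PowerSeries.coeff n g := by
  have hfactor (s : ℕ) :
      X ^ (s + 1) ∣ (1 + X ^ (s + 1)) * ((1 - X ^ (2 * (s + 1)) : ℚ⟦X⟧)⁻¹) ^ 2 - 1 := by
    rw [one_add_X_pow_mul_inv_one_sub_X_pow_two_mul_sq s.succ_pos]
    exact X_pow_dvd_inv_one_sub_X_pow_mul_inv_sub_one s.succ_pos
  have hsmall (p : ℕ × Bool) (hp : blockWeight p ≤ n) : p ∈ range n ×ˢ univ := by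
    rcases p with ⟨s, _ | _⟩ <;> simp [blockWeight] at hp ⊢ <;> omega
  refine ⟨_, coeffwiseProd_of_X_pow_dvd hfactor, ?_⟩
  rw [coeff_mk, prod_range_eq_prod_blockWeight, coeff_prod_inv_one_sub_X_pow blockWeight_pos hsmall,
    Nat.card_congr (diagramEquivBlocks n)]

end Stmt9
end

section
/- For every integer m ≥ 0 the following identity holds in ℤ⟦u,v⟧, where h_r(u,v) = ∑_{i=0}^r u^i v^{r−i} for r ≥ 0 and h_{−1} = 0: 1 + 2∑_{r≥1} (uv)^{mr}·( h_r(u,v) + uv·h_{r−2}(u,v) ) = (1 + u^{m+1} v^m)(1 + u^m v^{m+1})(1 − u^{m+1} v^m)^{−1}(1 − u^m v^{m+1})^{−1}. The left-hand sum converges coefficientwise since its r-th term has total degree at least r. -/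
/-!
With `a = u^{m+1} v^m` and `b = u^m v^{m+1}` one has `(uv)^{mr} h_r(u,v) = h_r(a,b)`, so the
`r`-th term is `h_r(a,b) + ab·h_{r-2}(a,b)`. As `∑_r h_r(a,b) = 1/((1-a)(1-b))`, the series sums
to `S = (1+ab)/((1-a)(1-b)) - 1`, and `1 + 2S = (1+a)(1+b)/((1-a)(1-b))` because
`2(1+ab) - (1-a)(1-b) = (1+a)(1+b)`. Convergence is that of the product topology on `ℤ⟦u,v⟧`,
in which `∑_r h_r(a,b)` converges since `h_r(a,b)` has order at least `r`.
-/

namespace Stmt10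

noncomputable def u : MvPowerSeries (Fin 2) ℤ := MvPowerSeries.X 0
noncomputable def v : MvPowerSeries (Fin 2) ℤ := MvPowerSeries.X 1

/-- The complete homogeneous symmetric polynomial `h_r(u,v) = ∑_{i=0}^r u^i v^{r-i}`. -/
noncomputable def hpoly (r : ℕ) : MvPowerSeries (Fin 2) ℤ :=
  ∑ i ∈ Finset.range (r + 1), u ^ i * v ^ (r - i)

/-- The `r`-th term `(uv)^{mr}·(h_r + uv·h_{r−2})` of the left-hand sum (with the
convention `h_{−1} = 0`, relevant for `r = 1`). -/
noncomputable def term (m r : ℕ) : MvPowerSeries (Fin 2) ℤ :=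
  (u * v) ^ (m * r) * (hpoly r + u * v * (if 2 ≤ r then hpoly (r - 2) else 0))

/-- Coefficientwise convergence of an infinite series of two-variable formal power
series. -/
def CoeffwiseSum (f : ℕ → MvPowerSeries (Fin 2) ℤ) (g : MvPowerSeries (Fin 2) ℤ) : Prop :=
  ∀ d : Fin 2 →₀ ℕ, ∀ᶠ N in Filter.atTop,
    MvPowerSeries.coeff d (∑ k ∈ Finset.range N, f k) = MvPowerSeries.coeff d g

open Filter Topology MvPowerSeries MvPowerSeries.WithPiTopology

def hsymm₂ {R : Type*} [CommRing R] (a b : R) (r : ℕ) : R :=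
  ∑ i ∈ Finset.range (r + 1), a ^ i * b ^ (r - i)

section Algebra

variable {R : Type*} [CommRing R] (a b : R)

theorem hsymm₂_zero : hsymm₂ a b 0 = 1 := by
  simp [hsymm₂]

theorem hsymm₂_succ (r : ℕ) : hsymm₂ a b (r + 1) = a ^ (r + 1) + b * hsymm₂ a b r := by
  rw [hsymm₂, hsymm₂, geom_sum₂_succ_eq, Nat.add_sub_cancel]

theorem hsymm₂_add_two (r : ℕ) :
    hsymm₂ a b (r + 2) = (a + b) * hsymm₂ a b (r + 1) - a * b * hsymm₂ a b r := by
  linear_combination hsymm₂_succ a b (r + 1) - a * hsymm₂_succ a b r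

theorem hsymm₂_mul_mul (c : R) (r : ℕ) : hsymm₂ (c * a) (c * b) r = c ^ r * hsymm₂ a b r := by
  rw [hsymm₂, hsymm₂, Finset.mul_sum]
  refine Finset.sum_congr rfl fun i hi => ?_
  obtain ⟨j, rfl⟩ := Nat.exists_eq_add_of_le (Nat.lt_succ_iff.mp (Finset.mem_range.mp hi))
  rw [Nat.add_sub_cancel_left]
  ring

/-- The truncation of `(1 - a)(1 - b) ∑ h_r(a, b) = 1`. -/
theorem one_sub_mul_one_sub_mul_sum_range_hsymm₂ (N : ℕ) :
    (1 - a) * (1 - b) * ∑ r ∈ Finset.range (N + 1), hsymm₂ a b r =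
      1 - hsymm₂ a b (N + 1) + a * b * hsymm₂ a b N := by
  induction N with
  | zero =>
    rw [zero_add, Finset.sum_range_one, hsymm₂_succ, hsymm₂_zero]
    ring
  | succ N ih =>
    rw [Finset.sum_range_succ, mul_add, ih, hsymm₂_add_two]
    ring

end Algebra

section Topology

variable {σ R : Type*} [CommRing R] {a b : MvPowerSeries σ R}

theorem le_order_hsymm₂ (ha : constantCoeff a = 0) (hb : constantCoeff b = 0) (r : ℕ) :
    (r : ℕ∞) ≤ (hsymm₂ a b r).order := by
  refine Finset.sum_induction _ (fun p : MvPowerSeries σ R => (r : ℕ∞) ≤ p.order)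
    (fun p q hp hq => (le_min hp hq).trans min_order_le_add) (by simp) fun i hi => ?_
  calc (r : ℕ∞) = i + (r - i : ℕ) := by
        rw [← Nat.cast_add, Nat.add_sub_cancel' (Nat.lt_succ_iff.mp (Finset.mem_range.mp hi))]
    _ ≤ (a ^ i).order + (b ^ (r - i)).order := add_le_add
        (le_order_pow_of_constantCoeff_eq_zero i ha) (le_order_pow_of_constantCoeff_eq_zero _ hb)
    _ ≤ _ := le_order_mul

variable [TopologicalSpace R]

theorem summable_hsymm₂ (ha : constantCoeff a = 0) (hb : constantCoeff b = 0) :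
    Summable (hsymm₂ a b) := by
  refine summable_of_tendsto_order_atTop_nhds_top (ENat.tendsto_nhds_top_iff_natCast_lt.mpr
    fun n => eventually_atTop.mpr ⟨n + 1, fun r hr => ?_⟩)
  exact (Nat.cast_lt.mpr hr).trans_le (le_order_hsymm₂ ha hb r)

theorem one_sub_mul_one_sub_mul_tsum_hsymm₂ [IsTopologicalRing R] [T2Space R]
    (ha : constantCoeff a = 0) (hb : constantCoeff b = 0) :
    (1 - a) * (1 - b) * ∑' r, hsymm₂ a b r = 1 := by
  have hsum := summable_hsymm₂ ha hb
  have hzero := hsum.tendsto_atTop_zero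
  have hlim₁ : Tendsto (fun N => (1 - a) * (1 - b) * ∑ r ∈ Finset.range (N + 1), hsymm₂ a b r)
      atTop (𝓝 ((1 - a) * (1 - b) * ∑' r, hsymm₂ a b r)) :=
    (hsum.hasSum.tendsto_sum_nat.comp (tendsto_add_atTop_nat 1)).const_mul _
  have hlim₂ : Tendsto (fun N => (1 - a) * (1 - b) * ∑ r ∈ Finset.range (N + 1), hsymm₂ a b r)
      atTop (𝓝 1) := by
    simp_rw [one_sub_mul_one_sub_mul_sum_range_hsymm₂]
    simpa using (tendsto_const_nhds.sub (hzero.comp (tendsto_add_atTop_nat 1))).add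
      (hzero.const_mul (a * b))
  exact tendsto_nhds_unique hlim₁ hlim₂

end Topology

theorem _root_.HasSum.coeffwiseSum {f : ℕ → MvPowerSeries (Fin 2) ℤ} {g : MvPowerSeries (Fin 2) ℤ}
    (h : HasSum f g) : CoeffwiseSum f g := by
  intro d
  have := (tendsto_iff_coeff_tendsto _ _ _).mp h.tendsto_sum_nat d
  rwa [nhds_discrete, tendsto_pure] at this

theorem uv_pow_mul_hpoly (m r : ℕ) :
    (u * v) ^ (m * r) * hpoly r = hsymm₂ ((u * v) ^ m * u) ((u * v) ^ m * v) r := by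
  rw [hsymm₂_mul_mul, pow_mul]
  rfl

theorem term_one (m : ℕ) : term m 1 = hsymm₂ ((u * v) ^ m * u) ((u * v) ^ m * v) 1 := by
  rw [term, if_neg (by omega), mul_zero, add_zero, uv_pow_mul_hpoly]

theorem term_add_two (m k : ℕ) :
    term m (k + 2) = hsymm₂ ((u * v) ^ m * u) ((u * v) ^ m * v) (k + 2) +
      (u * v) ^ m * u * ((u * v) ^ m * v) * hsymm₂ ((u * v) ^ m * u) ((u * v) ^ m * v) k := by
  rw [term, if_pos (by omega), Nat.add_sub_cancel, mul_add, uv_pow_mul_hpoly,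
    ← uv_pow_mul_hpoly m k]
  ring

theorem stmt10 (m : ℕ) :
    ∃ S : MvPowerSeries (Fin 2) ℤ,
      CoeffwiseSum (fun r : ℕ => term m (r + 1)) S ∧
      1 + 2 * S =
        (1 + u ^ (m + 1) * v ^ m) * (1 + u ^ m * v ^ (m + 1)) *
          Ring.inverse (1 - u ^ (m + 1) * v ^ m) *
          Ring.inverse (1 - u ^ m * v ^ (m + 1)) := by
  set a := (u * v) ^ m * u
  set b := (u * v) ^ m * v
  have ha : constantCoeff a = 0 := by simp [a, u]
  have hb : constantCoeff b = 0 := by simp [b, v]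
  obtain ⟨T, hT⟩ := summable_hsymm₂ ha hb
  have hTinv := one_sub_mul_one_sub_mul_tsum_hsymm₂ ha hb
  rw [hT.tsum_eq] at hTinv
  have hS : HasSum (fun k => term m (k + 1)) (T - 1 + a * b * T) := by
    refine (hasSum_nat_add_iff' 1).mp ?_
    simp only [Finset.sum_range_one, zero_add, term_one, term_add_two]
    convert ((hasSum_nat_add_iff' 2).mpr hT).add (hT.mul_left (a * b)) using 1
    rw [Finset.sum_range_succ, Finset.sum_range_one, hsymm₂_zero]
    ring
  refine ⟨_, hS.coeffwiseSum, ?_⟩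
  have hinv {c : MvPowerSeries (Fin 2) ℤ} (hc : constantCoeff c = 0) :
      (1 - c) * Ring.inverse (1 - c) = 1 :=
    Ring.mul_inverse_cancel _ (isUnit_iff_constantCoeff.mpr (by simp [hc]))
  rw [show u ^ (m + 1) * v ^ m = a by ring, show u ^ m * v ^ (m + 1) = b by ring]
  -- clear the denominators, using `(1 + a)(1 + b) = 2(1 + ab) - (1 - a)(1 - b)`
  linear_combination (-(1 + 2 * (T - 1 + a * b * T))) * hinv ha
    - (1 + 2 * (T - 1 + a * b * T)) * (1 - a) * Ring.inverse (1 - a) * hinv hb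
    + 2 * (1 + a * b) * Ring.inverse (1 - a) * Ring.inverse (1 - b) * hTinv

end Stmt10
end

section
/- For every integer k ≥ 0, the generating function of weighted partitions into odd parts with exactly 2k+1 parts satisfies, in ℚ⟦q⟧: ∑_{λ} wt_λ·q^{|λ|} = q^{2k+1}(1 − q^{4k+2})^{−1} · ∏_{i=1}^{k}(1 − q^{4i})^{−1} · ∏_{j=1}^{k}(1 + q^{4j−2})²(1 − q^{4j−2})^{−1}, where the sum on the left runs over all partitions λ into odd parts having exactly 2k+1 parts and |λ| denotes the number being partitioned. -/
/-!
Write the parts of a partition into exactly `n` parts as `u₀ ≥ ⋯ ≥ u_{n-1}`. The gaps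
`g₀ = u_{n-1}` and `gᵢ = u_{i-1} - uᵢ` (`0 < i < n`) identify these partitions of `N` with
the vectors `g` such that `g₀ ≥ 1` and `n g₀ + ∑ i gᵢ = N`. Hence a weight of the form
`∏ᵢ cᵢ(gᵢ)` has generating function `∏ᵢ Qᵢ(q^{mᵢ})`, where `Qᵢ = ∑_g cᵢ(g) q^g`, `m₀ = n` and
`mᵢ = i`. For `n = 2k+1` all parts are odd iff `g₀` is odd and the other gaps are even, and
then `wt_λ` is the product over odd `i` of `1, 3, 4, 4, …` evaluated at `gᵢ/2`: these are the
coefficients of `(1+q)²/(1-q)`. So `Q₀ = q/(1-q²)`, `Qᵢ = (1+q²)²/(1-q²)` for odd `i` and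
`Qᵢ = 1/(1-q²)` for even `i > 0`, and the product of the `Qᵢ(q^{mᵢ})` is the right-hand side.
-/

open scoped Classical
open PowerSeries

namespace Stmt11

/-- The weight `wt_λ = 3^a · 4^b` of a partition into odd parts (parts listed in weakly
decreasing order as `2μ₁+1 ≥ 2μ₂+1 ≥ …`; pairing pattern depends on the parity of the
number `s` of parts). -/
noncomputable def wtOdd {N : ℕ} (c : Nat.Partition N) : ℕ :=
  let l := (Multiset.sort c.parts (· ≤ ·)).reverse
  let s := l.length
  if s % 2 = 1 then
    3 ^ ((Finset.range ((s - 1) / 2)).filter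
          (fun j => l.getD (2 * j) 0 = l.getD (2 * j + 1) 0 + 2)).card *
      4 ^ ((Finset.range ((s - 1) / 2)).filter
          (fun j => l.getD (2 * j + 1) 0 + 4 ≤ l.getD (2 * j) 0)).card
  else
    3 ^ ((Finset.range (s / 2 - 1)).filter
          (fun j => l.getD (2 * j + 1) 0 = l.getD (2 * j + 2) 0 + 2)).card *
      4 ^ ((Finset.range (s / 2 - 1)).filter
          (fun j => l.getD (2 * j + 2) 0 + 4 ≤ l.getD (2 * j + 1) 0)).card

/-- The generating function `∑_λ wt_λ q^{|λ|}`, the sum over partitions λ into odd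
parts having exactly `2k+1` parts. -/
noncomputable def lhs (k : ℕ) : PowerSeries ℚ :=
  PowerSeries.mk fun N =>
    ((∑ c ∈ Finset.univ.filter
        (fun c : Nat.Partition N =>
          (∀ p ∈ c.parts, Odd p) ∧ Multiset.card c.parts = 2 * k + 1),
        wtOdd c : ℕ) : ℚ)

open Finset

lemma prod_range_two_mul_add_one {M : Type*} [CommMonoid M] (f : ℕ → M) (k : ℕ) :
    ∏ i ∈ range (2 * k + 1), f i = f 0 * ∏ j ∈ range k, (f (2 * j + 1) * f (2 * j + 2)) := by
  induction k with
  | zero => simp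
  | succ k ih =>
    rw [show 2 * (k + 1) + 1 = 2 * k + 1 + 1 + 1 by ring, prod_range_succ, prod_range_succ, ih,
      prod_range_succ, mul_assoc, mul_assoc]

lemma prod_Icc_one_eq_prod_range {M : Type*} [CommMonoid M] (f : ℕ → M) (k : ℕ) :
    ∏ i ∈ Icc 1 k, f i = ∏ j ∈ range k, f (j + 1) := by
  induction k with
  | zero => simp
  | succ k ih => rw [prod_Icc_succ_top (by omega), ih, prod_range_succ]

section Gaps

variable (n : ℕ)

def gaps (u : ℕ → ℕ) (i : ℕ) : ℕ := if i = 0 then u (n - 1) else u (i - 1) - u i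

def ofGaps (g : ℕ → ℕ) (i : ℕ) : ℕ := g 0 + ∑ t ∈ Ioo i n, g t

def gapMul (i : ℕ) : ℕ := if i = 0 then n else i

variable {n}

lemma gapMul_ne_zero (hn : n ≠ 0) (i : ℕ) : gapMul n i ≠ 0 := by
  unfold gapMul; split_ifs <;> assumption

lemma ofGaps_antitone (g : ℕ → ℕ) : Antitone (ofGaps n g) := fun _ _ hij =>
  Nat.add_le_add_left (sum_le_sum_of_subset (Ioo_subset_Ioo_left hij)) _

lemma ofGaps_eq_ofGaps_succ_add (g : ℕ → ℕ) {i : ℕ} (hi : i + 1 < n) :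
    ofGaps n g i = ofGaps n g (i + 1) + g (i + 1) := by
  have hIoo : Ioo i n = insert (i + 1) (Ioo (i + 1) n) := by
    ext t; simp only [mem_Ioo, mem_insert]; omega
  rw [ofGaps, ofGaps, hIoo, sum_insert (by simp)]
  ring

lemma ofGaps_last (g : ℕ → ℕ) : ofGaps n g (n - 1) = g 0 := by
  have : Ioo (n - 1) n = ∅ := by ext t; simp only [mem_Ioo, notMem_empty, iff_false]; omega
  rw [ofGaps, this, sum_empty, add_zero]

lemma gaps_ofGaps (g : ℕ → ℕ) {i : ℕ} (hi : i < n) : gaps n (ofGaps n g) i = g i := by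
  rcases Nat.eq_zero_or_pos i with rfl | hi0
  · rw [gaps, if_pos rfl, ofGaps_last]
  · rw [gaps, if_neg hi0.ne', ofGaps_eq_ofGaps_succ_add g (i := i - 1) (by omega),
      Nat.sub_add_cancel hi0, Nat.add_sub_cancel_left]

lemma ofGaps_gaps {u : ℕ → ℕ} (hu : Antitone u) {i : ℕ} (hi : i < n) :
    ofGaps n (gaps n u) i = u i := by
  induction hi' : n - 1 - i generalizing i with
  | zero =>
    rw [show i = n - 1 by omega, ofGaps_last, gaps, if_pos rfl]
  | succ d ih =>
    rw [ofGaps_eq_ofGaps_succ_add _ (by omega), ih (by omega) (by omega), gaps,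
      if_neg (by omega), Nat.add_sub_cancel, Nat.add_sub_cancel' (hu (Nat.le_succ i))]

lemma sum_range_sum_Ioo (g : ℕ → ℕ) :
    ∑ i ∈ range n, ∑ t ∈ Ioo i n, g t = ∑ t ∈ range n, t * g t := by
  rw [sum_comm' (t' := range n) (s' := range)]
  · simp only [sum_const, card_range, smul_eq_mul]
  · intro i t; simp only [mem_range, mem_Ioo]; omega

lemma sum_gapMul_mul (g : ℕ → ℕ) :
    ∑ i ∈ range n, gapMul n i * g i = n * g 0 + ∑ i ∈ range n, i * g i := by
  cases n with
  | zero => simp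
  | succ m => simp [sum_range_succ', gapMul, add_comm]

lemma sum_ofGaps (g : ℕ → ℕ) :
    ∑ i ∈ range n, ofGaps n g i = ∑ i ∈ range n, gapMul n i * g i := by
  simp only [ofGaps, sum_add_distrib, sum_const, card_range, smul_eq_mul, sum_range_sum_Ioo,
    sum_gapMul_mul]

lemma forall_odd_iff_gaps {u : ℕ → ℕ} (hu : Antitone u) (hn : n ≠ 0) :
    (∀ i < n, Odd (u i)) ↔ Odd (gaps n u 0) ∧ ∀ i ∈ Ioo 0 n, Even (gaps n u i) := by
  constructor
  · intro h
    refine ⟨h _ (by omega), fun i hi => ?_⟩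
    rw [mem_Ioo] at hi
    rw [gaps, if_neg hi.1.ne']
    exact Nat.Odd.sub_odd (h _ (by omega)) (h _ hi.2)
  · rintro ⟨h0, h⟩ i hi
    rw [← ofGaps_gaps hu hi, ofGaps]
    exact h0.add_even (even_sum _ fun t ht => h t (Ioo_subset_Ioo_left (Nat.zero_le i) ht))

end Gaps

section SortedParts

variable {N : ℕ}

def sortedParts (c : Nat.Partition N) : List ℕ := (Multiset.sort c.parts (· ≤ ·)).reverse

def nthPart (c : Nat.Partition N) (i : ℕ) : ℕ := (sortedParts c).getD i 0

lemma coe_sortedParts (c : Nat.Partition N) : (sortedParts c : Multiset ℕ) = c.parts := by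
  rw [sortedParts, Multiset.coe_reverse, Multiset.sort_eq]

lemma length_sortedParts (c : Nat.Partition N) :
    (sortedParts c).length = Multiset.card c.parts := by
  rw [sortedParts, List.length_reverse, Multiset.length_sort]

lemma nthPart_antitone (c : Nat.Partition N) : Antitone (nthPart c) := by
  intro i j hij
  have hsorted : (sortedParts c).Pairwise (· ≥ ·) :=
    List.pairwise_reverse.mpr (Multiset.pairwise_sort c.parts (· ≤ ·))
  rcases hij.eq_or_lt with rfl | hlt
  · exact le_rfl
  by_cases hj : j < (sortedParts c).length
  · rw [nthPart, nthPart, List.getD_eq_getElem _ _ hj, List.getD_eq_getElem _ _ (hlt.trans hj)]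
    exact List.pairwise_iff_getElem.mp hsorted i j _ hj hlt
  · rw [nthPart, List.getD_eq_default _ _ (not_lt.mp hj)]
    exact Nat.zero_le _

lemma parts_eq_map_nthPart (c : Nat.Partition N) :
    c.parts = (Multiset.range (Multiset.card c.parts)).map (nthPart c) := by
  have hlist : (List.range (sortedParts c).length).map (nthPart c) = sortedParts c :=
    List.ext_getElem (by simp) fun i _ h => by
      rw [List.getElem_map, List.getElem_range, nthPart, List.getD_eq_getElem _ _ h]
  rw [← length_sortedParts, ← coe_sortedParts, ← Multiset.coe_range, Multiset.map_coe, hlist]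

lemma sum_range_nthPart (c : Nat.Partition N) :
    ∑ i ∈ range (Multiset.card c.parts), nthPart c i = N := by
  calc _ = ((Multiset.range (Multiset.card c.parts)).map (nthPart c)).sum := rfl
    _ = N := by rw [← parts_eq_map_nthPart, c.parts_sum]

lemma partition_ext_of_nthPart {c d : Nat.Partition N}
    (hcard : Multiset.card c.parts = Multiset.card d.parts)
    (h : ∀ i < Multiset.card c.parts, nthPart c i = nthPart d i) : c = d := by
  refine Nat.Partition.ext ?_
  rw [parts_eq_map_nthPart c, parts_eq_map_nthPart d, hcard]
  exact Multiset.map_congr rfl fun i hi => h i (by rw [hcard]; exact Multiset.mem_range.mp hi)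

lemma odd_parts_iff_nthPart (c : Nat.Partition N) :
    (∀ p ∈ c.parts, Odd p) ↔ ∀ i < Multiset.card c.parts, Odd (nthPart c i) := by
  conv_lhs => rw [parts_eq_map_nthPart c]
  simp only [Multiset.mem_map, Multiset.mem_range, forall_exists_index, and_imp,
    forall_apply_eq_imp_iff₂]

def partitionOfSeq (n : ℕ) (u : ℕ → ℕ) (hpos : ∀ i < n, 0 < u i)
    (hsum : ∑ i ∈ range n, u i = N) : Nat.Partition N where
  parts := (Multiset.range n).map u
  parts_pos hp := by
    obtain ⟨i, hi, rfl⟩ := Multiset.mem_map.mp hp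
    exact hpos i (Multiset.mem_range.mp hi)
  parts_sum := hsum

lemma nthPart_partitionOfSeq {n : ℕ} {u : ℕ → ℕ} (hu : Antitone u) (hpos : ∀ i < n, 0 < u i)
    (hsum : ∑ i ∈ range n, u i = N) {i : ℕ} (hi : i < n) :
    nthPart (partitionOfSeq n u hpos hsum) i = u i := by
  have hsort : sortedParts (partitionOfSeq n u hpos hsum) = (List.range n).map u := by
    have hpw : ((List.range n).map u).reverse.Pairwise (· ≤ ·) :=
      List.pairwise_reverse.mpr (List.pairwise_map.mpr
        (List.pairwise_lt_range.imp fun h => hu h.le))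
    rw [sortedParts, ← List.reverse_reverse ((List.range n).map u)]
    congr 1
    refine List.Perm.eq_of_pairwise' (Multiset.pairwise_sort _ _) hpw (Multiset.coe_eq_coe.mp ?_)
    rw [Multiset.sort_eq, Multiset.coe_reverse]
    rfl
  rw [nthPart, hsort, List.getD_eq_getElem _ _ (by simpa using hi)]
  simp

end SortedParts

section GeneratingFunction

variable {R : Type*} [CommRing R] {n N : ℕ}

noncomputable def scaledGaps (n : ℕ) (c : Nat.Partition N) : ℕ →₀ ℕ :=
  Finsupp.indicator (range n) fun i _ => gapMul n i * gaps n (nthPart c) i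

lemma prod_coeff_expand_scaledGaps (hn : n ≠ 0) (Q : ℕ → R⟦X⟧) (c : Nat.Partition N) :
    ∏ i ∈ range n, coeff (scaledGaps n c i) (expand (gapMul n i) (gapMul_ne_zero hn i) (Q i)) =
      ∏ i ∈ range n, coeff (gaps n (nthPart c) i) (Q i) :=
  prod_congr rfl fun i hi => by
    rw [scaledGaps, Finsupp.indicator_apply, dif_pos hi, coeff_expand_mul]

lemma scaledGaps_mem_finsuppAntidiag {c : Nat.Partition N} (hc : Multiset.card c.parts = n) :
    scaledGaps n c ∈ (range n).finsuppAntidiag N := by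
  refine mem_finsuppAntidiag.mpr ⟨?_, Finsupp.support_indicator_subset _ _⟩
  calc ∑ i ∈ range n, scaledGaps n c i
      = ∑ i ∈ range n, ofGaps n (gaps n (nthPart c)) i := by
        rw [sum_ofGaps]
        exact sum_congr rfl fun i hi => by rw [scaledGaps, Finsupp.indicator_apply, dif_pos hi]
    _ = ∑ i ∈ range n, nthPart c i :=
        sum_congr rfl fun i hi => ofGaps_gaps (nthPart_antitone c) (mem_range.mp hi)
    _ = N := hc ▸ sum_range_nthPart c

lemma eq_of_scaledGaps_eq {c d : Nat.Partition N} (hc : Multiset.card c.parts = n)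
    (hd : Multiset.card d.parts = n) (hn : n ≠ 0) (h : scaledGaps n c = scaledGaps n d) :
    c = d := by
  refine partition_ext_of_nthPart (hc.trans hd.symm) fun i hi => ?_
  rw [hc] at hi
  have hgaps : ∀ t < n, gaps n (nthPart c) t = gaps n (nthPart d) t := fun t ht => by
    have := DFunLike.congr_fun h t
    rw [scaledGaps, scaledGaps, Finsupp.indicator_apply, Finsupp.indicator_apply,
      dif_pos (mem_range.mpr ht), dif_pos (mem_range.mpr ht)] at this
    exact Nat.eq_of_mul_eq_mul_left (Nat.pos_of_ne_zero (gapMul_ne_zero hn t)) this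
  rw [← ofGaps_gaps (nthPart_antitone c) hi, ← ofGaps_gaps (nthPart_antitone d) hi, ofGaps,
    ofGaps, hgaps 0 (by omega), sum_congr rfl fun t ht => hgaps t (mem_Ioo.mp ht).2]

lemma exists_scaledGaps_eq (hn : n ≠ 0) {l : ℕ →₀ ℕ} (hl : l ∈ (range n).finsuppAntidiag N)
    (hdvd : ∀ i < n, gapMul n i ∣ l i) (h0 : l 0 ≠ 0) :
    ∃ c : Nat.Partition N, Multiset.card c.parts = n ∧ scaledGaps n c = l := by
  obtain ⟨hsum, hsupp⟩ := mem_finsuppAntidiag.mp hl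
  set g := fun i => l i / gapMul n i
  have hmul : ∀ i < n, gapMul n i * g i = l i := fun i hi => Nat.mul_div_cancel' (hdvd i hi)
  have hg0 : 0 < g 0 := Nat.div_pos (Nat.le_of_dvd (Nat.pos_of_ne_zero h0) (hdvd 0 (by omega)))
    (Nat.pos_of_ne_zero (gapMul_ne_zero hn 0))
  have hpos : ∀ i < n, 0 < ofGaps n g i := fun i _ => lt_of_lt_of_le hg0 (Nat.le_add_right _ _)
  have hN : ∑ i ∈ range n, ofGaps n g i = N := by
    rw [sum_ofGaps, ← hsum]
    exact sum_congr rfl fun i hi => hmul i (mem_range.mp hi)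
  set c := partitionOfSeq n (ofGaps n g) hpos hN
  have hpart : ∀ t < n, nthPart c t = ofGaps n g t :=
    fun t ht => nthPart_partitionOfSeq (ofGaps_antitone g) hpos hN ht
  refine ⟨c, by simp [c, partitionOfSeq], ?_⟩
  ext i
  by_cases hi : i < n
  · rw [scaledGaps, Finsupp.indicator_apply, dif_pos (mem_range.mpr hi), ← hmul i hi,
      ← gaps_ofGaps g hi]
    congr 1
    simp only [gaps]
    split_ifs
    · rw [hpart _ (by omega)]
    · rw [hpart _ (by omega), hpart _ hi]
  · have : i ∉ l.support := fun h => hi (mem_range.mp (hsupp h))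
    rw [Finsupp.notMem_support_iff.mp this, scaledGaps, Finsupp.indicator_apply,
      dif_neg (by simpa using hi)]

theorem coeff_prod_expand_gapMul (hn : n ≠ 0) (Q : ℕ → R⟦X⟧) (hQ : constantCoeff (Q 0) = 0) :
    coeff N (∏ i ∈ range n, expand (gapMul n i) (gapMul_ne_zero hn i) (Q i)) =
      ∑ c : Nat.Partition N with Multiset.card c.parts = n,
        ∏ i ∈ range n, coeff (gaps n (nthPart c) i) (Q i) := by
  rw [coeff_prod]
  symm
  refine sum_bij_ne_zero (fun c _ _ => scaledGaps n c)
    (fun c hc _ => scaledGaps_mem_finsuppAntidiag (mem_filter.mp hc).2)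
    (fun c hc _ d hd _ h => eq_of_scaledGaps_eq (mem_filter.mp hc).2 (mem_filter.mp hd).2 hn h)
    (fun l hl hne => ?_) (fun c _ _ => (prod_coeff_expand_scaledGaps hn Q c).symm)
  have hfactor : ∀ i < n, coeff (l i) (expand (gapMul n i) (gapMul_ne_zero hn i) (Q i)) ≠ 0 :=
    fun i hi h => hne (prod_eq_zero (mem_range.mpr hi) h)
  have hdvd : ∀ i < n, gapMul n i ∣ l i := fun i hi => by
    by_contra h
    exact hfactor i hi (coeff_expand_of_not_dvd _ _ _ h)
  have h0 : l 0 ≠ 0 := fun h => hfactor 0 (by omega) (by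
    rw [h, coeff_zero_eq_constantCoeff_apply, constantCoeff_expand, hQ])
  obtain ⟨c, hc, rfl⟩ := exists_scaledGaps_eq hn hl hdvd h0
  exact ⟨c, mem_filter.mpr ⟨mem_univ _, hc⟩,
    by rwa [← prod_coeff_expand_scaledGaps hn Q c], rfl⟩

end GeneratingFunction

def pairWeight (d : ℕ) : ℕ := if d = 0 then 1 else if d = 1 then 3 else 4

lemma prod_pairWeight (s : Finset ℕ) (v : ℕ → ℕ) :
    ∏ j ∈ s, pairWeight (v j) = 3 ^ #{j ∈ s | v j = 1} * 4 ^ #{j ∈ s | 2 ≤ v j} := by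
  have hsplit : ∀ d,
      pairWeight d = 3 ^ (if d = 1 then 1 else 0) * 4 ^ (if 2 ≤ d then 1 else 0) := fun d => by
    rcases d with _ | _ | d <;> simp [pairWeight]
  simp only [hsplit, prod_mul_distrib, prod_pow_eq_pow_sum, card_filter]

lemma one_add_X_sq_mul_mk_one {R : Type*} [CommRing R] :
    ((1 + X) ^ 2 * PowerSeries.mk 1 : R⟦X⟧) = PowerSeries.mk fun d => (pairWeight d : R) := by
  have hexp : ((1 + X) ^ 2 * PowerSeries.mk 1 : R⟦X⟧) =
      PowerSeries.mk 1 + (X * PowerSeries.mk 1 + X * PowerSeries.mk 1) +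
        X ^ 2 * PowerSeries.mk 1 := by ring
  ext d
  rw [hexp]
  rcases d with _ | _ | d <;> simp [pairWeight, coeff_X_pow_mul', coeff_succ_X_mul]
    <;> norm_num

lemma expand_mk_one {k : Type*} [Field k] (m : ℕ) (hm : m ≠ 0) :
    expand m hm (PowerSeries.mk 1 : k⟦X⟧) = (1 - X ^ m)⁻¹ := by
  rw [eq_inv_iff_mul_eq_one (by simp [hm])]
  simpa using congrArg (expand m hm) (mk_one_mul_one_sub_eq_one k)

noncomputable def gapSeries (i : ℕ) : ℚ⟦X⟧ :=
  if i = 0 then X * expand 2 two_ne_zero (PowerSeries.mk 1)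
  else if Odd i then expand 2 two_ne_zero ((1 + X) ^ 2 * PowerSeries.mk 1)
  else expand 2 two_ne_zero (PowerSeries.mk 1)

lemma coeff_gapSeries (i g : ℕ) :
    coeff g (gapSeries i) = (if (if i = 0 then Odd g else Even g) then 1 else 0) *
      (if Odd i then (pairWeight (g / 2) : ℚ) else 1) := by
  rcases Nat.eq_zero_or_pos i with rfl | hi
  · rcases g with _ | g
    · simp [gapSeries]
    · simp [gapSeries, coeff_succ_X_mul, coeff_expand, Nat.odd_add_one, Nat.even_iff,
        Nat.dvd_iff_mod_eq_zero]
  · by_cases hodd : Odd i <;>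
      simp [gapSeries, hi.ne', hodd, coeff_expand, one_add_X_sq_mul_mk_one, even_iff_two_dvd]

lemma wtOdd_eq_prod_pairWeight {N k : ℕ} {c : Nat.Partition N} (hodd : ∀ p ∈ c.parts, Odd p)
    (hc : Multiset.card c.parts = 2 * k + 1) :
    wtOdd c = ∏ j ∈ range k, pairWeight ((nthPart c (2 * j) - nthPart c (2 * j + 1)) / 2) := by
  have hsorted : (Multiset.sort c.parts (· ≤ ·)).reverse = sortedParts c := rfl
  have hgetD : ∀ i, (sortedParts c).getD i 0 = nthPart c i := fun _ => rfl
  have hlen : (sortedParts c).length = 2 * k + 1 := by rw [length_sortedParts, hc]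
  simp only [wtOdd, hsorted, hgetD, hlen, show (2 * k + 1 - 1) / 2 = k by omega, prod_pairWeight]
  rw [if_pos (by omega)]
  have hpair : ∀ j ∈ range k, ∃ a b, nthPart c (2 * j) = 2 * a + 1 ∧
      nthPart c (2 * j + 1) = 2 * b + 1 ∧ b ≤ a := fun j hj => by
    have hj := mem_range.mp hj
    obtain ⟨a, ha⟩ := (odd_parts_iff_nthPart c).mp hodd (2 * j) (by omega)
    obtain ⟨b, hb⟩ := (odd_parts_iff_nthPart c).mp hodd (2 * j + 1) (by omega)
    have := nthPart_antitone c (by omega : 2 * j ≤ 2 * j + 1)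
    exact ⟨a, b, ha, hb, by omega⟩
  congr 3 <;> refine filter_congr fun j hj => ?_ <;>
    obtain ⟨a, b, ha, hb, hba⟩ := hpair j hj <;> rw [ha, hb] <;> omega

lemma prod_coeff_gapSeries {N k : ℕ} (c : Nat.Partition N)
    (hc : Multiset.card c.parts = 2 * k + 1) :
    ∏ i ∈ range (2 * k + 1), coeff (gaps (2 * k + 1) (nthPart c) i) (gapSeries i) =
      if ∀ p ∈ c.parts, Odd p then (wtOdd c : ℚ) else 0 := by
  set g := gaps (2 * k + 1) (nthPart c)
  have hparity : (∀ i ∈ range (2 * k + 1), if i = 0 then Odd (g i) else Even (g i)) ↔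
      ∀ p ∈ c.parts, Odd p := by
    rw [odd_parts_iff_nthPart, hc, forall_odd_iff_gaps (nthPart_antitone c) (by omega)]
    constructor
    · intro h
      refine ⟨by simpa using h 0 (by simp), fun i hi => ?_⟩
      have := h i (mem_range.mpr (mem_Ioo.mp hi).2)
      rwa [if_neg (mem_Ioo.mp hi).1.ne'] at this
    · rintro ⟨h0, h⟩ i hi
      split_ifs with hi0
      · exact hi0 ▸ h0
      · exact h i (mem_Ioo.mpr ⟨by omega, mem_range.mp hi⟩)
  simp only [coeff_gapSeries, prod_mul_distrib, prod_boole, hparity]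
  split_ifs with hodd
  · rw [one_mul, wtOdd_eq_prod_pairWeight hodd hc, prod_range_two_mul_add_one]
    simp [g, gaps, Nat.odd_add_one]
  · rw [zero_mul]

lemma prod_expand_gapSeries (k : ℕ) :
    ∏ i ∈ range (2 * k + 1),
        expand (gapMul (2 * k + 1) i) (gapMul_ne_zero (by omega) i) (gapSeries i) =
      X ^ (2 * k + 1) * (1 - X ^ (4 * k + 2) : ℚ⟦X⟧)⁻¹ *
        (∏ i ∈ Icc 1 k, (1 - X ^ (4 * i) : ℚ⟦X⟧)⁻¹) *
        ∏ j ∈ Icc 1 k, (1 + X ^ (4 * j - 2)) ^ 2 * (1 - X ^ (4 * j - 2) : ℚ⟦X⟧)⁻¹ := by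
  have h0 : expand (gapMul (2 * k + 1) 0) (gapMul_ne_zero (by omega) 0) (gapSeries 0) =
      X ^ (2 * k + 1) * (1 - X ^ (4 * k + 2) : ℚ⟦X⟧)⁻¹ := by
    simp only [gapMul, gapSeries, if_pos]
    rw [map_mul, expand_X, ← expand_mul, expand_mk_one, show (2 * k + 1) * 2 = 4 * k + 2 by ring]
  have hodd : ∀ j, expand (gapMul (2 * k + 1) (2 * j + 1)) (gapMul_ne_zero (by omega) _)
      (gapSeries (2 * j + 1)) =
        (1 + X ^ (4 * (j + 1) - 2)) ^ 2 * (1 - X ^ (4 * (j + 1) - 2) : ℚ⟦X⟧)⁻¹ := fun j => by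
    simp only [gapMul, gapSeries, Nat.add_one_ne_zero, if_false, odd_two_mul_add_one, if_true]
    rw [← expand_mul, map_mul, expand_mk_one, map_pow, map_add, map_one, expand_X,
      show (2 * j + 1) * 2 = 4 * (j + 1) - 2 by omega]
  have heven : ∀ j, expand (gapMul (2 * k + 1) (2 * j + 2)) (gapMul_ne_zero (by omega) _)
      (gapSeries (2 * j + 2)) = (1 - X ^ (4 * (j + 1)) : ℚ⟦X⟧)⁻¹ := fun j => by
    have : ¬ Odd (2 * j + 2) := by simp [Nat.odd_add_one, parity_simps]
    simp only [gapMul, gapSeries, Nat.add_one_ne_zero, if_false, this]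
    rw [← expand_mul, expand_mk_one, show (2 * j + 2) * 2 = 4 * (j + 1) by ring]
  rw [prod_range_two_mul_add_one, h0, prod_Icc_one_eq_prod_range, prod_Icc_one_eq_prod_range]
  simp only [hodd, heven, prod_mul_distrib]
  ring

theorem stmt11 (k : ℕ) :
    lhs k =
      X ^ (2 * k + 1) * (1 - X ^ (4 * k + 2) : PowerSeries ℚ)⁻¹ *
        (∏ i ∈ Finset.Icc 1 k, (1 - X ^ (4 * i) : PowerSeries ℚ)⁻¹) *
        ∏ j ∈ Finset.Icc 1 k,
          (1 + X ^ (4 * j - 2)) ^ 2 * (1 - X ^ (4 * j - 2) : PowerSeries ℚ)⁻¹ := by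
  rw [← prod_expand_gapSeries]
  ext N
  rw [coeff_prod_expand_gapMul (by omega) gapSeries (by simp [gapSeries]), lhs, coeff_mk,
    Nat.cast_sum, sum_filter, sum_filter]
  refine sum_congr rfl fun c _ => ?_
  by_cases hc : Multiset.card c.parts = 2 * k + 1
  · simp [hc, prod_coeff_gapSeries c hc]
  · simp [hc]

end Stmt11
end

section
/- For every integer k ≥ 1, the generating function of weighted partitions into odd parts with exactly 2k parts satisfies, in ℚ⟦q⟧: ∑_{λ} wt_λ·q^{|λ|} = q^{2k}(1 − q^{4k})^{−1} · ∏_{j=1}^{k}(1 − q^{4j−2})^{−1} · ∏_{j=1}^{k−1}(1 + q^{4j})²(1 − q^{4j})^{−1}, where the sum on the left runs over all partitions λ into odd parts having exactly 2k parts and |λ| denotes the number being partitioned. -/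
/-!
Write the parts of λ as `2μ₀+1 ≥ ⋯ ≥ 2μ_{2k-1}+1` and let `e_j = μ_j - μ_{j+1}` (with `μ_{2k} = 0`).
This is a bijection onto `ℕ^{2k}`, under which `|λ| = 2k + ∑_j (2j+2) e_j` and
`wt_λ = ∏_{m < k-1} w(e_{2m+1})`, where `w(0), w(1), w(2), … = 1, 3, 4, 4, …` are the coefficients
of `(1+X)²/(1-X)`. The gaps are independent, so the series is `X^{2k}` times the product over `j` of
`(1-X)⁻¹` or `(1+X)²(1-X)⁻¹`, expanded by `X ↦ X^{2j+2}`.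
-/

open scoped Classical
open PowerSeries

namespace Stmt12

/-- The weight `wt_λ = 3^a · 4^b` of a partition into odd parts (parts listed in weakly
decreasing order as `2μ₁+1 ≥ 2μ₂+1 ≥ …`; pairing pattern depends on the parity of the
number `s` of parts). -/
noncomputable def wtOdd {N : ℕ} (c : Nat.Partition N) : ℕ :=
  let l := (Multiset.sort c.parts (· ≤ ·)).reverse
  let s := l.length
  if s % 2 = 1 then
    3 ^ ((Finset.range ((s - 1) / 2)).filter
          (fun j => l.getD (2 * j) 0 = l.getD (2 * j + 1) 0 + 2)).card *
      4 ^ ((Finset.range ((s - 1) / 2)).filter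
          (fun j => l.getD (2 * j + 1) 0 + 4 ≤ l.getD (2 * j) 0)).card
  else
    3 ^ ((Finset.range (s / 2 - 1)).filter
          (fun j => l.getD (2 * j + 1) 0 = l.getD (2 * j + 2) 0 + 2)).card *
      4 ^ ((Finset.range (s / 2 - 1)).filter
          (fun j => l.getD (2 * j + 2) 0 + 4 ≤ l.getD (2 * j + 1) 0)).card

/-- The generating function `∑_λ wt_λ q^{|λ|}`, the sum over partitions λ into odd
parts having exactly `2k` parts. -/
noncomputable def lhs (k : ℕ) : PowerSeries ℚ :=
  PowerSeries.mk fun N =>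
    ((∑ c ∈ Finset.univ.filter
        (fun c : Nat.Partition N =>
          (∀ p ∈ c.parts, Odd p) ∧ Multiset.card c.parts = 2 * k),
        wtOdd c : ℕ) : ℚ)

theorem prod_range_two_mul {M : Type*} [CommMonoid M] (f : ℕ → M) (n : ℕ) :
    ∏ j ∈ Finset.range (2 * n), f j = ∏ m ∈ Finset.range n, f (2 * m) * f (2 * m + 1) := by
  induction n with
  | zero => simp
  | succ n ih =>
    rw [Nat.mul_succ, Finset.prod_range_succ, Finset.prod_range_succ, ih, Finset.prod_range_succ,
      mul_assoc]

theorem prod_Icc_one_eq_prod_range {M : Type*} [CommMonoid M] (f : ℕ → M) (n : ℕ) :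
    ∏ j ∈ Finset.Icc 1 n, f j = ∏ m ∈ Finset.range n, f (m + 1) := by
  rw [← Finset.Ico_add_one_right_eq_Icc, Finset.prod_Ico_eq_prod_range, Nat.add_sub_cancel]
  simp only [add_comm]

theorem sum_Ico_tsub_succ_of_antitone {f : ℕ → ℕ} (hf : Antitone f) {a b : ℕ} (hab : a ≤ b) :
    ∑ i ∈ Finset.Ico a b, (f i - f (i + 1)) = f a - f b := by
  induction b, hab using Nat.le_induction with
  | base => simp
  | succ b hab ih =>
    rw [Finset.sum_Ico_succ_top hab, ih]
    have : f (b + 1) ≤ f b := hf b.le_succ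
    have : f b ≤ f a := hf hab
    omega

theorem sum_range_sum_Ico_eq_sum_succ_mul (e : ℕ → ℕ) (n : ℕ) :
    ∑ i ∈ Finset.range n, ∑ j ∈ Finset.Ico i n, e j = ∑ j ∈ Finset.range n, (j + 1) * e j := by
  rw [Finset.range_eq_Ico, Finset.sum_Ico_Ico_comm]
  simp

def pairWeight (d : ℕ) : ℕ := 3 ^ (if d = 1 then 1 else 0) * 4 ^ (if 2 ≤ d then 1 else 0)

/-- The factor of the weight contributed by the gap `e_j = d`: for `2k` parts, `wt` pairs only the
gaps `e_1, e_3, …, e_{2k-3}`. -/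
def gapWeight (k j d : ℕ) : ℕ := if j % 2 = 1 ∧ j + 1 < 2 * k then pairWeight d else 1

section Series

variable {R : Type*} [CommRing R]

theorem coeff_prod_expand {ι : Type*} [DecidableEq ι] (s : Finset ι) (a : ι → ℕ)
    (ha : ∀ i, a i ≠ 0) (f : ι → R⟦X⟧) (N : ℕ) :
    coeff N (∏ i ∈ s, expand (a i) (ha i) (f i)) =
      ∑ l ∈ (s.finsuppAntidiag N).filter (fun l : ι →₀ ℕ => ∀ i ∈ s, a i ∣ l i),
        ∏ i ∈ s, coeff (l i / a i) (f i) := by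
  simp_rw [coeff_prod, coeff_expand, Finset.prod_ite_zero, Finset.sum_filter]

theorem one_add_X_sq_mul_mk_one : ((1 + X) ^ 2 * mk 1 : R⟦X⟧) = mk fun d => (pairWeight d : R) := by
  ext d
  rw [show ((1 + X) ^ 2 * mk 1 : R⟦X⟧) = mk 1 + (X * mk 1 + X * mk 1) + X ^ 2 * mk 1 by ring]
  rcases d with _ | _ | d <;> norm_num [pairWeight, coeff_X_pow_mul', coeff_succ_X_mul]

theorem mk_gapWeight (k j : ℕ) :
    (mk fun d => (gapWeight k j d : R)) =
      if j % 2 = 1 ∧ j + 1 < 2 * k then (1 + X) ^ 2 * mk 1 else mk 1 := by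
  unfold gapWeight
  split_ifs
  · exact one_add_X_sq_mul_mk_one.symm
  · simp only [Nat.cast_one]
    rfl

variable {K : Type*} [Field K]

theorem expand_mk_one (n : ℕ) (hn : n ≠ 0) : expand n hn (mk 1 : K⟦X⟧) = (1 - X ^ n)⁻¹ := by
  rw [PowerSeries.eq_inv_iff_mul_eq_one (by simp [zero_pow hn]), ← expand_X n hn,
    ← map_one (expand n hn), ← map_sub, ← map_mul, mk_one_mul_one_sub_eq_one, map_one]

theorem expand_one_add_X_sq_mul_mk_one (n : ℕ) (hn : n ≠ 0) :
    expand n hn ((1 + X) ^ 2 * mk 1 : K⟦X⟧) = (1 + X ^ n) ^ 2 * (1 - X ^ n)⁻¹ := by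
  rw [map_mul, map_pow, map_add, map_one, expand_X, expand_mk_one]

theorem expand_mk_gapWeight (k j : ℕ) :
    expand (2 * j + 2) (Nat.succ_ne_zero _) (mk fun d => (gapWeight k j d : K)) =
      if j % 2 = 1 ∧ j + 1 < 2 * k then (1 + X ^ (2 * j + 2)) ^ 2 * (1 - X ^ (2 * j + 2))⁻¹
      else (1 - X ^ (2 * j + 2))⁻¹ := by
  rw [mk_gapWeight]
  split_ifs
  · exact expand_one_add_X_sq_mul_mk_one _ _
  · exact expand_mk_one _ _

theorem expand_mk_gapWeight_two_mul (k m : ℕ) :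
    expand (2 * (2 * m) + 2) (Nat.succ_ne_zero _) (mk fun d => (gapWeight k (2 * m) d : K)) =
      (1 - X ^ (4 * (m + 1) - 2))⁻¹ := by
  rw [expand_mk_gapWeight, if_neg (by omega), show 4 * (m + 1) - 2 = 2 * (2 * m) + 2 by omega]

theorem expand_mk_gapWeight_two_mul_add_one {k m : ℕ} (hm : m + 1 < k) :
    expand (2 * (2 * m + 1) + 2) (Nat.succ_ne_zero _)
        (mk fun d => (gapWeight k (2 * m + 1) d : K)) =
      (1 + X ^ (4 * (m + 1))) ^ 2 * (1 - X ^ (4 * (m + 1)))⁻¹ := by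
  rw [expand_mk_gapWeight, if_pos (by omega), show 2 * (2 * m + 1) + 2 = 4 * (m + 1) by ring]

theorem expand_mk_gapWeight_last (k : ℕ) :
    expand (2 * (2 * k + 1) + 2) (Nat.succ_ne_zero _)
        (mk fun d => (gapWeight (k + 1) (2 * k + 1) d : K)) = (1 - X ^ (4 * (k + 1)))⁻¹ := by
  rw [expand_mk_gapWeight, if_neg (by omega), show 2 * (2 * k + 1) + 2 = 4 * (k + 1) by ring]

end Series

theorem rhs_eq_X_pow_mul_prod_expand (k : ℕ) (hk : 1 ≤ k) :
    X ^ (2 * k) * (1 - X ^ (4 * k) : PowerSeries ℚ)⁻¹ *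
        (∏ j ∈ Finset.Icc 1 k, (1 - X ^ (4 * j - 2) : PowerSeries ℚ)⁻¹) *
        ∏ j ∈ Finset.Icc 1 (k - 1),
          (1 + X ^ (4 * j)) ^ 2 * (1 - X ^ (4 * j) : PowerSeries ℚ)⁻¹ =
      X ^ (2 * k) * ∏ j ∈ Finset.range (2 * k),
        expand (2 * j + 2) (Nat.succ_ne_zero _) (mk fun d => (gapWeight k j d : ℚ)) := by
  obtain ⟨k, rfl⟩ : ∃ k', k = k' + 1 := ⟨k - 1, by omega⟩
  conv_rhs => rw [prod_range_two_mul, Finset.prod_mul_distrib, Finset.prod_range_succ (fun m =>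
      expand (2 * (2 * m + 1) + 2) (Nat.succ_ne_zero _)
        (mk fun d => (gapWeight (k + 1) (2 * m + 1) d : ℚ))),
    Finset.prod_congr rfl fun m _ => expand_mk_gapWeight_two_mul (k + 1) m,
    Finset.prod_congr rfl fun m hm => expand_mk_gapWeight_two_mul_add_one (by simpa using hm),
    expand_mk_gapWeight_last]
  rw [prod_Icc_one_eq_prod_range, prod_Icc_one_eq_prod_range, Nat.add_sub_cancel]
  ring

section Gaps

variable {N : ℕ}

noncomputable def sortedParts (c : Nat.Partition N) : List ℕ :=
  (Multiset.sort c.parts (· ≤ ·)).reverse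

theorem pairwise_sortedParts (c : Nat.Partition N) : (sortedParts c).Pairwise (· ≥ ·) := by
  rw [sortedParts, List.pairwise_reverse]
  exact Multiset.pairwise_sort _ _

theorem length_sortedParts (c : Nat.Partition N) :
    (sortedParts c).length = Multiset.card c.parts := by
  simp [sortedParts]

theorem coe_sortedParts (c : Nat.Partition N) : (sortedParts c : Multiset ℕ) = c.parts := by
  rw [sortedParts, Multiset.coe_reverse, Multiset.sort_eq]

/-- `μ_i` (indexed from `0`), and `0` past the last part. -/
noncomputable def halfPart (c : Nat.Partition N) (i : ℕ) : ℕ := (sortedParts c).getD i 0 / 2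

noncomputable def partGap (c : Nat.Partition N) (j : ℕ) : ℕ := halfPart c j - halfPart c (j + 1)

theorem antitone_halfPart (c : Nat.Partition N) : Antitone (halfPart c) := by
  refine antitone_nat_of_succ_le fun i => Nat.div_le_div_right ?_
  by_cases hi : i + 1 < (sortedParts c).length
  · rw [List.getD_eq_getElem _ _ hi, List.getD_eq_getElem _ _ (by omega)]
    exact List.pairwise_iff_getElem.mp (pairwise_sortedParts c) i (i + 1) _ hi (by omega)
  · rw [List.getD_eq_default _ _ (by omega)]
    exact Nat.zero_le _

theorem halfPart_eq_zero (c : Nat.Partition N) {i : ℕ} (hi : Multiset.card c.parts ≤ i) :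
    halfPart c i = 0 := by
  rw [halfPart, List.getD_eq_default _ _ (by rwa [length_sortedParts])]

theorem partGap_eq_zero (c : Nat.Partition N) {j : ℕ} (hj : Multiset.card c.parts ≤ j) :
    partGap c j = 0 := by
  rw [partGap, halfPart_eq_zero c hj, Nat.zero_sub]

theorem getD_sortedParts (c : Nat.Partition N) (hodd : ∀ p ∈ c.parts, Odd p) {i : ℕ}
    (hi : i < Multiset.card c.parts) : (sortedParts c).getD i 0 = 2 * halfPart c i + 1 := by
  have hi' : i < (sortedParts c).length := by rwa [length_sortedParts]
  have hmem : (sortedParts c)[i] ∈ c.parts := by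
    rw [← coe_sortedParts, Multiset.mem_coe]
    exact List.getElem_mem hi'
  have := Nat.odd_iff.mp (hodd _ hmem)
  rw [halfPart, List.getD_eq_getElem _ _ hi']
  omega

theorem sum_Ico_partGap (c : Nat.Partition N) {i : ℕ} (hi : i ≤ Multiset.card c.parts) :
    ∑ j ∈ Finset.Ico i (Multiset.card c.parts), partGap c j = halfPart c i := by
  simp only [partGap]
  rw [sum_Ico_tsub_succ_of_antitone (antitone_halfPart c) hi,
    halfPart_eq_zero c le_rfl, Nat.sub_zero]

def oddPartsOfGaps (n : ℕ) (e : ℕ → ℕ) : List ℕ :=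
  List.ofFn fun i : Fin n => 2 * ∑ j ∈ Finset.Ico (i : ℕ) n, e j + 1

theorem length_oddPartsOfGaps (n : ℕ) (e : ℕ → ℕ) : (oddPartsOfGaps n e).length = n := by
  simp [oddPartsOfGaps]

theorem getD_oddPartsOfGaps (n : ℕ) (e : ℕ → ℕ) (i : ℕ) :
    (oddPartsOfGaps n e).getD i 0 = if i < n then 2 * ∑ j ∈ Finset.Ico i n, e j + 1 else 0 := by
  split_ifs with hi
  · rw [List.getD_eq_getElem _ _ (by rwa [length_oddPartsOfGaps])]
    simp [oddPartsOfGaps]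
  · rw [List.getD_eq_default _ _ (by rw [length_oddPartsOfGaps]; omega)]

theorem pairwise_oddPartsOfGaps (n : ℕ) (e : ℕ → ℕ) : (oddPartsOfGaps n e).Pairwise (· ≥ ·) := by
  rw [oddPartsOfGaps, List.pairwise_ofFn]
  intro i j hij
  have := Finset.sum_le_sum_of_subset (f := e) (Finset.Ico_subset_Ico_left hij.le (b := n))
  omega

theorem sum_oddPartsOfGaps (n : ℕ) (e : ℕ → ℕ) :
    (oddPartsOfGaps n e).sum = n + ∑ j ∈ Finset.range n, (2 * j + 2) * e j := by
  rw [oddPartsOfGaps, List.sum_ofFn,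
    Fin.sum_univ_eq_sum_range (fun i => 2 * ∑ j ∈ Finset.Ico i n, e j + 1),
    Finset.sum_add_distrib, ← Finset.mul_sum, sum_range_sum_Ico_eq_sum_succ_mul, Finset.mul_sum]
  simp only [Finset.sum_const, Finset.card_range, smul_eq_mul, mul_one]
  rw [add_comm]
  congr 1
  exact Finset.sum_congr rfl fun j _ => by ring

def partitionOfGaps (n : ℕ) (e : ℕ → ℕ) (h : (oddPartsOfGaps n e).sum = N) : Nat.Partition N where
  parts := oddPartsOfGaps n e
  parts_pos hp := by
    obtain ⟨i, rfl⟩ := List.mem_ofFn.mp (Multiset.mem_coe.mp hp)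
    omega
  parts_sum := by rwa [Multiset.sum_coe]

theorem parts_partitionOfGaps (n : ℕ) (e : ℕ → ℕ) (h : (oddPartsOfGaps n e).sum = N) :
    (partitionOfGaps n e h).parts = oddPartsOfGaps n e :=
  rfl

theorem card_partitionOfGaps (n : ℕ) (e : ℕ → ℕ) (h : (oddPartsOfGaps n e).sum = N) :
    Multiset.card (partitionOfGaps n e h).parts = n := by
  rw [parts_partitionOfGaps, Multiset.coe_card, length_oddPartsOfGaps]

theorem odd_of_mem_partitionOfGaps (n : ℕ) (e : ℕ → ℕ) (h : (oddPartsOfGaps n e).sum = N) :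
    ∀ p ∈ (partitionOfGaps n e h).parts, Odd p := fun _ hp => by
  obtain ⟨i, rfl⟩ := List.mem_ofFn.mp (Multiset.mem_coe.mp hp)
  exact odd_two_mul_add_one _

theorem sortedParts_partitionOfGaps (n : ℕ) (e : ℕ → ℕ) (h : (oddPartsOfGaps n e).sum = N) :
    sortedParts (partitionOfGaps n e h) = oddPartsOfGaps n e := by
  have hsorted : (oddPartsOfGaps n e).reverse.Pairwise (· ≤ ·) := by
    simpa [List.pairwise_reverse] using pairwise_oddPartsOfGaps n e
  rw [sortedParts, parts_partitionOfGaps, ← Multiset.coe_reverse, Multiset.coe_sort,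
    List.mergeSort_of_pairwise (by simpa using hsorted), List.reverse_reverse]

theorem halfPart_partitionOfGaps (n : ℕ) (e : ℕ → ℕ) (h : (oddPartsOfGaps n e).sum = N)
    (i : ℕ) : halfPart (partitionOfGaps n e h) i = ∑ j ∈ Finset.Ico i n, e j := by
  rw [halfPart, sortedParts_partitionOfGaps, getD_oddPartsOfGaps]
  split_ifs with hi
  · omega
  · rw [Finset.Ico_eq_empty (by omega), Finset.sum_empty, Nat.zero_div]

theorem partGap_partitionOfGaps (n : ℕ) (e : ℕ → ℕ) (h : (oddPartsOfGaps n e).sum = N) {j : ℕ}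
    (hj : j < n) : partGap (partitionOfGaps n e h) j = e j := by
  rw [partGap, halfPart_partitionOfGaps, halfPart_partitionOfGaps,
    Finset.sum_eq_sum_Ico_succ_bot hj, Nat.add_sub_cancel]

theorem oddPartsOfGaps_partGap (c : Nat.Partition N) (hodd : ∀ p ∈ c.parts, Odd p) {n : ℕ}
    (hcard : Multiset.card c.parts = n) : oddPartsOfGaps n (partGap c) = sortedParts c := by
  subst hcard
  refine List.ext_getElem (by rw [length_oddPartsOfGaps, length_sortedParts]) fun i hi _ => ?_
  rw [length_oddPartsOfGaps] at hi
  rw [← List.getD_eq_getElem _ 0, ← List.getD_eq_getElem _ 0, getD_oddPartsOfGaps, if_pos hi,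
    sum_Ico_partGap c hi.le, getD_sortedParts c hodd hi]

theorem sum_partGap (c : Nat.Partition N) (hodd : ∀ p ∈ c.parts, Odd p) {n : ℕ}
    (hcard : Multiset.card c.parts = n) :
    n + ∑ j ∈ Finset.range n, (2 * j + 2) * partGap c j = N := by
  rw [← sum_oddPartsOfGaps, oddPartsOfGaps_partGap c hodd hcard, ← Multiset.sum_coe,
    coe_sortedParts, c.parts_sum]

noncomputable def scaledGaps (c : Nat.Partition N) : ℕ →₀ ℕ :=
  Finsupp.onFinset (Finset.range (Multiset.card c.parts)) (fun j => (2 * j + 2) * partGap c j)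
    fun j hj => Finset.mem_range.mpr <| by
      by_contra! h
      exact hj (by rw [partGap_eq_zero c h, mul_zero])

theorem support_scaledGaps_subset (c : Nat.Partition N) :
    (scaledGaps c).support ⊆ Finset.range (Multiset.card c.parts) :=
  Finsupp.support_onFinset_subset

theorem scaledGaps_apply (c : Nat.Partition N) (j : ℕ) :
    scaledGaps c j = (2 * j + 2) * partGap c j :=
  Finsupp.onFinset_apply

end Gaps

section Bijection

noncomputable def oddPartitions (N n : ℕ) : Finset (Nat.Partition N) :=
  Finset.univ.filter fun c => (∀ p ∈ c.parts, Odd p) ∧ Multiset.card c.parts = n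

theorem mem_oddPartitions {N n : ℕ} {c : Nat.Partition N} :
    c ∈ oddPartitions N n ↔ (∀ p ∈ c.parts, Odd p) ∧ Multiset.card c.parts = n := by
  simp [oddPartitions]

def scaledGapVectors (n M : ℕ) : Finset (ℕ →₀ ℕ) :=
  ((Finset.range n).finsuppAntidiag M).filter fun l => ∀ j ∈ Finset.range n, 2 * j + 2 ∣ l j

variable {n M : ℕ} {l : ℕ →₀ ℕ}

theorem mem_scaledGapVectors :
    l ∈ scaledGapVectors n M ↔ (∑ j ∈ Finset.range n, l j = M ∧ l.support ⊆ Finset.range n) ∧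
      ∀ j ∈ Finset.range n, 2 * j + 2 ∣ l j := by
  rw [scaledGapVectors, Finset.mem_filter, Finset.mem_finsuppAntidiag]

theorem apply_eq_zero_of_mem_scaledGapVectors (hl : l ∈ scaledGapVectors n M) {j : ℕ}
    (hj : n ≤ j) : l j = 0 :=
  Finsupp.notMem_support_iff.mp fun h =>
    (Finset.mem_range.mp ((mem_scaledGapVectors.mp hl).1.2 h)).not_ge hj

theorem mul_div_cancel_of_mem_scaledGapVectors (hl : l ∈ scaledGapVectors n M) (j : ℕ) :
    (2 * j + 2) * (l j / (2 * j + 2)) = l j := by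
  by_cases hj : j < n
  · exact Nat.mul_div_cancel' ((mem_scaledGapVectors.mp hl).2 j (Finset.mem_range.mpr hj))
  · rw [apply_eq_zero_of_mem_scaledGapVectors hl (not_lt.mp hj), Nat.zero_div, mul_zero]

theorem sum_oddPartsOfGaps_of_mem_scaledGapVectors (hl : l ∈ scaledGapVectors n M) :
    (oddPartsOfGaps n fun j => l j / (2 * j + 2)).sum = n + M := by
  rw [sum_oddPartsOfGaps,
    Finset.sum_congr rfl fun j _ => mul_div_cancel_of_mem_scaledGapVectors hl j,
    (mem_scaledGapVectors.mp hl).1.1]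

theorem sum_oddPartitions_eq_sum_scaledGapVectors {R : Type*} [CommSemiring R]
    (g : ℕ → ℕ → R) :
    ∑ c ∈ oddPartitions (n + M) n, ∏ j ∈ Finset.range n, g j (partGap c j) =
      ∑ l ∈ scaledGapVectors n M, ∏ j ∈ Finset.range n, g j (l j / (2 * j + 2)) := by
  have hdiv (c : Nat.Partition (n + M)) (j : ℕ) : scaledGaps c j / (2 * j + 2) = partGap c j := by
    rw [scaledGaps_apply, Nat.mul_div_cancel_left _ (by omega)]
  refine Finset.sum_bij' (fun c _ => scaledGaps c)
    (fun l hl => partitionOfGaps n (fun j => l j / (2 * j + 2))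
      (sum_oddPartsOfGaps_of_mem_scaledGapVectors hl)) ?_ ?_ ?_ ?_ ?_
  · intro c hc
    obtain ⟨hodd, hcard⟩ := mem_oddPartitions.mp hc
    have hsupp : (scaledGaps c).support ⊆ Finset.range n :=
      (support_scaledGaps_subset c).trans (Finset.range_subset_range.mpr hcard.le)
    have hsum := sum_partGap c hodd hcard
    simp only [← scaledGaps_apply] at hsum
    exact mem_scaledGapVectors.mpr
      ⟨⟨by omega, hsupp⟩, fun j _ => (scaledGaps_apply c j).symm ▸ Dvd.intro _ rfl⟩
  · intro l _
    exact mem_oddPartitions.mpr ⟨odd_of_mem_partitionOfGaps _ _ _, card_partitionOfGaps _ _ _⟩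
  · intro c hc
    obtain ⟨hodd, hcard⟩ := mem_oddPartitions.mp hc
    refine Nat.Partition.ext ?_
    simp only [hdiv]
    rw [parts_partitionOfGaps, oddPartsOfGaps_partGap c hodd hcard, coe_sortedParts]
  · intro l hl
    ext j
    rw [scaledGaps_apply]
    by_cases hj : j < n
    · rw [partGap_partitionOfGaps _ _ _ hj, mul_div_cancel_of_mem_scaledGapVectors hl j]
    · rw [partGap_eq_zero _ (by rw [card_partitionOfGaps]; omega), mul_zero,
        apply_eq_zero_of_mem_scaledGapVectors hl (not_lt.mp hj)]
  · intro c _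
    simp only [hdiv]

theorem oddPartitions_eq_empty {N n : ℕ} (h : N < n) : oddPartitions N n = ∅ := by
  refine Finset.filter_eq_empty_iff.mpr fun c _ ⟨_, hcard⟩ => ?_
  have := Multiset.card_nsmul_le_sum fun p hp => c.parts_pos hp
  rw [c.parts_sum, hcard, smul_eq_mul] at this
  omega

end Bijection

section Weights

theorem prod_pairWeight {ι : Type*} (s : Finset ι) (g : ι → ℕ) :
    ∏ m ∈ s, pairWeight (g m) = 3 ^ (s.filter (g · = 1)).card * 4 ^ (s.filter (2 ≤ g ·)).card := by
  simp only [pairWeight, Finset.prod_mul_distrib, Finset.prod_pow_eq_pow_sum, Finset.card_filter]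

theorem prod_gapWeight (k : ℕ) (hk : 1 ≤ k) (e : ℕ → ℕ) :
    ∏ j ∈ Finset.range (2 * k), gapWeight k j (e j) =
      ∏ m ∈ Finset.range (k - 1), pairWeight (e (2 * m + 1)) := by
  obtain ⟨k, rfl⟩ : ∃ k', k = k' + 1 := ⟨k - 1, by omega⟩
  rw [prod_range_two_mul, Finset.prod_range_succ, Nat.add_sub_cancel]
  refine (congrArg₂ (· * ·) (Finset.prod_congr rfl fun m hm => ?_) ?_).trans (mul_one _)
  · have := Finset.mem_range.mp hm
    rw [gapWeight, gapWeight, if_neg (by omega), if_pos (by omega), one_mul]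
  · rw [gapWeight, gapWeight, if_neg (by omega), if_neg (by omega), one_mul]

variable {N : ℕ}

theorem wtOdd_eq_prod_gapWeight {k : ℕ} (hk : 1 ≤ k) (c : Nat.Partition N)
    (hodd : ∀ p ∈ c.parts, Odd p) (hcard : Multiset.card c.parts = 2 * k) :
    wtOdd c = ∏ j ∈ Finset.range (2 * k), gapWeight k j (partGap c j) := by
  have hsorted : (Multiset.sort c.parts (· ≤ ·)).reverse = sortedParts c := rfl
  have hlen : (sortedParts c).length = 2 * k := (length_sortedParts c).trans hcard
  simp only [wtOdd, hsorted, hlen, Nat.mul_mod_right, Nat.mul_div_cancel_left _ two_pos,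
    prod_gapWeight k hk, prod_pairWeight]
  rw [if_neg zero_ne_one]
  have hgap {m : ℕ} (hm : m ∈ Finset.range (k - 1)) :
      (sortedParts c).getD (2 * m + 1) 0 = 2 * halfPart c (2 * m + 1) + 1 ∧
        (sortedParts c).getD (2 * m + 2) 0 = 2 * halfPart c (2 * m + 2) + 1 ∧
        halfPart c (2 * m + 2) ≤ halfPart c (2 * m + 1) := by
    have := Finset.mem_range.mp hm
    exact ⟨getD_sortedParts c hodd (by omega), getD_sortedParts c hodd (by omega),
      antitone_halfPart c (by omega)⟩
  -- the parts are odd, so parts differing by `2` (resp. `≥ 4`) have halves differing by `1` (`≥ 2`)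
  congr 3 <;> refine Finset.filter_congr fun m hm => ?_ <;> have := hgap hm <;>
    simp only [partGap, add_assoc, Nat.reduceAdd] <;> omega

end Weights

theorem coeff_lhs (k N : ℕ) : coeff N (lhs k) = ∑ c ∈ oddPartitions N (2 * k), (wtOdd c : ℚ) := by
  rw [lhs, coeff_mk, Nat.cast_sum]
  rfl

theorem stmt12 (k : ℕ) (hk : 1 ≤ k) :
    lhs k =
      X ^ (2 * k) * (1 - X ^ (4 * k) : PowerSeries ℚ)⁻¹ *
        (∏ j ∈ Finset.Icc 1 k, (1 - X ^ (4 * j - 2) : PowerSeries ℚ)⁻¹) *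
        ∏ j ∈ Finset.Icc 1 (k - 1),
          (1 + X ^ (4 * j)) ^ 2 * (1 - X ^ (4 * j) : PowerSeries ℚ)⁻¹ := by
  rw [rhs_eq_X_pow_mul_prod_expand k hk]
  ext N
  rw [coeff_lhs, coeff_X_pow_mul']
  split_ifs with hN
  · obtain ⟨M, rfl⟩ := Nat.exists_eq_add_of_le hN
    rw [Nat.add_sub_cancel_left, coeff_prod_expand,
      Finset.sum_congr rfl fun c hc => by
        rw [wtOdd_eq_prod_gapWeight hk c (mem_oddPartitions.mp hc).1 (mem_oddPartitions.mp hc).2,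
          Nat.cast_prod],
      sum_oddPartitions_eq_sum_scaledGapVectors fun j d => (gapWeight k j d : ℚ)]
    simp only [coeff_mk, scaledGapVectors]
  · rw [oddPartitions_eq_empty (not_le.mp hN), Finset.sum_empty]

end Stmt12
end

section
/- Fix nonnegative integers p, q. For a signed Young diagram λ of signature (p,q) with multiplicity function m_λ, let α(λ) be the partition in which each positive integer ℓ occurs with multiplicity min(m_λ(ℓ,+), m_λ(ℓ,−)), let k(λ) be the size of α(λ), and let μ(λ) be the signed Young diagram with multiplicities m_{μ(λ)}(ℓ,ε) = m_λ(ℓ,ε) − min(m_λ(ℓ,+), m_λ(ℓ,−)). Then μ(λ) has signature (p − k(λ), q − k(λ)), and the map λ ↦ (α(λ), μ(λ)) is a bijection from the set of signed Young diagrams of signature (p,q) onto the set of pairs (α, μ) in which α is a partition of some k ≥ 0 and μ is a signed Young diagram of signature (p − k, q − k) satisfying min(m_μ(ℓ,+), m_μ(ℓ,−)) = 0 for every ℓ. -/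
/-!
Statement 13: the bijection λ ↦ (α(λ), μ(λ)) from signed Young diagrams of signature
(p,q) onto pairs of a partition α and a signed Young diagram μ of signature
(p−|α|, q−|α|) with min(m_μ(ℓ,+), m_μ(ℓ,−)) = 0 for every ℓ.
-/

namespace Stmt13

/-- The number of `+` boxes in a row of length `ℓ` whose leftmost box has sign `b`. -/
def rowPlus (ℓ : ℕ) (b : Bool) : ℕ := if b then (ℓ + 1) / 2 else ℓ / 2

def sigPlus (m : (ℕ × Bool) →₀ ℕ) : ℕ := m.sum fun p k => k * rowPlus p.1 p.2

def sigMinus (m : (ℕ × Bool) →₀ ℕ) : ℕ := m.sum fun p k => k * rowPlus p.1 (!p.2)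

/-- The size of a partition (a finitely supported function from positive integers to
ℕ): the sum of the parts counted with multiplicity. -/
def psize (α : ℕ →₀ ℕ) : ℕ := α.sum fun ℓ k => ℓ * k

/-- `α(λ)`: each `ℓ` occurs with multiplicity `min (m_λ(ℓ,+)) (m_λ(ℓ,−))`. -/
noncomputable def alphaMap (m : (ℕ × Bool) →₀ ℕ) : ℕ →₀ ℕ :=
  Finsupp.onFinset (m.support.image Prod.fst)
    (fun ℓ => min (m (ℓ, true)) (m (ℓ, false)))
    (fun ℓ h => Finset.mem_image.2
      ⟨(ℓ, true), Finsupp.mem_support_iff.2 fun h0 => h (by simp [h0]), rfl⟩)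

/-- `μ(λ)`: multiplicities `m_λ(ℓ,ε) − min (m_λ(ℓ,+)) (m_λ(ℓ,−))`. -/
noncomputable def muMap (m : (ℕ × Bool) →₀ ℕ) : (ℕ × Bool) →₀ ℕ :=
  Finsupp.onFinset m.support
    (fun p => m p - min (m (p.1, true)) (m (p.1, false)))
    (fun p h => Finsupp.mem_support_iff.2 fun h0 => h (by simp [h0]))

/-- Inverse construction: add `α ℓ` rows of length `ℓ` of each sign back to `μ`. -/
noncomputable def addBack (α : ℕ →₀ ℕ) (μ : (ℕ × Bool) →₀ ℕ) : (ℕ × Bool) →₀ ℕ :=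
  Finsupp.onFinset ((μ.support.image Prod.fst ∪ α.support) ×ˢ Finset.univ)
    (fun p => μ p + α p.1)
    (fun p h => by
      simp only [Finset.mem_product, Finset.mem_univ, and_true, Finset.mem_union,
        Finset.mem_image]
      by_cases hμ : μ p = 0
      · exact Or.inr (Finsupp.mem_support_iff.2 fun h0 => h (by simp [hμ, h0]))
      · exact Or.inl ⟨p, Finsupp.mem_support_iff.2 hμ, rfl⟩)

@[simp] lemma addBack_apply (α : ℕ →₀ ℕ) (μ : (ℕ × Bool) →₀ ℕ) (p : ℕ × Bool) :
    addBack α μ p = μ p + α p.1 := rfl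

@[simp] lemma alphaMap_apply (m : (ℕ × Bool) →₀ ℕ) (ℓ : ℕ) :
    alphaMap m ℓ = min (m (ℓ, true)) (m (ℓ, false)) := rfl

@[simp] lemma muMap_apply (m : (ℕ × Bool) →₀ ℕ) (p : ℕ × Bool) :
    muMap m p = m p - min (m (p.1, true)) (m (p.1, false)) := rfl

lemma recon (m : (ℕ × Bool) →₀ ℕ) : addBack (alphaMap m) (muMap m) = m := by
  ext p
  obtain ⟨ℓ, b⟩ := p
  simp only [addBack_apply, muMap_apply, alphaMap_apply]
  cases b <;> omega

lemma sum_addBack (r : ℕ → Bool → ℕ) (hr : ∀ ℓ, r ℓ true + r ℓ false = ℓ)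
    (α : ℕ →₀ ℕ) (μ : (ℕ × Bool) →₀ ℕ) :
    ((addBack α μ).sum fun p k => k * r p.1 p.2)
      = (μ.sum fun p k => k * r p.1 p.2) + psize α := by
  set T := μ.support.image Prod.fst ∪ α.support with hT
  have h1 : ((addBack α μ).sum fun p k => k * r p.1 p.2)
      = ∑ p ∈ T ×ˢ Finset.univ, (μ p + α p.1) * r p.1 p.2 := by
    exact Finsupp.sum_of_support_subset _ Finsupp.support_onFinset_subset _
      (fun i _ => by simp)
  have h2 : (μ.sum fun p k => k * r p.1 p.2)
      = ∑ p ∈ T ×ˢ Finset.univ, μ p * r p.1 p.2 := by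
    refine Finsupp.sum_of_support_subset _ (fun p hp => ?_) _ (fun i _ => by simp)
    exact Finset.mem_product.2
      ⟨Finset.mem_union_left _ (Finset.mem_image_of_mem _ hp), Finset.mem_univ _⟩
  have h3 : psize α = ∑ ℓ ∈ T, ℓ * α ℓ := by
    refine Finsupp.sum_of_support_subset _ (fun ℓ hℓ => Finset.mem_union_right _ hℓ) _
      (fun i _ => by simp)
  rw [h1, h2, h3, Finset.sum_product, Finset.sum_product, ← Finset.sum_add_distrib]
  refine Finset.sum_congr rfl fun ℓ _ => ?_
  rw [Fintype.sum_bool, Fintype.sum_bool]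
  have huv : r ℓ true + r ℓ false = ℓ := hr ℓ
  have : (μ (ℓ, true) + α ℓ) * r ℓ true + (μ (ℓ, false) + α ℓ) * r ℓ false
      = (μ (ℓ, true) * r ℓ true + μ (ℓ, false) * r ℓ false)
        + (r ℓ true + r ℓ false) * α ℓ := by ring
  rw [this, huv]

lemma sigPlus_addBack (α : ℕ →₀ ℕ) (μ : (ℕ × Bool) →₀ ℕ) :
    sigPlus (addBack α μ) = sigPlus μ + psize α :=
  sum_addBack (fun ℓ b => rowPlus ℓ b) (fun ℓ => by simp [rowPlus]; omega) α μ

lemma sigMinus_addBack (α : ℕ →₀ ℕ) (μ : (ℕ × Bool) →₀ ℕ) :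
    sigMinus (addBack α μ) = sigMinus μ + psize α :=
  sum_addBack (fun ℓ b => rowPlus ℓ (!b)) (fun ℓ => by simp [rowPlus]; omega) α μ

lemma sigPlus_decomp (m : (ℕ × Bool) →₀ ℕ) :
    sigPlus m = sigPlus (muMap m) + psize (alphaMap m) := by
  conv_lhs => rw [← recon m]
  exact sigPlus_addBack _ _

lemma sigMinus_decomp (m : (ℕ × Bool) →₀ ℕ) :
    sigMinus m = sigMinus (muMap m) + psize (alphaMap m) := by
  conv_lhs => rw [← recon m]
  exact sigMinus_addBack _ _

theorem stmt13 (p q : ℕ) :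
    Set.BijOn (fun m => (alphaMap m, muMap m))
      {m : (ℕ × Bool) →₀ ℕ |
        (∀ b, m (0, b) = 0) ∧ sigPlus m = p ∧ sigMinus m = q}
      {x : (ℕ →₀ ℕ) × ((ℕ × Bool) →₀ ℕ) |
        x.1 0 = 0 ∧ (∀ b, x.2 (0, b) = 0) ∧
        (∀ ℓ, min (x.2 (ℓ, true)) (x.2 (ℓ, false)) = 0) ∧
        sigPlus x.2 + psize x.1 = p ∧ sigMinus x.2 + psize x.1 = q} := by
  refine ⟨?_, ?_, ?_⟩
  · -- MapsTo
    rintro m ⟨hm0, hp, hq⟩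
    refine ⟨by simp [hm0], fun b => by simp [hm0], fun ℓ => by simp only [muMap_apply]; omega,
      ?_, ?_⟩
    · rw [← sigPlus_decomp]; exact hp
    · rw [← sigMinus_decomp]; exact hq
  · -- InjOn
    intro m1 _ m2 _ heq
    have h1 := congrArg Prod.fst heq
    have h2 := congrArg Prod.snd heq
    simp only at h1 h2
    rw [← recon m1, h1, h2, recon m2]
  · -- SurjOn
    rintro ⟨α, μ⟩ ⟨hα0, hμ0, hmin, hp, hq⟩
    dsimp only at hα0 hμ0 hmin hp hq
    refine ⟨addBack α μ, ⟨fun b => by simp [hμ0, hα0], ?_, ?_⟩, ?_⟩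
    · rw [sigPlus_addBack]; exact hp
    · rw [sigMinus_addBack]; exact hq
    · have hA : alphaMap (addBack α μ) = α := by
        ext ℓ
        have := hmin ℓ
        simp only [alphaMap_apply, addBack_apply]
        omega
      have hM : muMap (addBack α μ) = μ := by
        ext p
        obtain ⟨ℓ, b⟩ := p
        have := hmin ℓ
        simp only [muMap_apply, addBack_apply]
        cases b <;> omega
      simp [hA, hM]

end Stmt13
end

section
/- Fix nonnegative integers p, q. Call a signed Young diagram symplectic-II of signature (2p,2q) if it has signature (2p,2q), m(ℓ,+) = m(ℓ,−) for every even ℓ, and m(ℓ,+) and m(ℓ,−) are both even for every odd ℓ. For such λ let α(λ) be the partition in which each even ℓ occurs with multiplicity ⌊m_λ(ℓ,+)/2⌋ and each odd ℓ occurs with multiplicity min(m_λ(ℓ,+), m_λ(ℓ,−))/2, let k(λ) = |α(λ)|, and let μ(λ) have multiplicities m_λ(ℓ,ε) − 2·(multiplicity of ℓ in α(λ)). Then λ ↦ (α(λ), μ(λ)) is a bijection from the set of symplectic-II diagrams of signature (2p,2q) onto the set of pairs (α, μ) in which α is a partition of some k ≥ 0 and μ is a symplectic-II diagram of signature (2p−2k,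 2q−2k) satisfying: m_μ(ℓ,+) = m_μ(ℓ,−) ≤ 1 for every even ℓ, and min(m_μ(ℓ,+), m_μ(ℓ,−)) = 0 for every odd ℓ. -/
/-!
Statement 14: the bijection λ ↦ (α(λ), μ(λ)) from symplectic-II signed Young diagrams
of signature (2p,2q) onto pairs of a partition α and a reduced symplectic-II diagram μ
of signature (2p−2|α|, 2q−2|α|).
-/

open scoped Classical

namespace Stmt14

/-- The number of `+` boxes in a row of length `ℓ` whose leftmost box has sign `b`. -/
def rowPlus (ℓ : ℕ) (b : Bool) : ℕ := if b then (ℓ + 1) / 2 else ℓ / 2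

def sigPlus (m : (ℕ × Bool) →₀ ℕ) : ℕ := m.sum fun p k => k * rowPlus p.1 p.2

def sigMinus (m : (ℕ × Bool) →₀ ℕ) : ℕ := m.sum fun p k => k * rowPlus p.1 (!p.2)

/-- The size of a partition: the sum of the parts counted with multiplicity. -/
def psize (α : ℕ →₀ ℕ) : ℕ := α.sum fun ℓ k => ℓ * k

/-- The multiplicity of `ℓ` in `α(λ)`: `⌊m_λ(ℓ,+)/2⌋` for even `ℓ` and
`min (m_λ(ℓ,+)) (m_λ(ℓ,−)) / 2` for odd `ℓ`. -/
noncomputable def alphaVal (m : (ℕ × Bool) →₀ ℕ) (ℓ : ℕ) : ℕ :=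
  if Even ℓ then m (ℓ, true) / 2 else min (m (ℓ, true)) (m (ℓ, false)) / 2

noncomputable def alphaMap (m : (ℕ × Bool) →₀ ℕ) : ℕ →₀ ℕ :=
  Finsupp.onFinset (m.support.image Prod.fst) (alphaVal m)
    (fun ℓ h => Finset.mem_image.2
      ⟨(ℓ, true), Finsupp.mem_support_iff.2 fun h0 => h (by simp [alphaVal, h0]), rfl⟩)

/-- `μ(λ)`: multiplicities `m_λ(ℓ,ε) − 2·(multiplicity of ℓ in α(λ))`. -/
noncomputable def muMap (m : (ℕ × Bool) →₀ ℕ) : (ℕ × Bool) →₀ ℕ :=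
  Finsupp.onFinset m.support
    (fun x => m x - 2 * alphaVal m x.1)
    (fun x h => Finsupp.mem_support_iff.2 fun h0 => h (by simp [h0]))

/-- The inverse map: `m(ℓ,ε) = μ(ℓ,ε) + 2·α(ℓ)`. -/
noncomputable def build (α : ℕ →₀ ℕ) (μ : (ℕ × Bool) →₀ ℕ) : (ℕ × Bool) →₀ ℕ :=
  Finsupp.onFinset (μ.support ∪ α.support ×ˢ Finset.univ)
    (fun x => μ x + 2 * α x.1)
    (fun x h => by
      rw [Finset.mem_union]
      by_cases hμ : μ x = 0
      · exact Or.inr (Finset.mem_product.2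
          ⟨Finsupp.mem_support_iff.2 (fun h0 => h (by simp [hμ, h0])), Finset.mem_univ _⟩)
      · exact Or.inl (Finsupp.mem_support_iff.2 hμ))

lemma build_apply (α : ℕ →₀ ℕ) (μ : (ℕ × Bool) →₀ ℕ) (x : ℕ × Bool) :
    build α μ x = μ x + 2 * α x.1 := rfl

lemma wsum_build (g : ℕ × Bool → ℕ) (α : ℕ →₀ ℕ) (μ : (ℕ × Bool) →₀ ℕ) :
    (build α μ).sum (fun x k => k * g x)
      = μ.sum (fun x k => k * g x)
        + 2 * α.sum (fun ℓ k => k * (g (ℓ, true) + g (ℓ, false))) := by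
  set s : Finset (ℕ × Bool) := μ.support ∪ α.support ×ˢ Finset.univ with hs
  have h1 : (build α μ).sum (fun x k => k * g x) = ∑ x ∈ s, (μ x + 2 * α x.1) * g x := by
    apply Finsupp.sum_of_support_subset
    · exact Finsupp.support_onFinset_subset
    · intro x _; simp
  have h2 : μ.sum (fun x k => k * g x) = ∑ x ∈ s, μ x * g x := by
    apply Finsupp.sum_of_support_subset
    · exact Finset.subset_union_left
    · intro x _; simp
  have h3 : ∑ x ∈ s, 2 * α x.1 * g x
      = ∑ x ∈ α.support ×ˢ Finset.univ, 2 * α x.1 * g x := by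
    refine (Finset.sum_subset Finset.subset_union_right ?_).symm
    intro x _ hx
    have : α x.1 = 0 := by
      by_contra h0
      exact hx (Finset.mem_product.2 ⟨Finsupp.mem_support_iff.2 h0, Finset.mem_univ _⟩)
    simp [this]
  have h4 : ∑ x ∈ α.support ×ˢ Finset.univ, 2 * α x.1 * g x
      = 2 * α.sum (fun ℓ k => k * (g (ℓ, true) + g (ℓ, false))) := by
    rw [Finset.sum_product, Finsupp.sum, Finset.mul_sum]
    apply Finset.sum_congr rfl
    intro ℓ _
    rw [Fintype.sum_bool]
    ring
  rw [h1, h2]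
  calc ∑ x ∈ s, (μ x + 2 * α x.1) * g x
      = ∑ x ∈ s, (μ x * g x + 2 * α x.1 * g x) := by
        apply Finset.sum_congr rfl; intro x _; ring
    _ = ∑ x ∈ s, μ x * g x + ∑ x ∈ s, 2 * α x.1 * g x := Finset.sum_add_distrib
    _ = _ := by rw [h3, h4]

lemma sigPlus_build (α : ℕ →₀ ℕ) (μ : (ℕ × Bool) →₀ ℕ) :
    sigPlus (build α μ) = sigPlus μ + 2 * psize α := by
  have := wsum_build (fun x => rowPlus x.1 x.2) α μ
  simp only [sigPlus, psize]
  rw [this]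
  congr 2
  apply Finsupp.sum_congr
  intro ℓ _
  show α ℓ * (rowPlus ℓ true + rowPlus ℓ false) = ℓ * α ℓ
  have h : rowPlus ℓ true + rowPlus ℓ false = ℓ := by simp [rowPlus]; omega
  rw [h, mul_comm]

lemma sigMinus_build (α : ℕ →₀ ℕ) (μ : (ℕ × Bool) →₀ ℕ) :
    sigMinus (build α μ) = sigMinus μ + 2 * psize α := by
  have := wsum_build (fun x => rowPlus x.1 (!x.2)) α μ
  simp only [sigMinus, psize]
  rw [this]
  congr 2
  apply Finsupp.sum_congr
  intro ℓ _
  show α ℓ * (rowPlus ℓ false + rowPlus ℓ true) = ℓ * α ℓ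
  have h : rowPlus ℓ false + rowPlus ℓ true = ℓ := by simp [rowPlus]; omega
  rw [h, mul_comm]

lemma alphaVal_le (m : (ℕ × Bool) →₀ ℕ) (hev : ∀ ℓ, Even ℓ → m (ℓ, true) = m (ℓ, false))
    (x : ℕ × Bool) : 2 * alphaVal m x.1 ≤ m x := by
  obtain ⟨ℓ, b⟩ := x
  simp only [alphaVal]
  split_ifs with h
  · cases b
    · rw [← hev ℓ h]; omega
    · omega
  · cases b <;> omega

lemma build_eq (m : (ℕ × Bool) →₀ ℕ)
    (hev : ∀ ℓ, Even ℓ → m (ℓ, true) = m (ℓ, false)) :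
    build (alphaMap m) (muMap m) = m := by
  ext x
  rw [build_apply]
  have h1 : muMap m x = m x - 2 * alphaVal m x.1 := rfl
  have h2 : alphaMap m x.1 = alphaVal m x.1 := rfl
  have h3 := alphaVal_le m hev x
  rw [h1, h2]
  omega

theorem stmt14 (p q : ℕ) :
    Set.BijOn (fun m => (alphaMap m, muMap m))
      {m : (ℕ × Bool) →₀ ℕ |
        (∀ b, m (0, b) = 0) ∧
        (∀ ℓ, Even ℓ → m (ℓ, true) = m (ℓ, false)) ∧
        (∀ ℓ, Odd ℓ → Even (m (ℓ, true)) ∧ Even (m (ℓ, false))) ∧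
        sigPlus m = 2 * p ∧ sigMinus m = 2 * q}
      {x : (ℕ →₀ ℕ) × ((ℕ × Bool) →₀ ℕ) |
        x.1 0 = 0 ∧ (∀ b, x.2 (0, b) = 0) ∧
        (∀ ℓ, Even ℓ → x.2 (ℓ, true) = x.2 (ℓ, false) ∧ x.2 (ℓ, true) ≤ 1) ∧
        (∀ ℓ, Odd ℓ → (Even (x.2 (ℓ, true)) ∧ Even (x.2 (ℓ, false))) ∧
          min (x.2 (ℓ, true)) (x.2 (ℓ, false)) = 0) ∧
        sigPlus x.2 + 2 * psize x.1 = 2 * p ∧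
        sigMinus x.2 + 2 * psize x.1 = 2 * q} := by
  constructor
  · -- MapsTo
    intro m hm
    obtain ⟨h0, hev, hod, hP, hQ⟩ := hm
    have hbuild := build_eq m hev
    have hav : ∀ ℓ, alphaMap m ℓ = alphaVal m ℓ := fun _ => rfl
    have hmv : ∀ x, muMap m x = m x - 2 * alphaVal m x.1 := fun _ => rfl
    refine ⟨?_, ?_, ?_, ?_, ?_, ?_⟩
    · show alphaVal m 0 = 0
      simp [alphaVal, h0 true]
    · intro b
      show m (0, b) - 2 * alphaVal m 0 = 0
      simp [h0 b]
    · intro ℓ hℓ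
      have h1 : alphaVal m ℓ = m (ℓ, true) / 2 := by simp [alphaVal, hℓ]
      have h2 := hev ℓ hℓ
      constructor
      · show m (ℓ, true) - 2 * alphaVal m ℓ = m (ℓ, false) - 2 * alphaVal m ℓ
        rw [h2]
      · show m (ℓ, true) - 2 * alphaVal m ℓ ≤ 1
        rw [h1]; omega
    · intro ℓ hℓ
      have h1 : alphaVal m ℓ = min (m (ℓ, true)) (m (ℓ, false)) / 2 := by
        simp [alphaVal, Nat.not_even_iff_odd.mpr hℓ]
      obtain ⟨hA, hB⟩ := hod ℓ hℓ
      rw [Nat.even_iff] at hA hB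
      show (Even ((muMap m) (ℓ, true)) ∧ Even ((muMap m) (ℓ, false))) ∧
        min ((muMap m) (ℓ, true)) ((muMap m) (ℓ, false)) = 0
      rw [hmv (ℓ, true), hmv (ℓ, false)]
      simp only [Nat.even_iff, h1]
      omega
    · show sigPlus (muMap m) + 2 * psize (alphaMap m) = 2 * p
      rw [← sigPlus_build, hbuild]; exact hP
    · show sigMinus (muMap m) + 2 * psize (alphaMap m) = 2 * q
      rw [← sigMinus_build, hbuild]; exact hQ
  constructor
  · -- InjOn
    intro m1 h1 m2 h2 heq
    simp only [Prod.mk.injEq] at heq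
    calc m1 = build (alphaMap m1) (muMap m1) := (build_eq m1 h1.2.1).symm
      _ = build (alphaMap m2) (muMap m2) := by rw [heq.1, heq.2]
      _ = m2 := build_eq m2 h2.2.1
  · -- SurjOn
    intro x hx
    obtain ⟨α, μ⟩ := x
    simp only [Set.mem_setOf_eq] at hx
    obtain ⟨hα0, hμ0, hevT, hodT, hP, hQ⟩ := hx
    have halpha : alphaMap (build α μ) = α := by
      ext ℓ
      show alphaVal (build α μ) ℓ = α ℓ
      simp only [alphaVal, build_apply]
      split_ifs with h
      · have := (hevT ℓ h).2
        omega
      · have := (hodT ℓ (Nat.not_even_iff_odd.mp h)).2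
        omega
    have hmu : muMap (build α μ) = μ := by
      ext x
      show build α μ x - 2 * alphaVal (build α μ) x.1 = μ x
      have : alphaVal (build α μ) x.1 = α x.1 := by
        have := Finsupp.ext_iff.mp halpha x.1
        exact this
      rw [this, build_apply]
      omega
    refine ⟨build α μ, ⟨?_, ?_, ?_, ?_, ?_⟩, ?_⟩
    · intro b
      rw [build_apply]
      simp [hμ0 b, hα0]
    · intro ℓ hℓ
      rw [build_apply, build_apply]
      simp [(hevT ℓ hℓ).1]
    · intro ℓ hℓ
      obtain ⟨⟨hA, hB⟩, _⟩ := hodT ℓ hℓ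
      rw [Nat.even_iff] at hA hB
      constructor <;> (rw [build_apply, Nat.even_iff]; omega)
    · rw [sigPlus_build]; exact hP
    · rw [sigMinus_build]; exact hQ
    · simp only [Prod.mk.injEq]
      exact ⟨halpha, hmu⟩
end Stmt14
end

section
/- Fix a nonnegative integer n. Call a signed Young diagram orthogonal-III of signature (n,n) if it has signature (n,n), m(ℓ,+) = m(ℓ,−) for every odd ℓ, and m(ℓ,+) and m(ℓ,−) are both even for every even ℓ. For such λ let α(λ) be the partition in which each odd ℓ occurs with multiplicity ⌊m_λ(ℓ,+)/2⌋ and each even ℓ occurs with multiplicity min(m_λ(ℓ,+), m_λ(ℓ,−))/2, let k(λ) = |α(λ)|, and let μ(λ) have multiplicities m_λ(ℓ,ε) − 2·(multiplicity of ℓ in α(λ)). Then λ ↦ (α(λ), μ(λ)) is a bijection from the set of orthogonal-III diagrams of signature (n,n) onto the set of pairs (α, μ) in which α is a partition of some k ≥ 0 and μ is an orthogonal-III diagram of signature (n−2k, n−2k) satisfying: m_μ(ℓ,+) = m_μ(ℓ,−) ≤ 1 for every odd ℓ, and min(m_μ(ℓ,+), m_μ(ℓ,−)) = 0 for every even ℓ.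 -/
/-!
Every orthogonal-III diagram `λ` splits as `μ(λ) + rowPairs α(λ)`, where `rowPairs α` has, for
each part `ℓ` of `α`, two rows `(ℓ,+)` and two rows `(ℓ,−)`. Each such pair of opposite rows has
signature `(ℓ, ℓ)`, so signatures drop by `2|α|`. Conversely `(α, μ) ↦ μ + rowPairs α` inverts
the map: the reducedness of `μ` (at most one row of each sign of an odd length, never rows of
both signs of an even length) is exactly what makes `α(μ + rowPairs α) = α`.
-/

open scoped Classical

namespace Stmt15

/-- The number of `+` boxes in a row of length `ℓ` whose leftmost box has sign `b`. -/
def rowPlus (ℓ : ℕ) (b : Bool) : ℕ := if b then (ℓ + 1) / 2 else ℓ / 2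

def sigPlus (m : (ℕ × Bool) →₀ ℕ) : ℕ := m.sum fun p k => k * rowPlus p.1 p.2

def sigMinus (m : (ℕ × Bool) →₀ ℕ) : ℕ := m.sum fun p k => k * rowPlus p.1 (!p.2)

/-- The size of a partition: the sum of the parts counted with multiplicity. -/
def psize (α : ℕ →₀ ℕ) : ℕ := α.sum fun ℓ k => ℓ * k

/-- The multiplicity of `ℓ` in `α(λ)`: `⌊m_λ(ℓ,+)/2⌋` for odd `ℓ` and
`min (m_λ(ℓ,+)) (m_λ(ℓ,−)) / 2` for even `ℓ`. -/
noncomputable def alphaVal (m : (ℕ × Bool) →₀ ℕ) (ℓ : ℕ) : ℕ :=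
  if Odd ℓ then m (ℓ, true) / 2 else min (m (ℓ, true)) (m (ℓ, false)) / 2

noncomputable def alphaMap (m : (ℕ × Bool) →₀ ℕ) : ℕ →₀ ℕ :=
  Finsupp.onFinset (m.support.image Prod.fst) (alphaVal m)
    (fun ℓ h => Finset.mem_image.2
      ⟨(ℓ, true), Finsupp.mem_support_iff.2 fun h0 => h (by simp [alphaVal, h0]), rfl⟩)

/-- `μ(λ)`: multiplicities `m_λ(ℓ,ε) − 2·(multiplicity of ℓ in α(λ))`. -/
noncomputable def muMap (m : (ℕ × Bool) →₀ ℕ) : (ℕ × Bool) →₀ ℕ :=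
  Finsupp.onFinset m.support
    (fun x => m x - 2 * alphaVal m x.1)
    (fun x h => Finsupp.mem_support_iff.2 fun h0 => h (by simp [h0]))

noncomputable def rowPairs (α : ℕ →₀ ℕ) : (ℕ × Bool) →₀ ℕ :=
  Finsupp.onFinset (α.support ×ˢ Finset.univ) (fun x => 2 * α x.1)
    (fun x h => Finset.mem_product.2
      ⟨Finsupp.mem_support_iff.2 fun h0 => h (by simp [h0]), Finset.mem_univ _⟩)

section Signature

lemma rowPairs_apply (α : ℕ →₀ ℕ) (ℓ : ℕ) (b : Bool) : rowPairs α (ℓ, b) = 2 * α ℓ := rfl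

lemma rowPlus_true_add_rowPlus_false (ℓ : ℕ) : rowPlus ℓ true + rowPlus ℓ false = ℓ := by
  simp only [rowPlus, if_true, Bool.false_eq_true, if_false]
  omega

lemma sigPlus_add (f g : (ℕ × Bool) →₀ ℕ) : sigPlus (f + g) = sigPlus f + sigPlus g :=
  Finsupp.sum_add_index' (fun _ => zero_mul _) (fun _ _ _ => add_mul _ _ _)

lemma sigMinus_add (f g : (ℕ × Bool) →₀ ℕ) : sigMinus (f + g) = sigMinus f + sigMinus g :=
  Finsupp.sum_add_index' (fun _ => zero_mul _) (fun _ _ _ => add_mul _ _ _)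

lemma sum_rowPairs_of_add_eq (α : ℕ →₀ ℕ) (c : ℕ → Bool → ℕ)
    (hc : ∀ ℓ, c ℓ true + c ℓ false = ℓ) :
    (rowPairs α).sum (fun p k => k * c p.1 p.2) = 2 * psize α := by
  rw [rowPairs, Finsupp.onFinset_sum _ fun _ => zero_mul _, Finset.sum_product, psize,
    Finsupp.sum, Finset.mul_sum]
  refine Finset.sum_congr rfl fun ℓ _ => ?_
  rw [Fintype.sum_bool, ← mul_add, hc]
  ring

lemma sigPlus_rowPairs (α : ℕ →₀ ℕ) : sigPlus (rowPairs α) = 2 * psize α :=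
  sum_rowPairs_of_add_eq α rowPlus rowPlus_true_add_rowPlus_false

lemma sigMinus_rowPairs (α : ℕ →₀ ℕ) : sigMinus (rowPairs α) = 2 * psize α :=
  sum_rowPairs_of_add_eq α (fun ℓ b => rowPlus ℓ (!b))
    fun ℓ => (add_comm _ _).trans (rowPlus_true_add_rowPlus_false ℓ)

end Signature

section Decomposition

variable (m : (ℕ × Bool) →₀ ℕ)

lemma alphaMap_apply (ℓ : ℕ) : alphaMap m ℓ = alphaVal m ℓ := rfl

lemma muMap_apply (ℓ : ℕ) (b : Bool) : muMap m (ℓ, b) = m (ℓ, b) - 2 * alphaVal m ℓ := rfl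

lemma alphaMap_apply_zero (h0 : ∀ b, m (0, b) = 0) : alphaMap m 0 = 0 := by
  simp [alphaMap_apply, alphaVal, h0]

lemma muMap_apply_le (x : ℕ × Bool) : muMap m x ≤ m x := Nat.sub_le _ _

lemma two_mul_alphaVal_le (hodd : ∀ ℓ, Odd ℓ → m (ℓ, true) = m (ℓ, false))
    (ℓ : ℕ) (b : Bool) : 2 * alphaVal m ℓ ≤ m (ℓ, b) := by
  unfold alphaVal
  split_ifs with h
  · have := hodd ℓ h
    cases b <;> omega
  · cases b <;> omega

lemma muMap_add_rowPairs_alphaMap (hodd : ∀ ℓ, Odd ℓ → m (ℓ, true) = m (ℓ, false)) :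
    muMap m + rowPairs (alphaMap m) = m := by
  ext ⟨ℓ, b⟩
  have := two_mul_alphaVal_le m hodd ℓ b
  rw [Finsupp.add_apply, rowPairs_apply, alphaMap_apply, muMap_apply]
  omega

lemma muMap_of_odd {ℓ : ℕ} (hℓ : Odd ℓ) (h : m (ℓ, true) = m (ℓ, false)) :
    muMap m (ℓ, true) = muMap m (ℓ, false) ∧ muMap m (ℓ, true) ≤ 1 := by
  simp only [muMap_apply, alphaVal, if_pos hℓ]
  omega

lemma muMap_of_even {ℓ : ℕ} (hℓ : Even ℓ) (ht : Even (m (ℓ, true)))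
    (hf : Even (m (ℓ, false))) :
    (Even (muMap m (ℓ, true)) ∧ Even (muMap m (ℓ, false))) ∧
      min (muMap m (ℓ, true)) (muMap m (ℓ, false)) = 0 := by
  simp only [muMap_apply, alphaVal, if_neg (Nat.not_odd_iff_even.2 hℓ), Nat.even_iff] at ht hf ⊢
  omega

end Decomposition

section Reconstruction

variable (α : ℕ →₀ ℕ) (μ : (ℕ × Bool) →₀ ℕ)

lemma add_rowPairs_apply (ℓ : ℕ) (b : Bool) : (μ + rowPairs α) (ℓ, b) = μ (ℓ, b) + 2 * α ℓ :=
  rfl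

lemma alphaVal_add_rowPairs (hodd : ∀ ℓ, Odd ℓ → μ (ℓ, true) ≤ 1)
    (heven : ∀ ℓ, Even ℓ → min (μ (ℓ, true)) (μ (ℓ, false)) = 0) (ℓ : ℕ) :
    alphaVal (μ + rowPairs α) ℓ = α ℓ := by
  rw [alphaVal, add_rowPairs_apply, add_rowPairs_apply]
  split_ifs with h
  · have := hodd ℓ h
    omega
  · have := heven ℓ (Nat.not_odd_iff_even.1 h)
    omega

variable {α μ}
variable (hodd : ∀ ℓ, Odd ℓ → μ (ℓ, true) ≤ 1)
  (heven : ∀ ℓ, Even ℓ → min (μ (ℓ, true)) (μ (ℓ, false)) = 0)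
include hodd heven

lemma alphaMap_add_rowPairs : alphaMap (μ + rowPairs α) = α :=
  Finsupp.ext (alphaVal_add_rowPairs α μ hodd heven)

lemma muMap_add_rowPairs : muMap (μ + rowPairs α) = μ := by
  ext ⟨ℓ, b⟩
  rw [muMap_apply, alphaVal_add_rowPairs α μ hodd heven, add_rowPairs_apply]
  omega

end Reconstruction

theorem stmt15 (n : ℕ) :
    Set.BijOn (fun m => (alphaMap m, muMap m))
      {m : (ℕ × Bool) →₀ ℕ |
        (∀ b, m (0, b) = 0) ∧
        (∀ ℓ, Odd ℓ → m (ℓ, true) = m (ℓ, false)) ∧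
        (∀ ℓ, Even ℓ → Even (m (ℓ, true)) ∧ Even (m (ℓ, false))) ∧
        sigPlus m = n ∧ sigMinus m = n}
      {x : (ℕ →₀ ℕ) × ((ℕ × Bool) →₀ ℕ) |
        x.1 0 = 0 ∧ (∀ b, x.2 (0, b) = 0) ∧
        (∀ ℓ, Odd ℓ → x.2 (ℓ, true) = x.2 (ℓ, false) ∧ x.2 (ℓ, true) ≤ 1) ∧
        (∀ ℓ, Even ℓ → (Even (x.2 (ℓ, true)) ∧ Even (x.2 (ℓ, false))) ∧
          min (x.2 (ℓ, true)) (x.2 (ℓ, false)) = 0) ∧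
        sigPlus x.2 + 2 * psize x.1 = n ∧
        sigMinus x.2 + 2 * psize x.1 = n} := by
  refine Set.InvOn.bijOn (f' := fun x => x.2 + rowPairs x.1) ⟨?_, ?_⟩ ?_ ?_
  · rintro m ⟨-, hodd, -⟩
    exact muMap_add_rowPairs_alphaMap m hodd
  · rintro ⟨α, μ⟩ ⟨-, -, hodd, heven, -⟩
    exact Prod.ext (alphaMap_add_rowPairs (fun ℓ h => (hodd ℓ h).2) (fun ℓ h => (heven ℓ h).2))
      (muMap_add_rowPairs (fun ℓ h => (hodd ℓ h).2) (fun ℓ h => (heven ℓ h).2))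
  · rintro m ⟨h0, hodd, heven, hp, hq⟩
    have hdecomp := muMap_add_rowPairs_alphaMap m hodd
    refine ⟨alphaMap_apply_zero m h0, fun b => Nat.le_zero.1 ((muMap_apply_le m _).trans_eq (h0 b)),
      fun ℓ hℓ => muMap_of_odd m hℓ (hodd ℓ hℓ),
      fun ℓ hℓ => muMap_of_even m hℓ (heven ℓ hℓ).1 (heven ℓ hℓ).2, ?_, ?_⟩
    · rw [← sigPlus_rowPairs, ← sigPlus_add, hdecomp, hp]
    · rw [← sigMinus_rowPairs, ← sigMinus_add, hdecomp, hq]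
  · rintro ⟨α, μ⟩ ⟨hα0, hμ0, hodd, heven, hp, hq⟩
    refine ⟨fun b => by simp [add_rowPairs_apply, hμ0 b, hα0],
      fun ℓ hℓ => by simp only [add_rowPairs_apply, (hodd ℓ hℓ).1],
      fun ℓ hℓ => ⟨?_, ?_⟩, ?_, ?_⟩
    · exact (heven ℓ hℓ).1.1.add (even_two_mul _)
    · exact (heven ℓ hℓ).1.2.add (even_two_mul _)
    · rw [sigPlus_add, sigPlus_rowPairs, hp]
    · rw [sigMinus_add, sigMinus_rowPairs, hq]

end Stmt15
end

section
/- For every integer k ≥ 0 the following holds in ℚ⟦q⟧: ∑_{m≥0} q^m · (∏_{i=0}^{m+k−1}(1+q^i)) · (∏_{i=0}^{m−1}(1+q^i)) · (∏_{i=1}^{m+k}(1−q^i))^{−1} · (∏_{i=1}^{m}(1−q^i))^{−1} = 2(1+q^k)^{−1} · ∏_{i≥1}(1+q^i)² · ∏_{i≥1}(1−q^i)^{−2}. The left-hand sum converges coefficientwise since its m-th summand lies in q^m ℚ⟦q⟧. -/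
/-!
Write `r m = (-1; q)_m / (q; q)_m`, so that the `m`-th summand is `T k m = q^m r (m + k) r m`,
and let `S k = ∑ₘ T k m`. A three-term contiguous relation between `T k m`, `T k (m + 1)` and
`T (k + 1) m` telescopes in `m` to `(1 + q^k) S k = (1 + q^(k+1)) S (k + 1)`, so `(1 + q^k) S k`
does not depend on `k`. Modulo `q^K` one has `r (m + K) ≡ r K`, hence
`S K ≡ r K · ∑_{m<K} q^m r m`, and the finite q-binomial identity
`2 ∑_{m<n} q^m r m = (1 - q^n) r n` together with
`(1 + q^K) r K = 2 ∏_{i<K} (1+q^(i+1))/(1-q^(i+1))` gives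
`(1 + q^K) S K ≡ 2 ∏_{i<K} (1+q^(i+1))² / (1-q^(i+1))²`. Letting `K → ∞` proves the identity.
All limits are `q`-adic: two series are equal once they agree modulo every `q^N`.
-/

open PowerSeries

namespace Stmt17

/-- Coefficientwise convergence of an infinite series of formal power series over ℚ. -/
def CoeffwiseSum (f : ℕ → PowerSeries ℚ) (g : PowerSeries ℚ) : Prop :=
  ∀ n : ℕ, ∀ᶠ N in Filter.atTop,
    PowerSeries.coeff (R := ℚ) n (∑ k ∈ Finset.range N, f k) = PowerSeries.coeff (R := ℚ) n g

/-- Coefficientwise convergence of an infinite product of formal power series over ℚ. -/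
def CoeffwiseProd (f : ℕ → PowerSeries ℚ) (g : PowerSeries ℚ) : Prop :=
  ∀ n : ℕ, ∀ᶠ N in Filter.atTop,
    PowerSeries.coeff (R := ℚ) n (∏ k ∈ Finset.range N, f k) = PowerSeries.coeff (R := ℚ) n g

/-- The `m`-th summand of the q-Gauss sum. -/
noncomputable def summand (k m : ℕ) : PowerSeries ℚ :=
  X ^ m * (∏ i ∈ Finset.range (m + k), (1 + X ^ i)) *
    (∏ i ∈ Finset.range m, (1 + X ^ i)) *
    (∏ i ∈ Finset.Icc 1 (m + k), (1 - X ^ i : PowerSeries ℚ))⁻¹ *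
    (∏ i ∈ Finset.Icc 1 m, (1 - X ^ i : PowerSeries ℚ))⁻¹

end Stmt17

namespace PowerSeries

section XAdic

variable {R : Type*} [CommRing R]

theorem span_X_pow_le_span_X_pow {M N : ℕ} (h : N ≤ M) :
    Ideal.span {(X : R⟦X⟧) ^ M} ≤ Ideal.span {X ^ N} :=
  Ideal.span_singleton_le_span_singleton.2 (pow_dvd_pow X h)

theorem smodEq_span_X_pow_iff {f g : R⟦X⟧} {N : ℕ} :
    f ≡ g [SMOD Ideal.span {X ^ N}] ↔ ∀ n < N, coeff n f = coeff n g := by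
  simp only [SModEq.sub_mem, Ideal.mem_span_singleton, X_pow_dvd_iff, map_sub, sub_eq_zero]

theorem eq_of_forall_smodEq_span_X_pow {f g : R⟦X⟧}
    (h : ∀ N, f ≡ g [SMOD Ideal.span {X ^ N}]) : f = g :=
  ext fun n ↦ smodEq_span_X_pow_iff.1 (h (n + 1)) n n.lt_succ_self

theorem X_pow_mul_smodEq_zero {N j : ℕ} (h : N ≤ j) (f : R⟦X⟧) :
    X ^ j * f ≡ 0 [SMOD Ideal.span {X ^ N}] :=
  SModEq.zero.2 (Ideal.mem_span_singleton.2 (dvd_mul_of_dvd_left (pow_dvd_pow X h) f))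

theorem X_pow_smodEq_zero {N j : ℕ} (h : N ≤ j) : (X : R⟦X⟧) ^ j ≡ 0 [SMOD Ideal.span {X ^ N}] :=
  mul_one ((X : R⟦X⟧) ^ j) ▸ X_pow_mul_smodEq_zero h 1

variable (R) in
theorem one_add_X_pow_smodEq_one {N j : ℕ} (h : N ≤ j) :
    (1 + X ^ j : R⟦X⟧) ≡ 1 [SMOD Ideal.span {X ^ N}] :=
  -- `x ≡ y [SMOD I]` elaborates `I` before `x` and `y`, so inside proofs `X` needs its type.
  calc (1 + X ^ j : R⟦X⟧) ≡ 1 + 0 [SMOD Ideal.span {(X : R⟦X⟧) ^ N}] :=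
        SModEq.rfl.add (X_pow_smodEq_zero h)
    _ = 1 := add_zero 1

/-- The `X`-adic limit of `s`, provided `s N ≡ s (N + 1)` modulo `X ^ N` for all `N`. -/
noncomputable def xadicLim (s : ℕ → R⟦X⟧) : R⟦X⟧ :=
  mk fun n ↦ coeff n (s (n + 1))

variable {s : ℕ → R⟦X⟧}

theorem smodEq_span_X_pow_of_le (hs : ∀ N, s N ≡ s (N + 1) [SMOD Ideal.span {X ^ N}])
    {N M : ℕ} (h : N ≤ M) : s N ≡ s M [SMOD Ideal.span {X ^ N}] := by
  induction M, h using Nat.le_induction with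
  | base => rfl
  | succ M hNM ih => exact ih.trans ((hs M).mono (span_X_pow_le_span_X_pow hNM))

theorem smodEq_xadicLim (hs : ∀ N, s N ≡ s (N + 1) [SMOD Ideal.span {X ^ N}]) (N : ℕ) :
    s N ≡ xadicLim s [SMOD Ideal.span {X ^ N}] := by
  refine smodEq_span_X_pow_iff.2 fun n hn ↦ ?_
  rw [xadicLim, coeff_mk]
  exact smodEq_span_X_pow_iff.1 (smodEq_span_X_pow_of_le hs hn).symm n n.lt_succ_self

theorem eventually_coeff_eq_of_smodEq {L : R⟦X⟧}
    (h : ∀ N, s N ≡ L [SMOD Ideal.span {X ^ N}]) (n : ℕ) :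
    ∀ᶠ N in Filter.atTop, coeff n (s N) = coeff n L :=
  Filter.eventually_atTop.2 ⟨n + 1, fun _ hN ↦ smodEq_span_X_pow_iff.1 (h _) n hN⟩

theorem sum_range_smodEq_sum_range_succ {f : ℕ → R⟦X⟧}
    (hf : ∀ m, f m ≡ 0 [SMOD Ideal.span {X ^ m}]) (N : ℕ) :
    ∑ m ∈ Finset.range N, f m ≡ ∑ m ∈ Finset.range (N + 1), f m [SMOD Ideal.span {X ^ N}] := by
  rw [Finset.sum_range_succ]
  simpa using SModEq.rfl.add (hf N).symm

theorem prod_range_smodEq_prod_range_succ {f : ℕ → R⟦X⟧}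
    (hf : ∀ i, f i ≡ 1 [SMOD Ideal.span {X ^ (i + 1)}]) (N : ℕ) :
    ∏ i ∈ Finset.range N, f i ≡ ∏ i ∈ Finset.range (N + 1), f i [SMOD Ideal.span {X ^ N}] := by
  rw [Finset.prod_range_succ]
  simpa using (SModEq.rfl.mul (hf N).symm).mono (span_X_pow_le_span_X_pow N.le_succ)

end XAdic

section Field

variable (k : Type*) [Field k]

theorem inv_prod {ι : Type*} (s : Finset ι) (f : ι → k⟦X⟧) :
    (∏ i ∈ s, f i)⁻¹ = ∏ i ∈ s, (f i)⁻¹ := by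
  classical
  induction s using Finset.induction_on with
  | empty => simp
  | insert a s ha ih => rw [Finset.prod_insert ha, Finset.prod_insert ha, PowerSeries.mul_inv_rev,
      ih, mul_comm]

theorem one_sub_X_pow_succ_mul_inv (n : ℕ) :
    (1 - X ^ (n + 1) : k⟦X⟧) * (1 - X ^ (n + 1))⁻¹ = 1 :=
  PowerSeries.mul_inv_cancel _ (by simp)

variable {k} in
theorem inv_smodEq_one {u : k⟦X⟧} {I : Ideal k⟦X⟧} (hu : constantCoeff u ≠ 0)
    (h : u ≡ 1 [SMOD I]) : u⁻¹ ≡ 1 [SMOD I] :=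
  calc u⁻¹ = u⁻¹ * 1 := (mul_one _).symm
    _ ≡ u⁻¹ * u [SMOD I] := SModEq.rfl.mul h.symm
    _ = 1 := PowerSeries.inv_mul_cancel u hu

theorem inv_one_sub_X_pow_smodEq_one {N j : ℕ} (h : N ≤ j) (hj : 0 < j) :
    (1 - X ^ j : k⟦X⟧)⁻¹ ≡ 1 [SMOD Ideal.span {X ^ N}] := by
  refine inv_smodEq_one (by simp [hj.ne']) ?_
  calc (1 - X ^ j : k⟦X⟧) ≡ 1 - 0 [SMOD Ideal.span {(X : k⟦X⟧) ^ N}] :=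
        SModEq.rfl.sub (X_pow_smodEq_zero h)
    _ = 1 := sub_zero 1

end Field

end PowerSeries

namespace Stmt17

variable (F : Type*) [Field F]

/-- `(-1; q)_m / (q; q)_m`. -/
noncomputable def pochRatio (m : ℕ) : F⟦X⟧ :=
  ∏ i ∈ Finset.range m, (1 + X ^ i) * (1 - X ^ (i + 1))⁻¹

noncomputable def gaussTerm (k m : ℕ) : F⟦X⟧ :=
  X ^ m * pochRatio F (m + k) * pochRatio F m

theorem pochRatio_succ (m : ℕ) :
    pochRatio F (m + 1) = pochRatio F m * ((1 + X ^ m) * (1 - X ^ (m + 1))⁻¹) :=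
  Finset.prod_range_succ _ _

theorem two_mul_sum_X_pow_mul_pochRatio (n : ℕ) :
    2 * ∑ m ∈ Finset.range n, X ^ m * pochRatio F m = (1 - X ^ n) * pochRatio F n := by
  induction n with
  | zero => simp
  | succ n ih =>
    rw [Finset.sum_range_succ, pochRatio_succ]
    linear_combination ih - pochRatio F n * (1 + X ^ n) * one_sub_X_pow_succ_mul_inv F n

theorem gaussTerm_contiguous (k m : ℕ) :
    (1 + X ^ k) * gaussTerm F k m - (1 + X ^ (k + 1)) * gaussTerm F (k + 1) m =
      X ^ k * (1 - X ^ m) * gaussTerm F k m -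
        X ^ k * (1 - X ^ (m + 1)) * gaussTerm F k (m + 1) := by
  have hidx : m + 1 + k = m + k + 1 := by omega
  simp only [gaussTerm, hidx, ← add_assoc, pochRatio_succ F]
  set A := X ^ m * pochRatio F (m + k) * pochRatio F m
  set z := (1 - X ^ (m + k + 1) : F⟦X⟧)⁻¹
  linear_combination
    A * X ^ (k + 1) * (1 + X ^ (m + k)) * (1 + X ^ m) * z * one_sub_X_pow_succ_mul_inv F m -
      A * (1 + X ^ (m + k)) * one_sub_X_pow_succ_mul_inv F (m + k)

theorem sum_gaussTerm_telescope (k M : ℕ) :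
    (1 + X ^ k) * ∑ m ∈ Finset.range M, gaussTerm F k m -
        (1 + X ^ (k + 1)) * ∑ m ∈ Finset.range M, gaussTerm F (k + 1) m =
      -(X ^ k * (1 - X ^ M) * gaussTerm F k M) := by
  rw [Finset.mul_sum, Finset.mul_sum, ← Finset.sum_sub_distrib]
  simp only [gaussTerm_contiguous F]
  rw [Finset.sum_range_sub' (fun m ↦ X ^ k * (1 - X ^ m) * gaussTerm F k m)]
  simp

theorem gaussTerm_smodEq_zero (k m : ℕ) : gaussTerm F k m ≡ 0 [SMOD Ideal.span {X ^ m}] := by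
  rw [gaussTerm, mul_assoc]
  exact X_pow_mul_smodEq_zero le_rfl _

theorem pochRatio_add_smodEq (m K : ℕ) :
    pochRatio F (m + K) ≡ pochRatio F K [SMOD Ideal.span {X ^ K}] := by
  have hfactor (i : ℕ) : (1 + X ^ (K + i) : F⟦X⟧) * (1 - X ^ (K + i + 1))⁻¹ ≡ 1
      [SMOD Ideal.span {(X : F⟦X⟧) ^ K}] := by
    simpa using (one_add_X_pow_smodEq_one F (K.le_add_right i)).mul
      (inv_one_sub_X_pow_smodEq_one F (by omega : K ≤ K + i + 1) (by omega))
  rw [add_comm, pochRatio, Finset.prod_range_add, ← pochRatio]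
  simpa using SModEq.rfl.mul (SModEq.prod fun i _ ↦ hfactor i)

theorem pochRatio_mul_one_add_X_pow (K : ℕ) :
    pochRatio F K * (1 + X ^ K) =
      2 * ∏ i ∈ Finset.range K, (1 + X ^ (i + 1)) * (1 - X ^ (i + 1))⁻¹ := by
  induction K with
  | zero => norm_num [pochRatio]
  | succ K ih =>
    rw [pochRatio_succ, Finset.prod_range_succ]
    linear_combination ((1 + X ^ (K + 1)) * (1 - X ^ (K + 1))⁻¹ : F⟦X⟧) * ih

theorem two_mul_sum_gaussTerm_smodEq (K : ℕ) :
    2 * ∑ m ∈ Finset.range K, gaussTerm F K m ≡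
      2 * (2 * (∏ i ∈ Finset.range K, (1 + X ^ (i + 1)) * (1 - X ^ (i + 1))⁻¹) ^ 2)
      [SMOD Ideal.span {X ^ K}] := by
  have hunit : (1 - X ^ K : F⟦X⟧) ≡ (1 + X ^ K) ^ 2 [SMOD Ideal.span {(X : F⟦X⟧) ^ K}] :=
    calc (1 - X ^ K : F⟦X⟧) ≡ 1 - 0 [SMOD Ideal.span {(X : F⟦X⟧) ^ K}] :=
          SModEq.rfl.sub (X_pow_smodEq_zero le_rfl)
      _ = 1 ^ 2 := by simp
      _ ≡ (1 + X ^ K) ^ 2 [SMOD Ideal.span {(X : F⟦X⟧) ^ K}] :=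
          (one_add_X_pow_smodEq_one F le_rfl).symm.pow 2
  have hterm (m : ℕ) : X ^ m * pochRatio F (m + K) * pochRatio F m ≡
      X ^ m * pochRatio F K * pochRatio F m [SMOD Ideal.span {(X : F⟦X⟧) ^ K}] :=
    (SModEq.rfl.mul (pochRatio_add_smodEq F m K)).mul SModEq.rfl
  calc 2 * ∑ m ∈ Finset.range K, X ^ m * pochRatio F (m + K) * pochRatio F m
      ≡ 2 * ∑ m ∈ Finset.range K, X ^ m * pochRatio F K * pochRatio F m
        [SMOD Ideal.span {(X : F⟦X⟧) ^ K}] := SModEq.rfl.mul (SModEq.sum fun m _ ↦ hterm m)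
    _ = pochRatio F K * (2 * ∑ m ∈ Finset.range K, X ^ m * pochRatio F m) := by
        simp only [Finset.mul_sum]
        exact Finset.sum_congr rfl fun m _ ↦ by ring
    _ = pochRatio F K * ((1 - X ^ K) * pochRatio F K) := by
        rw [two_mul_sum_X_pow_mul_pochRatio]
    _ ≡ pochRatio F K * ((1 + X ^ K) ^ 2 * pochRatio F K) [SMOD Ideal.span {(X : F⟦X⟧) ^ K}] :=
        SModEq.rfl.mul (hunit.mul SModEq.rfl)
    _ = _ := by
        linear_combination (pochRatio F K * (1 + X ^ K) +
          2 * ∏ i ∈ Finset.range K, (1 + X ^ (i + 1)) * (1 - X ^ (i + 1))⁻¹) *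
            pochRatio_mul_one_add_X_pow F K

noncomputable def qGaussSum (k : ℕ) : F⟦X⟧ :=
  xadicLim fun N ↦ ∑ m ∈ Finset.range N, gaussTerm F k m

theorem sum_gaussTerm_smodEq_qGaussSum (k N : ℕ) :
    ∑ m ∈ Finset.range N, gaussTerm F k m ≡ qGaussSum F k [SMOD Ideal.span {X ^ N}] :=
  smodEq_xadicLim (sum_range_smodEq_sum_range_succ (gaussTerm_smodEq_zero F k)) N

theorem one_add_X_pow_mul_qGaussSum_succ (k : ℕ) :
    (1 + X ^ (k + 1)) * qGaussSum F (k + 1) = (1 + X ^ k) * qGaussSum F k := by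
  refine eq_of_forall_smodEq_span_X_pow fun N ↦ ?_
  have htel : (1 + X ^ k) * ∑ m ∈ Finset.range N, gaussTerm F k m ≡
      (1 + X ^ (k + 1)) * ∑ m ∈ Finset.range N, gaussTerm F (k + 1) m
      [SMOD Ideal.span {(X : F⟦X⟧) ^ N}] := by
    rw [← sub_smodEq_zero, sum_gaussTerm_telescope, mul_comm]
    simpa using (gaussTerm_smodEq_zero F k N).mul (SModEq.refl (-(X ^ k * (1 - X ^ N) : F⟦X⟧)))
  exact ((SModEq.rfl.mul (sum_gaussTerm_smodEq_qGaussSum F (k + 1) N)).symm.trans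
    htel.symm).trans (SModEq.rfl.mul (sum_gaussTerm_smodEq_qGaussSum F k N))

theorem two_mul_one_add_X_pow_mul_qGaussSum_smodEq {N : ℕ} {P Q : F⟦X⟧}
    (hP : ∏ i ∈ Finset.range N, (1 + X ^ (i + 1)) ^ 2 ≡ P [SMOD Ideal.span {X ^ N}])
    (hQ : ∏ i ∈ Finset.range N, ((1 - X ^ (i + 1))⁻¹) ^ 2 ≡ Q [SMOD Ideal.span {X ^ N}]) :
    2 * ((1 + X ^ N) * qGaussSum F N) ≡ 2 * (2 * P * Q) [SMOD Ideal.span {X ^ N}] := by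
  have hPQ : P * Q ≡ (∏ i ∈ Finset.range N, (1 + X ^ (i + 1)) * (1 - X ^ (i + 1))⁻¹) ^ 2
      [SMOD Ideal.span {(X : F⟦X⟧) ^ N}] := by
    rw [← Finset.prod_pow, Finset.prod_congr rfl fun i _ ↦ mul_pow _ _ 2, Finset.prod_mul_distrib]
    exact (hP.mul hQ).symm
  have hsum : (1 + X ^ N) * qGaussSum F N ≡ 1 * ∑ m ∈ Finset.range N, gaussTerm F N m
      [SMOD Ideal.span {(X : F⟦X⟧) ^ N}] :=
    (one_add_X_pow_smodEq_one F le_rfl).mul (sum_gaussTerm_smodEq_qGaussSum F N N).symm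
  calc 2 * ((1 + X ^ N) * qGaussSum F N)
      ≡ 2 * ∑ m ∈ Finset.range N, gaussTerm F N m [SMOD Ideal.span {(X : F⟦X⟧) ^ N}] := by
        simpa using SModEq.rfl.mul hsum
    _ ≡ 2 * (2 * (∏ i ∈ Finset.range N, (1 + X ^ (i + 1)) * (1 - X ^ (i + 1))⁻¹) ^ 2)
        [SMOD Ideal.span {(X : F⟦X⟧) ^ N}] := two_mul_sum_gaussTerm_smodEq F N
    _ ≡ 2 * (2 * (P * Q)) [SMOD Ideal.span {(X : F⟦X⟧) ^ N}] :=
        SModEq.rfl.mul (SModEq.rfl.mul hPQ.symm)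
    _ = 2 * (2 * P * Q) := by rw [mul_assoc 2 P]

theorem one_add_X_pow_mul_qGaussSum (hchar : (2 : F) ≠ 0) {P Q : F⟦X⟧}
    (hP : ∀ N, ∏ i ∈ Finset.range N, (1 + X ^ (i + 1)) ^ 2 ≡ P [SMOD Ideal.span {X ^ N}])
    (hQ : ∀ N, ∏ i ∈ Finset.range N, ((1 - X ^ (i + 1))⁻¹) ^ 2 ≡ Q [SMOD Ideal.span {X ^ N}])
    (k : ℕ) : (1 + X ^ k) * qGaussSum F k = 2 * P * Q := by
  have hconst (j : ℕ) : (1 + X ^ j) * qGaussSum F j = (1 + X ^ 0) * qGaussSum F 0 := by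
    induction j with
    | zero => rfl
    | succ j ih => rw [one_add_X_pow_mul_qGaussSum_succ, ih]
  have h2 : (2 : F⟦X⟧) ≠ 0 := fun h ↦ hchar (by simpa [map_ofNat] using congrArg constantCoeff h)
  refine mul_left_cancel₀ h2 (eq_of_forall_smodEq_span_X_pow fun N ↦ ?_)
  rw [hconst, ← hconst N]
  exact two_mul_one_add_X_pow_mul_qGaussSum_smodEq F (hP N) (hQ N)

theorem pochRatio_eq_prod_mul_inv_prod (n : ℕ) :
    pochRatio F n =
      (∏ i ∈ Finset.range n, (1 + X ^ i)) * (∏ i ∈ Finset.Icc 1 n, (1 - X ^ i))⁻¹ := by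
  rw [pochRatio, Finset.prod_mul_distrib, ← Finset.Ico_add_one_right_eq_Icc,
    Finset.prod_Ico_eq_prod_range, add_tsub_cancel_right, inv_prod]
  simp only [add_comm 1]

theorem summand_eq_gaussTerm (k : ℕ) : summand k = gaussTerm ℚ k := by
  ext1 m
  rw [summand, gaussTerm, pochRatio_eq_prod_mul_inv_prod, pochRatio_eq_prod_mul_inv_prod]
  ring

theorem stmt17 (k : ℕ) :
    ∃ S P₁ P₂ : PowerSeries ℚ,
      CoeffwiseSum (summand k) S ∧
      CoeffwiseProd (fun i : ℕ => (1 + X ^ (i + 1)) ^ 2) P₁ ∧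
      CoeffwiseProd (fun i : ℕ => ((1 - X ^ (i + 1) : PowerSeries ℚ)⁻¹) ^ 2) P₂ ∧
      S = 2 * (1 + X ^ k : PowerSeries ℚ)⁻¹ * P₁ * P₂ := by
  have hP := smodEq_xadicLim (prod_range_smodEq_prod_range_succ fun i ↦ by
    simpa using (one_add_X_pow_smodEq_one ℚ (le_refl (i + 1))).pow 2)
  have hQ := smodEq_xadicLim (prod_range_smodEq_prod_range_succ fun i ↦ by
    simpa using (inv_one_sub_X_pow_smodEq_one ℚ (le_refl (i + 1)) i.succ_pos).pow 2)
  refine ⟨qGaussSum ℚ k, _, _, ?_, eventually_coeff_eq_of_smodEq hP,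
    eventually_coeff_eq_of_smodEq hQ, ?_⟩
  · rw [summand_eq_gaussTerm]
    exact eventually_coeff_eq_of_smodEq (sum_gaussTerm_smodEq_qGaussSum ℚ k)
  · have hunit : constantCoeff (1 + X ^ k : ℚ⟦X⟧) ≠ 0 := by rcases k with _ | k <;> simp
    rw [show ∀ P Q : ℚ⟦X⟧, 2 * (1 + X ^ k)⁻¹ * P * Q = 2 * P * Q * (1 + X ^ k)⁻¹ by
      intros; ring, eq_mul_inv_iff_mul_eq hunit, mul_comm]
    exact one_add_X_pow_mul_qGaussSum ℚ two_ne_zero hP hQ k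

end Stmt17
end
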